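/- arXiv:2503.15152 — 5 statements merged into one kernel-verified Lean document; each statement's English description precedes it below -/
import Mathlib

section
/- Let 1 < p < ∞, let a, b > 0, and let g : [0,a] → ℝ be continuous and strictly increasing with g(0) = 0 and g(a) = b, with inverse h := g^{-1} : [0,b] → [0,a]. Let O = { x ∈ ℝ^N : g(r) < x₁ < b }, where r = (∑_{i=2}^N x_i²)^{1/2}. Then for every f ∈ W^{1,p}_0(O), for almost every x₁ ∈ (0,b), the function x₁ ↦ ∫_{{0 < r < h(x₁)}} f(x₁, x₂, …, x_N) dx₂ … dx_N is weakly differentiable on (0,b) and its derivative equals ∫_{{0 < r < h(x₁)}} (∂f/∂x₁)(x₁, x₂, …, x_N) dx₂ … dx_N, i.e. (d/dx₁) ∫_{{0<r<h(x₁)}} f dx₂…dx_N = ∫_{{0<r<h(x₁)}} ∂f/∂x₁ dx₂…dx_N for a.e. x₁ ∈ (0,b). -/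
open MeasureTheory Real Set Filter Topology

noncomputable section

/-- A smooth test function compactly supported inside `Ω`. -/
def TestFun {E : Type*} [NormedAddCommGroup E] [NormedSpace ℝ E] (Ω : Set E) (φ : E → ℝ) : Prop :=
  ContDiff ℝ (⊤ : ℕ∞) φ ∧ HasCompactSupport φ ∧ tsupport φ ⊆ Ω

/-- `f` belongs to `W^{1,p}_0(Ω)` with weak differential `df`: `f` and all directional weak
derivatives are in `L^p(Ω)`, `df` is the weak differential of `f` on `Ω`, and `f` together with
`df` is the limit, in the `W^{1,p}` norm, of smooth functions compactly supported in `Ω`. -/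
def MemW1p0 {E : Type*} [NormedAddCommGroup E] [NormedSpace ℝ E] [MeasureSpace E]
    (p : ℝ) (Ω : Set E) (f : E → ℝ) (df : E → E →L[ℝ] ℝ) : Prop :=
  MemLp f (ENNReal.ofReal p) (volume.restrict Ω) ∧
  (∀ v : E, MemLp (fun x => df x v) (ENNReal.ofReal p) (volume.restrict Ω)) ∧
  (∀ φ : E → ℝ, TestFun Ω φ → ∀ v : E,
    ∫ x in Ω, f x * fderiv ℝ φ x v = - ∫ x in Ω, (df x v) * φ x) ∧
  ∃ ψ : ℕ → E → ℝ, (∀ n, TestFun Ω (ψ n)) ∧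
    Tendsto (fun n => eLpNorm (fun x => f x - ψ n x) (ENNReal.ofReal p) (volume.restrict Ω))
      atTop (𝓝 0) ∧
    ∀ v : E, Tendsto (fun n =>
        eLpNorm (fun x => df x v - fderiv ℝ (ψ n) x v) (ENNReal.ofReal p) (volume.restrict Ω))
      atTop (𝓝 0)

/-- On the cusp domain `O = {g(r) < x₁ < b}` (with `r = (∑_{i≥2} xᵢ²)^{1/2}`),
for `f ∈ W^{1,p}_0(O)` the sliced integral `x₁ ↦ ∫_{0<r<h(x₁)} f(x₁,·)` is weakly differentiable
on `(0,b)` with weak derivative `x₁ ↦ ∫_{0<r<h(x₁)} ∂f/∂x₁(x₁,·)`. -/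
theorem statement0 (k : ℕ) (p a b : ℝ) (hp1 : 1 < p) (ha : 0 < a) (hb : 0 < b)
    (g h : ℝ → ℝ) (hgc : ContinuousOn g (Icc 0 a)) (hgm : StrictMonoOn g (Icc 0 a))
    (hg0 : g 0 = 0) (hga : g a = b) (hinv : InvOn h g (Icc 0 a) (Icc 0 b))
    (f : ℝ × (Fin k → ℝ) → ℝ) (df : ℝ × (Fin k → ℝ) → (ℝ × (Fin k → ℝ)) →L[ℝ] ℝ)
    (hf : MemW1p0 p {q : ℝ × (Fin k → ℝ) |
        g (Real.sqrt (∑ i, q.2 i ^ 2)) < q.1 ∧ q.1 < b ∧ Real.sqrt (∑ i, q.2 i ^ 2) < a}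
      f df) :
    ∀ φ : ℝ → ℝ, ContDiff ℝ (⊤ : ℕ∞) φ → HasCompactSupport φ → tsupport φ ⊆ Ioo 0 b →
      ∫ t in Ioo 0 b,
          (∫ y in {y : Fin k → ℝ |
              0 < Real.sqrt (∑ i, y i ^ 2) ∧ Real.sqrt (∑ i, y i ^ 2) < h t},
            f (t, y)) * deriv φ t
        = - ∫ t in Ioo 0 b,
          (∫ y in {y : Fin k → ℝ |
              0 < Real.sqrt (∑ i, y i ^ 2) ∧ Real.sqrt (∑ i, y i ^ 2) < h t},
            df (t, y) (1, 0)) * φ t := by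
  classical
  intro φ hφ1 hφ2 hφ3
  obtain ⟨hfLp, hdfLp, -, ψ, hψt, hψf, hψdf⟩ := hf
  -- trivial case `k = 0` : all slices are empty
  rcases Nat.eq_zero_or_pos k with hk | hk
  · subst hk
    have hS : ∀ t : ℝ, {y : Fin 0 → ℝ |
        0 < Real.sqrt (∑ i, y i ^ 2) ∧ Real.sqrt (∑ i, y i ^ 2) < h t} = ∅ := by
      intro t; ext y; simp
    simp [hS]
  haveI : Nonempty (Fin k) := ⟨⟨0, hk⟩⟩
  -- notation
  set Ω : Set (ℝ × (Fin k → ℝ)) := {q : ℝ × (Fin k → ℝ) |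
      g (Real.sqrt (∑ i, q.2 i ^ 2)) < q.1 ∧ q.1 < b ∧ Real.sqrt (∑ i, q.2 i ^ 2) < a}
    with hΩdef
  set O : Set (ℝ × (Fin k → ℝ)) := {q : ℝ × (Fin k → ℝ) |
      0 < q.1 ∧ q.1 < b ∧ 0 < Real.sqrt (∑ i, q.2 i ^ 2) ∧ Real.sqrt (∑ i, q.2 i ^ 2) < a ∧
        g (Real.sqrt (∑ i, q.2 i ^ 2)) < q.1}
    with hOdef
  have hr0 : ∀ y : Fin k → ℝ, 0 ≤ Real.sqrt (∑ i, y i ^ 2) := fun y => Real.sqrt_nonneg _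
  have hrc : Continuous fun y : Fin k → ℝ => Real.sqrt (∑ i, y i ^ 2) := by
    exact Real.continuous_sqrt.comp (continuous_finset_sum _ fun i _ => (continuous_apply i).pow 2)
  have hrzero : ∀ y : Fin k → ℝ, Real.sqrt (∑ i, y i ^ 2) = 0 → y = 0 := by
    intro y hy
    have h1 : ∑ i, y i ^ 2 ≤ 0 := Real.sqrt_eq_zero'.mp hy
    have h2 : (0:ℝ) ≤ ∑ i, y i ^ 2 := Finset.sum_nonneg fun i _ => sq_nonneg _
    have h3 : ∑ i, y i ^ 2 = 0 := le_antisymm h1 h2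
    funext i
    have := (Finset.sum_eq_zero_iff_of_nonneg (fun i _ => sq_nonneg (y i))).mp h3 i
      (Finset.mem_univ i)
    exact (pow_eq_zero_iff two_ne_zero).mp this
  have hgmono : MonotoneOn g (Icc 0 a) := hgm.monotoneOn
  have hgnn : ∀ x ∈ Icc (0:ℝ) a, 0 ≤ g x := by
    intro x hx
    have := hgmono (left_mem_Icc.mpr ha.le) hx hx.1
    rwa [hg0] at this
  have hmem : ∀ t ∈ Icc (0:ℝ) b, h t ∈ Icc (0:ℝ) a := by
    intro t ht
    have ht' : t ∈ Icc (g 0) (g a) := by rwa [hg0, hga]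
    obtain ⟨x, hx, hgx⟩ := intermediate_value_Icc ha.le hgc ht'
    rw [← hgx, hinv.1 hx]; exact hx
  -- slices of `O` over `Ioo 0 b` are the sets in the statement
  have hslice : ∀ t ∈ Ioo (0:ℝ) b, ∀ y : Fin k → ℝ,
      ((t, y) ∈ O ↔ (0 < Real.sqrt (∑ i, y i ^ 2) ∧ Real.sqrt (∑ i, y i ^ 2) < h t)) := by
    intro t ht y
    have htb : t ∈ Icc (0:ℝ) b := ⟨ht.1.le, ht.2.le⟩
    have hht := hmem t htb
    rw [hOdef]
    simp only [mem_setOf_eq]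
    constructor
    · rintro ⟨-, -, h3, h4, h5⟩
      refine ⟨h3, ?_⟩
      by_contra hcon
      push_neg at hcon
      have hle : g (h t) ≤ g (Real.sqrt (∑ i, y i ^ 2)) := hgmono hht ⟨hr0 y, h4.le⟩ hcon
      rw [hinv.2 htb] at hle
      exact absurd h5 (not_lt.mpr hle)
    · rintro ⟨h1, h2⟩
      have hra : Real.sqrt (∑ i, y i ^ 2) < a := lt_of_lt_of_le h2 hht.2
      refine ⟨ht.1, ht.2, h1, hra, ?_⟩
      have hlt := hgm ⟨hr0 y, hra.le⟩ hht h2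
      rwa [hinv.2 htb] at hlt
  -- measurability
  have hGc : Continuous fun y : Fin k → ℝ => g (min (Real.sqrt (∑ i, y i ^ 2)) a) := by
    apply hgc.comp_continuous (hrc.min continuous_const)
    intro y
    exact ⟨le_min (hr0 y) ha.le, min_le_right _ _⟩
  have hGeq : ∀ y : Fin k → ℝ, Real.sqrt (∑ i, y i ^ 2) < a →
      g (min (Real.sqrt (∑ i, y i ^ 2)) a) = g (Real.sqrt (∑ i, y i ^ 2)) := by
    intro y hy; rw [min_eq_left hy.le]
  have hΩm : MeasurableSet Ω := by
    have hset : Ω = {q : ℝ × (Fin k → ℝ) | g (min (Real.sqrt (∑ i, q.2 i ^ 2)) a) < q.1} ∩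
        ({q : ℝ × (Fin k → ℝ) | q.1 < b} ∩
          {q : ℝ × (Fin k → ℝ) | Real.sqrt (∑ i, q.2 i ^ 2) < a}) := by
      ext q
      simp only [hΩdef, mem_setOf_eq, mem_inter_iff]
      constructor
      · rintro ⟨h1, h2, h3⟩; exact ⟨by rwa [hGeq _ h3], h2, h3⟩
      · rintro ⟨h1, h2, h3⟩; exact ⟨by rwa [hGeq _ h3] at h1, h2, h3⟩
    rw [hset]
    exact ((isOpen_lt (hGc.comp continuous_snd) continuous_fst).measurableSet).inter
      (((isOpen_lt continuous_fst continuous_const).measurableSet).inter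
        ((isOpen_lt (hrc.comp continuous_snd) continuous_const).measurableSet))
  have hOm : MeasurableSet O := by
    have hset : O = {q : ℝ × (Fin k → ℝ) | 0 < q.1} ∩ ({q : ℝ × (Fin k → ℝ) | q.1 < b} ∩
        ({q : ℝ × (Fin k → ℝ) | 0 < Real.sqrt (∑ i, q.2 i ^ 2)} ∩
          ({q : ℝ × (Fin k → ℝ) | Real.sqrt (∑ i, q.2 i ^ 2) < a} ∩
            {q : ℝ × (Fin k → ℝ) | g (min (Real.sqrt (∑ i, q.2 i ^ 2)) a) < q.1}))) := by
      ext q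
      simp only [hOdef, mem_setOf_eq, mem_inter_iff]
      constructor
      · rintro ⟨h1, h2, h3, h4, h5⟩; exact ⟨h1, h2, h3, h4, by rwa [hGeq _ h4]⟩
      · rintro ⟨h1, h2, h3, h4, h5⟩; exact ⟨h1, h2, h3, h4, by rwa [hGeq _ h4] at h5⟩
    rw [hset]
    exact (isOpen_lt continuous_const continuous_fst).measurableSet |>.inter
      ((isOpen_lt continuous_fst continuous_const).measurableSet |>.inter
        ((isOpen_lt continuous_const (hrc.comp continuous_snd)).measurableSet |>.inter
          ((isOpen_lt (hrc.comp continuous_snd) continuous_const).measurableSet |>.inter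
            (isOpen_lt (hGc.comp continuous_snd) continuous_fst).measurableSet)))
  have hOsubΩ : O ⊆ Ω := by
    rintro q ⟨h1, h2, h3, h4, h5⟩; exact ⟨h5, h2, h4⟩
  have hnull : volume {q : ℝ × (Fin k → ℝ) | q.2 = 0} = 0 := by
    have hset : {q : ℝ × (Fin k → ℝ) | q.2 = 0}
        = (univ : Set ℝ) ×ˢ ({0} : Set (Fin k → ℝ)) := by
      ext ⟨t, y⟩; simp [eq_comm]
    rw [hset, Measure.volume_eq_prod, Measure.prod_prod, measure_singleton, mul_zero]
  have hΩO : Ω =ᵐ[volume] O := by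
    refine (MeasureTheory.ae_eq_set).mpr ⟨?_, ?_⟩
    · refine measure_mono_null ?_ hnull
      rintro ⟨t, y⟩ ⟨hΩq, hOq⟩
      simp only [hΩdef, mem_setOf_eq] at hΩq
      obtain ⟨h1, h2, h3⟩ := hΩq
      have ht0 : 0 < t := lt_of_le_of_lt (hgnn _ ⟨hr0 y, h3.le⟩) h1
      simp only [hOdef, mem_setOf_eq] at hOq
      push_neg at hOq
      have hr : ¬ (0 < Real.sqrt (∑ i, y i ^ 2)) := by
        intro hr
        exact absurd h1 (not_lt.mpr (hOq ht0 h2 hr h3))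
      show y = 0
      exact hrzero y (le_antisymm (not_lt.mp hr) (hr0 y))
    · have : O \ Ω = ∅ := diff_eq_empty.mpr hOsubΩ
      simp [this]
  have hΩfin : volume Ω < ⊤ := by
    have hsub : Ω ⊆ (Ioo (0:ℝ) b) ×ˢ (Metric.closedBall (0 : Fin k → ℝ) a) := by
      rintro ⟨t, y⟩ hq
      simp only [hΩdef, mem_setOf_eq] at hq
      obtain ⟨h1, h2, h3⟩ := hq
      refine ⟨⟨lt_of_le_of_lt (hgnn _ ⟨hr0 y, h3.le⟩) h1, h2⟩, ?_⟩
      show y ∈ Metric.closedBall (0 : Fin k → ℝ) a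
      rw [Metric.mem_closedBall, dist_zero_right]
      refine (pi_norm_le_iff_of_nonneg ha.le).mpr fun i => ?_
      have h4 : y i ^ 2 ≤ ∑ j, y j ^ 2 :=
        Finset.single_le_sum (fun j _ => sq_nonneg (y j)) (Finset.mem_univ i)
      calc ‖y i‖ = Real.sqrt (y i ^ 2) := by rw [Real.sqrt_sq_eq_abs, Real.norm_eq_abs]
        _ ≤ Real.sqrt (∑ j, y j ^ 2) := Real.sqrt_le_sqrt h4
        _ ≤ a := h3.le
    calc volume Ω ≤ volume ((Ioo (0:ℝ) b) ×ˢ (Metric.closedBall (0 : Fin k → ℝ) a)) :=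
        measure_mono hsub
      _ < ⊤ := by
        rw [Measure.volume_eq_prod, Measure.prod_prod]
        exact ENNReal.mul_lt_top measure_Ioo_lt_top
          (isCompact_closedBall _ _).measure_lt_top
  haveI : IsFiniteMeasure (volume.restrict Ω) := ⟨by rwa [Measure.restrict_apply_univ]⟩
  -- basic integrability
  have hp' : (1 : ENNReal) ≤ ENNReal.ofReal p := by
    rw [ENNReal.one_le_ofReal]; linarith
  have hfint : Integrable f (volume.restrict Ω) :=
    memLp_one_iff_integrable.mp (hfLp.mono_exponent hp')
  have hdfint : Integrable (fun x => df x (1, 0)) (volume.restrict Ω) :=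
    memLp_one_iff_integrable.mp ((hdfLp (1, 0)).mono_exponent hp')
  have hφc := hφ1.continuous
  have hφ'c : Continuous (deriv φ) := hφ1.continuous_deriv (by simp)
  have hφ'cs : HasCompactSupport (deriv φ) := hφ2.deriv
  obtain ⟨C₁, hC₁⟩ := hφ'c.bounded_above_of_compact_support hφ'cs
  obtain ⟨C₂, hC₂⟩ := hφc.bounded_above_of_compact_support hφ2
  -- the Fubini reduction
  have key : ∀ (u : ℝ × (Fin k → ℝ) → ℝ) (w : ℝ → ℝ),
      Integrable (fun x => u x * w x.1) (volume.restrict O) →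
      ∫ t in Ioo 0 b,
          (∫ y in {y : Fin k → ℝ |
              0 < Real.sqrt (∑ i, y i ^ 2) ∧ Real.sqrt (∑ i, y i ^ 2) < h t},
            u (t, y)) * w t = ∫ x in O, u x * w x.1 := by
    intro u w hu
    have hSm : ∀ t : ℝ, MeasurableSet {y : Fin k → ℝ |
        0 < Real.sqrt (∑ i, y i ^ 2) ∧ Real.sqrt (∑ i, y i ^ 2) < h t} := by
      intro t
      exact ((isOpen_lt continuous_const hrc).inter
        (isOpen_lt hrc continuous_const)).measurableSet
    have hind : Integrable (O.indicator fun x => u x * w x.1) volume :=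
      (integrable_indicator_iff hOm).mpr hu
    have hind' : Integrable (O.indicator fun x => u x * w x.1)
        ((volume : Measure ℝ).prod (volume : Measure (Fin k → ℝ))) := by
      rwa [← Measure.volume_eq_prod]
    have h1 : ∫ x in O, u x * w x.1 = ∫ x, O.indicator (fun x => u x * w x.1) x :=
      (integral_indicator hOm).symm
    have h2 : ∫ x, O.indicator (fun x => u x * w x.1) x
        = ∫ t : ℝ, ∫ y : Fin k → ℝ, O.indicator (fun x => u x * w x.1) (t, y) := by
      rw [Measure.volume_eq_prod]
      exact integral_prod _ hind'
    have h3 : ∀ t : ℝ, (∫ y : Fin k → ℝ, O.indicator (fun x => u x * w x.1) (t, y))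
        = (Ioo 0 b).indicator (fun t => (∫ y in {y : Fin k → ℝ |
            0 < Real.sqrt (∑ i, y i ^ 2) ∧ Real.sqrt (∑ i, y i ^ 2) < h t},
          u (t, y)) * w t) t := by
      intro t
      by_cases ht : t ∈ Ioo (0:ℝ) b
      · rw [indicator_of_mem ht]
        have e1 : ∀ y : Fin k → ℝ, O.indicator (fun x => u x * w x.1) (t, y)
            = ({y : Fin k → ℝ | 0 < Real.sqrt (∑ i, y i ^ 2) ∧
                Real.sqrt (∑ i, y i ^ 2) < h t}).indicator (fun y => u (t, y) * w t) y := by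
          intro y
          by_cases hy : y ∈ {y : Fin k → ℝ | 0 < Real.sqrt (∑ i, y i ^ 2) ∧
              Real.sqrt (∑ i, y i ^ 2) < h t}
          · rw [indicator_of_mem hy, indicator_of_mem ((hslice t ht y).mpr hy)]
          · rw [indicator_of_notMem hy, indicator_of_notMem
              (fun hO' => hy ((hslice t ht y).mp hO'))]
        simp only [e1]
        rw [integral_indicator (hSm t), integral_mul_const]
      · rw [indicator_of_notMem ht]
        have e1 : ∀ y : Fin k → ℝ, O.indicator (fun x => u x * w x.1) (t, y) = 0 := by
          intro y
          refine indicator_of_notMem (fun hO' => ht ?_) _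
          rw [hOdef] at hO'
          exact ⟨hO'.1, hO'.2.1⟩
        simp only [e1, integral_zero]
    rw [← integral_indicator measurableSet_Ioo, h1, h2]
    exact integral_congr_ae (Eventually.of_forall fun t => (h3 t).symm)
  -- integrability of the products
  have bddmul : ∀ (u : ℝ × (Fin k → ℝ) → ℝ) (w : ℝ → ℝ) (C : ℝ), Continuous w →
      (∀ t, ‖w t‖ ≤ C) → Integrable u (volume.restrict Ω) →
      Integrable (fun x => u x * w x.1) (volume.restrict O) := by
    intro u w C hw hC hu
    have h1 : Integrable (fun x : ℝ × (Fin k → ℝ) => w x.1 * u x) (volume.restrict Ω) :=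
      hu.bdd_mul ((hw.comp continuous_fst).aestronglyMeasurable) (Eventually.of_forall fun x => hC x.1)
    have h2 : Integrable (fun x : ℝ × (Fin k → ℝ) => u x * w x.1) (volume.restrict Ω) := by
      simpa [mul_comm] using h1
    exact h2.mono_measure (Measure.restrict_mono hOsubΩ le_rfl)
  have IA : Integrable (fun x => f x * deriv φ x.1) (volume.restrict O) :=
    bddmul f (deriv φ) C₁ hφ'c hC₁ hfint
  have IB : Integrable (fun x => df x (1, 0) * φ x.1) (volume.restrict O) :=
    bddmul (fun x => df x (1, 0)) φ C₂ hφc hC₂ hdfint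
  -- identity for smooth compactly supported functions
  have hIden : ∀ n, ∫ x in O, ψ n x * deriv φ x.1
      = - ∫ x in O, fderiv ℝ (ψ n) x (1, 0) * φ x.1 := by
    intro n
    obtain ⟨hc, hcs, hsup⟩ := hψt n
    have hψ0 : ∀ x, x ∉ Ω → ψ n x = 0 := fun x hx =>
      image_eq_zero_of_notMem_tsupport fun hx' => hx (hsup hx')
    have hdψ0 : ∀ x, x ∉ Ω → fderiv ℝ (ψ n) x (1, 0) = 0 := by
      intro x hx
      have hns : x ∉ Function.support (fderiv ℝ (ψ n)) :=
        fun hx' => hx (hsup (support_fderiv_subset ℝ hx'))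
      rw [Function.notMem_support.mp hns]
      rfl
    have hdc : Continuous fun x => fderiv ℝ (ψ n) x (1, 0) :=
      (hc.continuous_fderiv (by simp)).clm_apply continuous_const
    have hdcs : HasCompactSupport fun x => fderiv ℝ (ψ n) x (1, 0) := hcs.fderiv_apply ℝ (1, 0)
    have int1 : Integrable (fun x : ℝ × (Fin k → ℝ) => ψ n x * deriv φ x.1) volume :=
      (hc.continuous.mul (hφ'c.comp continuous_fst)).integrable_of_hasCompactSupport
        hcs.mul_right
    have int2 : Integrable
        (fun x : ℝ × (Fin k → ℝ) => fderiv ℝ (ψ n) x (1, 0) * φ x.1) volume :=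
      (hdc.mul (hφc.comp continuous_fst)).integrable_of_hasCompactSupport hdcs.mul_right
    have eA : ∫ x in O, ψ n x * deriv φ x.1 = ∫ x, ψ n x * deriv φ x.1 := by
      rw [setIntegral_congr_set hΩO.symm]
      exact setIntegral_eq_integral_of_forall_compl_eq_zero fun x hx => by
        rw [hψ0 x hx, zero_mul]
    have eB : ∫ x in O, fderiv ℝ (ψ n) x (1, 0) * φ x.1
        = ∫ x, fderiv ℝ (ψ n) x (1, 0) * φ x.1 := by
      rw [setIntegral_congr_set hΩO.symm]
      exact setIntegral_eq_integral_of_forall_compl_eq_zero fun x hx => by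
        rw [hdψ0 x hx, zero_mul]
    have eC : ∫ x : ℝ × (Fin k → ℝ), ψ n x * deriv φ x.1
        = ∫ y : Fin k → ℝ, ∫ t : ℝ, ψ n (t, y) * deriv φ t := by
      rw [Measure.volume_eq_prod]
      exact integral_prod_symm _ (by rwa [← Measure.volume_eq_prod])
    have eD : ∫ x : ℝ × (Fin k → ℝ), fderiv ℝ (ψ n) x (1, 0) * φ x.1
        = ∫ y : Fin k → ℝ, ∫ t : ℝ, fderiv ℝ (ψ n) (t, y) (1, 0) * φ t := by
      rw [Measure.volume_eq_prod]
      exact integral_prod_symm _ (by rwa [← Measure.volume_eq_prod])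
    have ibp : ∀ y : Fin k → ℝ, ∫ t : ℝ, ψ n (t, y) * deriv φ t
        = - ∫ t : ℝ, fderiv ℝ (ψ n) (t, y) (1, 0) * φ t := by
      intro y
      have hu : ∀ t : ℝ, HasDerivAt (fun t => ψ n (t, y))
          (fderiv ℝ (ψ n) (t, y) (1, 0)) t := by
        intro t
        have hd : HasFDerivAt (ψ n) (fderiv ℝ (ψ n) (t, y)) (t, y) :=
          (hc.differentiable (by simp) (t, y)).hasFDerivAt
        have hcv : HasDerivAt (fun s : ℝ => (s, y)) ((1 : ℝ), (0 : Fin k → ℝ)) t :=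
          (hasDerivAt_id t).prodMk (hasDerivAt_const t y)
        exact hd.comp_hasDerivAt t hcv
      have hv : ∀ t : ℝ, HasDerivAt φ (deriv φ t) t := fun t =>
        (hφ1.differentiable (by simp) t).hasDerivAt
      have hcy : Continuous fun t : ℝ => ψ n (t, y) :=
        hc.continuous.comp (continuous_id.prodMk continuous_const)
      have hdy : Continuous fun t : ℝ => fderiv ℝ (ψ n) (t, y) (1, 0) :=
        hdc.comp (continuous_id.prodMk continuous_const)
      refine integral_mul_deriv_eq_deriv_mul_of_integrable (fun t _ => hu t) (fun t _ => hv t) ?_ ?_ ?_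
      · exact (hcy.mul hφ'c).integrable_of_hasCompactSupport hφ'cs.mul_left
      · exact (hdy.mul hφc).integrable_of_hasCompactSupport hφ2.mul_left
      · exact (hcy.mul hφc).integrable_of_hasCompactSupport hφ2.mul_left
    rw [eA, eC]
    simp only [ibp]
    rw [integral_neg, eB, eD]
  -- convergence
  have conv : ∀ (u : ℝ × (Fin k → ℝ) → ℝ) (un : ℕ → ℝ × (Fin k → ℝ) → ℝ) (w : ℝ → ℝ) (C : ℝ),
      Continuous w → (∀ t, ‖w t‖ ≤ C) → Integrable u (volume.restrict Ω) →
      (∀ n, Integrable (un n) (volume.restrict Ω)) →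
      Tendsto (fun n => eLpNorm (fun x => u x - un n x) (ENNReal.ofReal p)
        (volume.restrict Ω)) atTop (𝓝 0) →
      Tendsto (fun n => ∫ x in O, un n x * w x.1) atTop (𝓝 (∫ x in O, u x * w x.1)) := by
    intro u un w C hw hC hu hun hlim
    have hC0 : (0:ℝ) ≤ C := le_trans (norm_nonneg _) (hC 0)
    rw [← tendsto_sub_nhds_zero_iff]
    have hmeas : ∀ n, AEStronglyMeasurable (fun x => u x - un n x) (volume.restrict Ω) :=
      fun n => (hu.sub (hun n)).aestronglyMeasurable
    have hone : Tendsto (fun n => eLpNorm (fun x => u x - un n x) 1 (volume.restrict Ω))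
        atTop (𝓝 0) := by
      set c : ENNReal :=
        (volume Ω) ^ (1 / (1 : ENNReal).toReal - 1 / (ENNReal.ofReal p).toReal) with hc
      have hcne : c ≠ ⊤ := by
        apply ENNReal.rpow_ne_top_of_nonneg _ hΩfin.ne
        rw [ENNReal.toReal_one, ENNReal.toReal_ofReal (by linarith)]
        have h1p : 1 / p ≤ 1 := by
          rw [div_le_one (by linarith)]; linarith
        simp only [one_div] at h1p ⊢
        linarith
      have hle : ∀ n, eLpNorm (fun x => u x - un n x) 1 (volume.restrict Ω)
          ≤ eLpNorm (fun x => u x - un n x) (ENNReal.ofReal p) (volume.restrict Ω) * c := by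
        intro n
        have := eLpNorm_le_eLpNorm_mul_rpow_measure_univ hp' (hmeas n)
        rwa [Measure.restrict_apply_univ] at this
      have hmul : Tendsto (fun n => eLpNorm (fun x => u x - un n x) (ENNReal.ofReal p)
          (volume.restrict Ω) * c) atTop (𝓝 0) := by
        have := ENNReal.Tendsto.mul_const hlim (Or.inr hcne)
        simpa using this
      exact tendsto_of_tendsto_of_tendsto_of_le_of_le tendsto_const_nhds hmul
        (fun n => zero_le) hle
    have hre : Tendsto (fun n => ∫ x in Ω, ‖u x - un n x‖) atTop (𝓝 0) := by
      have heq : ∀ n, ∫ x in Ω, ‖u x - un n x‖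
          = (eLpNorm (fun x => u x - un n x) 1 (volume.restrict Ω)).toReal := by
        intro n
        rw [eLpNorm_one_eq_lintegral_enorm,
          integral_norm_eq_lintegral_enorm (hmeas n)]
      simp_rw [heq]
      have := (ENNReal.tendsto_toReal (a := 0) (by simp)).comp hone
      simpa [Function.comp_def] using this
    apply squeeze_zero_norm (a := fun n => C * ∫ x in Ω, ‖u x - un n x‖) ?_
      (by simpa using hre.const_mul C)
    intro n
    have hui : Integrable (fun x => u x * w x.1) (volume.restrict O) :=
      bddmul u w C hw hC hu
    have huni : Integrable (fun x => un n x * w x.1) (volume.restrict O) :=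
      bddmul (un n) w C hw hC (hun n)
    have hrhsΩ : Integrable (fun x => C * ‖u x - un n x‖) (volume.restrict Ω) :=
      ((hu.sub (hun n)).norm.const_mul C)
    have hrhsO : Integrable (fun x => C * ‖u x - un n x‖) (volume.restrict O) :=
      hrhsΩ.mono_measure (Measure.restrict_mono hOsubΩ le_rfl)
    rw [← integral_sub huni hui]
    have hb1 : ‖∫ x in O, (un n x * w x.1 - u x * w x.1)‖
        ≤ ∫ x in O, ‖un n x * w x.1 - u x * w x.1‖ := norm_integral_le_integral_norm _
    have hb2 : ∫ x in O, ‖un n x * w x.1 - u x * w x.1‖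
        ≤ ∫ x in O, C * ‖u x - un n x‖ := by
      refine integral_mono (huni.sub hui).norm hrhsO fun x => ?_
      have hx : un n x * w x.1 - u x * w x.1 = (un n x - u x) * w x.1 := by ring
      rw [hx, norm_mul]
      calc ‖un n x - u x‖ * ‖w x.1‖ ≤ ‖un n x - u x‖ * C :=
          mul_le_mul_of_nonneg_left (hC x.1) (norm_nonneg _)
        _ = C * ‖u x - un n x‖ := by rw [norm_sub_rev]; ring
    have hb3 : ∫ x in O, C * ‖u x - un n x‖ ≤ ∫ x in Ω, C * ‖u x - un n x‖ := by
      refine setIntegral_mono_set hrhsΩ ?_ ?_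
      · exact Eventually.of_forall fun x => mul_nonneg hC0 (norm_nonneg _)
      · exact HasSubset.Subset.eventuallyLE hOsubΩ
    have hb4 : ∫ x in Ω, C * ‖u x - un n x‖ = C * ∫ x in Ω, ‖u x - un n x‖ :=
      integral_const_mul C _
    exact le_trans hb1 (le_trans hb2 (le_trans hb3 (le_of_eq hb4)))
  have hψint : ∀ n, Integrable (ψ n) (volume.restrict Ω) := by
    intro n
    exact ((hψt n).1.continuous.integrable_of_hasCompactSupport (hψt n).2.1).restrict
  have hdψint : ∀ n, Integrable (fun x => fderiv ℝ (ψ n) x (1, 0)) (volume.restrict Ω) := by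
    intro n
    refine (Continuous.integrable_of_hasCompactSupport ?_ ?_).restrict
    · exact ((hψt n).1.continuous_fderiv (by simp)).clm_apply continuous_const
    · exact (hψt n).2.1.fderiv_apply ℝ (1, 0)
  have hA := conv f ψ (deriv φ) C₁ hφ'c hC₁ hfint hψint hψf
  have hB := conv (fun x => df x (1, 0)) (fun n x => fderiv ℝ (ψ n) x (1, 0)) φ C₂ hφc hC₂
    hdfint hdψint (hψdf (1, 0))
  have hA' : Tendsto (fun n => ∫ x in O, ψ n x * deriv φ x.1) atTop
      (𝓝 (- ∫ x in O, df x (1, 0) * φ x.1)) := by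
    simp_rw [hIden]
    exact hB.neg
  have hmain : ∫ x in O, f x * deriv φ x.1 = - ∫ x in O, df x (1, 0) * φ x.1 :=
    tendsto_nhds_unique hA hA'
  rw [key f (deriv φ) IA, key (fun x => df x (1, 0)) φ IB]
  exact hmain
end
end

section
/- Let 1 < p < ∞, let a, b > 0, and let g : [0,a] → ℝ be continuous and strictly increasing with g(0) = 0 and g(a) = b, with inverse h := g^{-1}. Let O = { x ∈ ℝ^N : g(r) < x₁ < b }, where r = (∑_{i=2}^N x_i²)^{1/2}. For f ∈ W^{1,p}_0(O) define, for a.e. x₁ ∈ (0,b), A(x₁) := ∫_{{0 < r < h(x₁)}} f(x₁, x₂, …, x_N) dx₂ … dx_N. Then lim_{x₁ → 0⁺} A(x₁) = 0. -/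
open MeasureTheory Real Set Filter Topology

noncomputable section

open scoped ENNReal NNReal

private lemma l1_control {α : Type*} [MeasurableSpace α] {μ : Measure α} {p : ℝ}
    (hp : 1 < p) {w : α → ℝ} (hw : AEStronglyMeasurable w μ) :
    ∫⁻ x, (‖w x‖₊ : ℝ≥0∞) ∂μ ≤
      eLpNorm w (ENNReal.ofReal p) μ * (μ Set.univ) ^ (1 - 1/p) := by
  have h1 : (1 : ℝ≥0∞) ≤ ENNReal.ofReal p := by
    rw [ENNReal.one_le_ofReal]; exact hp.le
  have h2 := eLpNorm_le_eLpNorm_mul_rpow_measure_univ (μ := μ) h1 hw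
  rwa [eLpNorm_one_eq_lintegral_enorm, ENNReal.toReal_one,
    ENNReal.toReal_ofReal (by linarith), one_div_one] at h2

private lemma isClosedEmbedding_mk_left {k : ℕ} (y : Fin k → ℝ) :
    Topology.IsClosedEmbedding (fun s : ℝ => (s, y)) := by
  have : Isometry (fun s : ℝ => (s, y)) := by
    intro s t
    simp [Prod.edist_eq]
  exact this.isClosedEmbedding

private lemma isClosedEmbedding_mk_right {k : ℕ} (t : ℝ) :
    Topology.IsClosedEmbedding (fun y : Fin k → ℝ => (t, y)) := by
  have : Isometry (fun y : Fin k → ℝ => (t, y)) := by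
    intro y₁ y₂
    simp [Prod.edist_eq]
  exact this.isClosedEmbedding

private lemma ftc_slice {k : ℕ} {b : ℝ} {Ω : Set (ℝ × (Fin k → ℝ))} (hΩm : MeasurableSet Ω)
    (hsub : ∀ x ∈ Ω, x.1 < b)
    {φ : ℝ × (Fin k → ℝ) → ℝ} (hφ : ContDiff ℝ (⊤ : ℕ∞) φ) (hcs : HasCompactSupport φ)
    (hsupp : tsupport φ ⊆ Ω) {t : ℝ} (ht : t ≤ b) :
    ∫ y, φ (t, y) = -∫ x in {x : ℝ × (Fin k → ℝ) | t < x.1} ∩ Ω, (fderiv ℝ φ x) (1, 0) := by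
  set D : ℝ × (Fin k → ℝ) → ℝ := fun x => (fderiv ℝ φ x) (1, 0) with hD
  have hDc : Continuous D := (hφ.continuous_fderiv (by simp)).clm_apply continuous_const
  have hDcs : HasCompactSupport D := hcs.fderiv_apply ℝ (1, 0)
  have hDz : ∀ x ∉ Ω, D x = 0 := by
    intro x hx
    have hx' : x ∉ tsupport φ := fun hmem => hx (hsupp hmem)
    have h0 : fderiv ℝ φ x = 0 :=
      image_eq_zero_of_notMem_tsupport (fun hmem => hx' (tsupport_fderiv_subset ℝ hmem))
    simp [hD, h0]
  have hDint : Integrable D := hDc.integrable_of_hasCompactSupport hDcs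
  have hDyc : ∀ y : Fin k → ℝ, Continuous fun s => D (s, y) := fun y =>
    hDc.comp (continuous_id.prodMk continuous_const)
  have hDycs : ∀ y : Fin k → ℝ, HasCompactSupport fun s => D (s, y) := fun y =>
    hDcs.comp_isClosedEmbedding (isClosedEmbedding_mk_left y)
  have hDyint : ∀ y : Fin k → ℝ, Integrable (fun s => D (s, y)) :=
    fun y => (hDyc y).integrable_of_hasCompactSupport (hDycs y)
  have key : ∀ y : Fin k → ℝ, φ (t, y) = -∫ s in Set.Ioi t, D (s, y) := by
    intro y
    have hderiv : ∀ s ∈ Set.uIcc t b, HasDerivAt (fun s => φ (s, y)) (D (s, y)) s := by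
      intro s _
      have h1 : HasDerivAt (fun s : ℝ => (s, y)) ((1 : ℝ), (0 : Fin k → ℝ)) s :=
        (hasDerivAt_id s).prodMk (hasDerivAt_const s y)
      exact ((hφ.differentiable (by simp) (s, y)).hasFDerivAt.comp_hasDerivAt s h1)
    have hint : IntervalIntegrable (fun s => D (s, y)) volume t b :=
      (hDyc y).intervalIntegrable t b
    have h2 : ∫ s in t..b, D (s, y) = φ (b, y) - φ (t, y) :=
      intervalIntegral.integral_eq_sub_of_hasDerivAt hderiv hint
    have hbz : φ (b, y) = 0 := by
      apply image_eq_zero_of_notMem_tsupport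
      intro hmem
      exact lt_irrefl b (hsub _ (hsupp hmem))
    have h3 : ∫ s in Set.Ioc t b, D (s, y) = -φ (t, y) := by
      rw [← intervalIntegral.integral_of_le ht, h2, hbz, zero_sub]
    have hzero : ∫ s in Set.Ioi b, D (s, y) = 0 := by
      apply setIntegral_eq_zero_of_forall_eq_zero
      intro s hs
      exact hDz _ (fun hx => lt_irrefl b (lt_trans hs (hsub _ hx)))
    rw [← Set.Ioc_union_Ioi_eq_Ioi ht,
      setIntegral_union Set.Ioc_disjoint_Ioi_same measurableSet_Ioi
        ((hDyint y).integrableOn) ((hDyint y).integrableOn),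
      hzero, add_zero, h3, neg_neg]
  have hDind : Integrable ((Set.Ioi t ×ˢ (Set.univ : Set (Fin k → ℝ))).indicator D) :=
    hDint.indicator (measurableSet_Ioi.prod MeasurableSet.univ)
  calc ∫ y, φ (t, y) = ∫ y : Fin k → ℝ, -∫ s in Set.Ioi t, D (s, y) := by
        exact integral_congr_ae (Filter.Eventually.of_forall fun y => key y)
    _ = -∫ y : Fin k → ℝ, ∫ s in Set.Ioi t, D (s, y) := integral_neg _
    _ = -∫ y : Fin k → ℝ, ∫ s, (Set.Ioi t ×ˢ (Set.univ : Set (Fin k → ℝ))).indicator D (s, y) := by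
        congr 1
        refine integral_congr_ae (Filter.Eventually.of_forall fun y => ?_)
        show (∫ s in Set.Ioi t, D (s, y)) = ∫ s, (Set.Ioi t ×ˢ (Set.univ : Set (Fin k → ℝ))).indicator D (s, y)
        rw [← integral_indicator measurableSet_Ioi]
        congr 1
        ext s
        by_cases hs : s ∈ Set.Ioi t <;>
          simp [Set.indicator_apply, hs, Set.mem_prod]
    _ = -∫ x : ℝ × (Fin k → ℝ), (Set.Ioi t ×ˢ (Set.univ : Set (Fin k → ℝ))).indicator D x := by
        congr 1
        rw [Measure.volume_eq_prod] at hDind ⊢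
        exact (MeasureTheory.integral_prod_symm _ hDind).symm
    _ = -∫ x in Set.Ioi t ×ˢ (Set.univ : Set (Fin k → ℝ)), D x := by
        rw [integral_indicator (measurableSet_Ioi.prod MeasurableSet.univ)]
    _ = -∫ x in {x : ℝ × (Fin k → ℝ) | t < x.1} ∩ Ω, (fderiv ℝ φ x) (1, 0) := by
        congr 1
        have hset : Set.Ioi t ×ˢ (Set.univ : Set (Fin k → ℝ)) =
            {x : ℝ × (Fin k → ℝ) | t < x.1} := by
          ext x; simp [Set.mem_prod]
        rw [hset, ← setIntegral_indicator hΩm]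
        refine setIntegral_congr_ae (measurableSet_lt measurable_const measurable_fst)
          (Filter.Eventually.of_forall fun x _ => ?_)
        by_cases hx : x ∈ Ω
        · rw [Set.indicator_of_mem hx]
        · rw [Set.indicator_of_notMem hx]
          exact hDz x hx



/-- On the cusp domain `O = {g(r) < x₁ < b}`, for `f ∈ W^{1,p}_0(O)` the sliced
integral `A(x₁) = ∫_{0<r<h(x₁)} f(x₁,·)` (identified with its continuous representative on
`[0,b]`) satisfies `lim_{x₁→0⁺} A(x₁) = 0`. -/
theorem statement1 (k : ℕ) (p a b : ℝ) (hp1 : 1 < p) (ha : 0 < a) (hb : 0 < b)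
    (g h : ℝ → ℝ) (hgc : ContinuousOn g (Icc 0 a)) (hgm : StrictMonoOn g (Icc 0 a))
    (hg0 : g 0 = 0) (hga : g a = b) (hinv : InvOn h g (Icc 0 a) (Icc 0 b))
    (f : ℝ × (Fin k → ℝ) → ℝ) (df : ℝ × (Fin k → ℝ) → (ℝ × (Fin k → ℝ)) →L[ℝ] ℝ)
    (hf : MemW1p0 p {q : ℝ × (Fin k → ℝ) |
        g (Real.sqrt (∑ i, q.2 i ^ 2)) < q.1 ∧ q.1 < b ∧ Real.sqrt (∑ i, q.2 i ^ 2) < a}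
      f df) :
    ∃ A : ℝ → ℝ, ContinuousOn A (Icc 0 b) ∧
      (∀ᵐ t ∂(volume.restrict (Ioo 0 b)),
        A t = ∫ y in {y : Fin k → ℝ |
            0 < Real.sqrt (∑ i, y i ^ 2) ∧ Real.sqrt (∑ i, y i ^ 2) < h t},
          f (t, y)) ∧
      Tendsto A (𝓝[>] 0) (𝓝 0) := by
  classical
  -- degenerate case k = 0
  rcases Nat.eq_zero_or_pos k with hk0 | hk
  · subst hk0
    refine ⟨fun _ => 0, continuousOn_const, ?_, tendsto_const_nhds⟩
    refine Eventually.of_forall fun t => ?_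
    have hempty : {y : Fin 0 → ℝ |
        0 < Real.sqrt (∑ i, y i ^ 2) ∧ Real.sqrt (∑ i, y i ^ 2) < h t} = ∅ := by
      ext y; simp
    rw [hempty]
    simp
  set Ω : Set (ℝ × (Fin k → ℝ)) := {q : ℝ × (Fin k → ℝ) |
      g (Real.sqrt (∑ i, q.2 i ^ 2)) < q.1 ∧ q.1 < b ∧ Real.sqrt (∑ i, q.2 i ^ 2) < a}
    with hΩdef
  obtain ⟨hfLp, hdfLp, _hweak, ψ, hψtest, hψf, hψdf⟩ := hf
  set q : ℝ≥0∞ := ENNReal.ofReal p with hqdef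
  have hq1 : (1 : ℝ≥0∞) ≤ q := by rw [hqdef, ENNReal.one_le_ofReal]; exact hp1.le
  -- basic facts about the "norm" function
  have habs : ∀ (y : Fin k → ℝ) (i : Fin k), |y i| ≤ Real.sqrt (∑ j, y j ^ 2) := by
    intro y i
    rw [← Real.sqrt_sq_eq_abs]
    exact Real.sqrt_le_sqrt (Finset.single_le_sum (fun j _ => sq_nonneg (y j))
      (Finset.mem_univ i))
  have hzero_of : ∀ y : Fin k → ℝ, Real.sqrt (∑ i, y i ^ 2) = 0 → y = 0 := by
    intro y hy
    have hsum : (∑ i, y i ^ 2) = 0 := by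
      have h1 : (0:ℝ) ≤ ∑ i, y i ^ 2 := Finset.sum_nonneg fun i _ => sq_nonneg _
      have h2 := (Real.sqrt_eq_zero h1).1 hy
      linarith
    funext i
    have := (Finset.sum_eq_zero_iff_of_nonneg fun j _ => sq_nonneg (y j)).1 hsum i
      (Finset.mem_univ i)
    exact pow_eq_zero_iff (n := 2) (by norm_num) |>.1 this
  have hcontnrm : Continuous fun y : Fin k → ℝ => Real.sqrt (∑ i, y i ^ 2) :=
    Real.continuous_sqrt.comp (continuous_finset_sum _ fun i _ => (continuous_apply i).pow 2)
  have hgmono : MonotoneOn g (Icc 0 a) := hgm.monotoneOn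
  -- Ω is open
  have hΩopen : IsOpen Ω := by
    have c1 : Continuous fun x : ℝ × (Fin k → ℝ) => Real.sqrt (∑ i, x.2 i ^ 2) :=
      hcontnrm.comp continuous_snd
    have hV : IsOpen {x : ℝ × (Fin k → ℝ) | Real.sqrt (∑ i, x.2 i ^ 2) < a} :=
      isOpen_lt c1 continuous_const
    have hF : ContinuousOn (fun x : ℝ × (Fin k → ℝ) => x.1 - g (Real.sqrt (∑ i, x.2 i ^ 2)))
        {x : ℝ × (Fin k → ℝ) | Real.sqrt (∑ i, x.2 i ^ 2) < a} := by
      refine (continuous_fst.continuousOn).sub (hgc.comp c1.continuousOn ?_)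
      intro x hx
      exact ⟨Real.sqrt_nonneg _, le_of_lt hx⟩
    have h1 := hF.isOpen_inter_preimage (t := Set.Ioi (0:ℝ)) hV isOpen_Ioi
    have h2 : Ω = ({x : ℝ × (Fin k → ℝ) | Real.sqrt (∑ i, x.2 i ^ 2) < a} ∩
        (fun x : ℝ × (Fin k → ℝ) => x.1 - g (Real.sqrt (∑ i, x.2 i ^ 2))) ⁻¹' Set.Ioi 0) ∩
        {x : ℝ × (Fin k → ℝ) | x.1 < b} := by
      ext x
      simp only [hΩdef, Set.mem_setOf_eq, Set.mem_inter_iff, Set.mem_preimage, Set.mem_Ioi]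
      constructor
      · rintro ⟨ha1, ha2, ha3⟩; exact ⟨⟨ha3, by linarith⟩, ha2⟩
      · rintro ⟨⟨ha3, ha1⟩, ha2⟩; exact ⟨by linarith, ha2, ha3⟩
    rw [h2]
    exact (h1).inter (isOpen_lt continuous_fst continuous_const)
  have hΩmeas : MeasurableSet Ω := hΩopen.measurableSet
  have hΩsub1 : ∀ x ∈ Ω, 0 < x.1 ∧ x.1 < b := by
    intro x hx
    obtain ⟨h1, h2, h3⟩ := hx
    refine ⟨lt_of_le_of_lt ?_ h1, h2⟩
    calc (0:ℝ) = g 0 := hg0.symm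
      _ ≤ g (Real.sqrt (∑ i, x.2 i ^ 2)) :=
        hgmono ⟨le_rfl, ha.le⟩ ⟨Real.sqrt_nonneg _, h3.le⟩ (Real.sqrt_nonneg _)
  have hΩsubb : ∀ x ∈ Ω, x.1 < b := fun x hx => (hΩsub1 x hx).2
  have hΩprod : Ω ⊆ Set.Ioo 0 b ×ˢ Set.pi Set.univ fun _ : Fin k => Set.Ioo (-a) a := by
    intro x hx
    refine ⟨hΩsub1 x hx, fun i _ => abs_lt.1 (lt_of_le_of_lt (habs x.2 i) hx.2.2)⟩
  have hvol : volume Ω ≠ ⊤ := by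
    refine ne_top_of_le_ne_top ?_ (measure_mono hΩprod)
    rw [Measure.volume_eq_prod, Measure.prod_prod, volume_pi_pi]
    refine ENNReal.mul_ne_top (by simp) ?_
    rw [Finset.prod_const]
    exact ENNReal.pow_ne_top (by simp)
  haveI hfin : IsFiniteMeasure (volume.restrict Ω) :=
    ⟨by rwa [Measure.restrict_apply_univ, lt_top_iff_ne_top]⟩
  set u : ℝ × (Fin k → ℝ) → ℝ := fun x => df x (1, 0) with hudef
  have hu_aesm : AEStronglyMeasurable u (volume.restrict Ω) :=
    (hdfLp (1, 0)).aestronglyMeasurable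
  have hu_int : IntegrableOn u Ω := (hdfLp (1, 0)).integrable hq1
  set Dn : ℕ → ℝ × (Fin k → ℝ) → ℝ := fun n x => fderiv ℝ (ψ n) x (1, 0) with hDndef
  have hDnc : ∀ n, Continuous (Dn n) := fun n =>
    ((hψtest n).1.continuous_fderiv (by simp)).clm_apply continuous_const
  have hDncs : ∀ n, HasCompactSupport (Dn n) := fun n => (hψtest n).2.1.fderiv_apply ℝ (1, 0)
  have hDnint : ∀ n, Integrable (Dn n) := fun n =>
    (hDnc n).integrable_of_hasCompactSupport (hDncs n)
  have hmeas_t : ∀ t : ℝ, MeasurableSet {x : ℝ × (Fin k → ℝ) | t < x.1} := fun t =>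
    measurableSet_lt measurable_const measurable_fst
  set A : ℝ → ℝ := fun t => -∫ x in {x : ℝ × (Fin k → ℝ) | t < x.1} ∩ Ω, u x with hAdef
  have hexp : (0:ℝ) ≤ 1 - 1/p := by
    rw [sub_nonneg, div_le_one (by linarith)]; linarith
  -- the W^{1,p} gap estimate
  have hgap : ∀ (n : ℕ) (t : ℝ),
      |A t - (-∫ x in {x : ℝ × (Fin k → ℝ) | t < x.1} ∩ Ω, Dn n x)| ≤
      (eLpNorm (fun x => u x - Dn n x) q (volume.restrict Ω) * (volume Ω) ^ (1 - 1/p)).toReal := by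
    intro n t
    have hset : MeasurableSet ({x : ℝ × (Fin k → ℝ) | t < x.1} ∩ Ω) :=
      (hmeas_t t).inter hΩmeas
    have huint' : IntegrableOn u ({x : ℝ × (Fin k → ℝ) | t < x.1} ∩ Ω) :=
      hu_int.mono_set Set.inter_subset_right
    have h1 : A t - (-∫ x in {x : ℝ × (Fin k → ℝ) | t < x.1} ∩ Ω, Dn n x) =
        -∫ x in {x : ℝ × (Fin k → ℝ) | t < x.1} ∩ Ω, (u x - Dn n x) := by
      rw [integral_sub huint' ((hDnint n).integrableOn)]
      ring
    rw [h1, abs_neg, ← Real.norm_eq_abs]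
    have h2 := norm_integral_le_lintegral_norm
      (μ := volume.restrict ({x : ℝ × (Fin k → ℝ) | t < x.1} ∩ Ω))
      (fun x => u x - Dn n x)
    refine le_trans h2 ?_
    have h3 : (∫⁻ x in {x : ℝ × (Fin k → ℝ) | t < x.1} ∩ Ω,
        ENNReal.ofReal ‖u x - Dn n x‖) ≤ ∫⁻ x in Ω, (‖u x - Dn n x‖₊ : ℝ≥0∞) := by
      simp_rw [ofReal_norm_eq_enorm]
      exact lintegral_mono' (Measure.restrict_mono Set.inter_subset_right le_rfl) le_rfl
    have h4 : (∫⁻ x in Ω, (‖u x - Dn n x‖₊ : ℝ≥0∞)) ≤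
        eLpNorm (fun x => u x - Dn n x) q (volume.restrict Ω) * (volume Ω) ^ (1 - 1/p) := by
      have := l1_control (μ := volume.restrict Ω) hp1
        (hu_aesm.sub ((hDnc n).aestronglyMeasurable))
      rwa [Measure.restrict_apply_univ] at this
    have hne : eLpNorm (fun x => u x - Dn n x) q (volume.restrict Ω) * (volume Ω) ^ (1 - 1/p)
        ≠ ⊤ := by
      refine ENNReal.mul_ne_top ?_ (ENNReal.rpow_ne_top_of_nonneg hexp hvol)
      have hmem : MemLp (fun x => u x - Dn n x) q (volume.restrict Ω) := by
        refine (hdfLp (1, 0)).sub ?_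
        exact ((hDnc n).memLp_of_hasCompactSupport (hDncs n))
      exact hmem.eLpNorm_ne_top
    exact ENNReal.toReal_mono hne (le_trans h3 h4)
  have hgap0 : Tendsto (fun n =>
      (eLpNorm (fun x => u x - Dn n x) q (volume.restrict Ω) * (volume Ω) ^ (1 - 1/p)).toReal)
      atTop (𝓝 0) := by
    have h1 := ENNReal.Tendsto.mul_const (hψdf (1, 0))
      (Or.inr (ENNReal.rpow_ne_top_of_nonneg hexp hvol))
    rw [zero_mul] at h1
    have h2 := (ENNReal.tendsto_toReal (a := 0) (by simp)).comp h1
    simpa only [Function.comp_def, ENNReal.toReal_zero] using h2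
  -- convergence of slice integrals of ψ n to A t
  have hΦA : ∀ t ∈ Icc 0 b, Tendsto (fun n => ∫ y, ψ n (t, y)) atTop (𝓝 (A t)) := by
    intro t ht
    have hftc : ∀ n, ∫ y, ψ n (t, y) =
        -∫ x in {x : ℝ × (Fin k → ℝ) | t < x.1} ∩ Ω, Dn n x := fun n =>
      ftc_slice hΩmeas hΩsubb (hψtest n).1 (hψtest n).2.1 (hψtest n).2.2 ht.2
    rw [tendsto_iff_norm_sub_tendsto_zero]
    refine squeeze_zero (fun n => norm_nonneg _) (fun n => ?_) hgap0
    rw [Real.norm_eq_abs, abs_sub_comm, hftc n]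
    exact hgap n t
  -- A 0 = 0
  have hA0 : A 0 = 0 := by
    have h1 := hΦA 0 ⟨le_rfl, hb.le⟩
    have h2 : (fun n => ∫ y, ψ n (0, y)) = fun _ => (0:ℝ) := by
      funext n
      have : ∀ y : Fin k → ℝ, ψ n (0, y) = 0 := by
        intro y
        apply image_eq_zero_of_notMem_tsupport
        intro hmem
        exact absurd ((hΩsub1 _ ((hψtest n).2.2 hmem)).1) (lt_irrefl 0)
      simp [this]
    rw [h2] at h1
    exact tendsto_nhds_unique h1 tendsto_const_nhds
  -- A is continuous
  have hind_aesm : AEStronglyMeasurable (Ω.indicator u) volume :=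
    (aestronglyMeasurable_indicator_iff hΩmeas).2 hu_aesm
  have hind_int : Integrable (Ω.indicator u) volume :=
    (integrable_indicator_iff hΩmeas).2 hu_int
  have hAcont : Continuous A := by
    have hrepr : A = fun t => -∫ x, ({x : ℝ × (Fin k → ℝ) | t < x.1}).indicator
        (Ω.indicator u) x := by
      funext t
      rw [hAdef]
      congr 1
      rw [Set.indicator_indicator, integral_indicator ((hmeas_t t).inter hΩmeas)]
    rw [hrepr, continuous_iff_continuousAt]
    intro t₀
    refine ContinuousAt.neg ?_
    refine continuousAt_of_dominated (bound := fun x => ‖Ω.indicator u x‖) ?_ ?_ ?_ ?_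
    · exact Eventually.of_forall fun t => hind_aesm.indicator (hmeas_t t)
    · exact Eventually.of_forall fun t => Eventually.of_forall fun x =>
        norm_indicator_le_norm_self _ x
    · exact hind_int.norm
    · have hnull : volume {x : ℝ × (Fin k → ℝ) | x.1 = t₀} = 0 := by
        have hset : {x : ℝ × (Fin k → ℝ) | x.1 = t₀} =
            ({t₀} : Set ℝ) ×ˢ (Set.univ : Set (Fin k → ℝ)) := by
          ext x
          simp only [Set.mem_setOf_eq, Set.mem_prod, Set.mem_singleton_iff, Set.mem_univ,
            and_true]
        rw [hset, Measure.volume_eq_prod, Measure.prod_prod, Real.volume_singleton, zero_mul]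
      rw [← compl_compl {x : ℝ × (Fin k → ℝ) | x.1 = t₀}] at hnull
      have hae : ∀ᵐ x : ℝ × (Fin k → ℝ), x.1 ≠ t₀ := by
        rw [MeasureTheory.ae_iff]
        simpa using hnull
      filter_upwards [hae] with x hx
      rcases lt_or_gt_of_ne hx with hlt | hgt
      · -- x.1 < t₀ : eventually the indicator is 0
        have hev : ∀ᶠ t in 𝓝 t₀, ({x' : ℝ × (Fin k → ℝ) | t < x'.1}).indicator
            (Ω.indicator u) x = 0 := by
          have : ∀ᶠ t in 𝓝 t₀, x.1 < t := eventually_gt_nhds hlt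
          filter_upwards [this] with t hts
          exact Set.indicator_of_notMem (by simp [not_lt.2 hts.le]) _
        exact continuousAt_const.congr (by filter_upwards [hev] with t hts using hts.symm)
      · have hev : ∀ᶠ t in 𝓝 t₀, ({x' : ℝ × (Fin k → ℝ) | t < x'.1}).indicator
            (Ω.indicator u) x = Ω.indicator u x := by
          have : ∀ᶠ t in 𝓝 t₀, t < x.1 := eventually_lt_nhds hgt
          filter_upwards [this] with t hts
          exact Set.indicator_of_mem (show x ∈ {x' : ℝ × (Fin k → ℝ) | t < x'.1} from hts) _
        exact continuousAt_const.congr (by filter_upwards [hev] with t hts using hts.symm)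
  refine ⟨A, hAcont.continuousOn, ?_, ?_⟩
  · -- a.e. identification of A with the slice integral of f
    have hIVT : ∀ t ∈ Icc 0 b, h t ∈ Icc 0 a ∧ g (h t) = t := by
      intro t ht
      have hmem : t ∈ Icc (g 0) (g a) := by rwa [hg0, hga]
      obtain ⟨x, hx, hgx⟩ := intermediate_value_Icc ha.le hgc hmem
      have hxe : h t = x := by rw [← hgx, hinv.1 hx]
      exact ⟨hxe ▸ hx, hinv.2 ht⟩
    have hhmono : ∀ s ∈ Icc 0 b, ∀ t ∈ Icc 0 b, s ≤ t → h s ≤ h t := by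
      intro s hs t ht hst
      by_contra hlt
      push_neg at hlt
      have := hgm (hIVT t ht).1 (hIVT s hs).1 hlt
      rw [(hIVT t ht).2, (hIVT s hs).2] at this
      linarith
    set H : ℝ → ℝ := fun t => h (max 0 (min t b)) with hHdef
    have hclamp : ∀ t, max 0 (min t b) ∈ Icc 0 b := fun t =>
      ⟨le_max_left _ _, max_le hb.le (min_le_right _ _)⟩
    have hHmono : Monotone H := fun s t hst =>
      hhmono _ (hclamp s) _ (hclamp t) (max_le_max le_rfl (min_le_min_right b hst))
    have hHmeas : Measurable H := hHmono.measurable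
    have hHeq : ∀ t ∈ Icc 0 b, H t = h t := by
      intro t ht
      rw [hHdef]
      simp only
      rw [min_eq_left ht.2, max_eq_right ht.1]
    have hSsubΩ : ∀ t ∈ Ioo 0 b, ∀ y : Fin k → ℝ,
        0 < Real.sqrt (∑ i, y i ^ 2) → Real.sqrt (∑ i, y i ^ 2) < h t → (t, y) ∈ Ω := by
      intro t ht y _ h2
      have hm := hIVT t ⟨ht.1.le, ht.2.le⟩
      have hy : Real.sqrt (∑ i, y i ^ 2) ∈ Icc 0 a := ⟨Real.sqrt_nonneg _, h2.le.trans hm.1.2⟩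
      refine ⟨?_, ht.2, lt_of_lt_of_le h2 hm.1.2⟩
      have := hgm hy hm.1 h2
      rwa [hm.2] at this
    have hΩslice : ∀ t (y : Fin k → ℝ), (t, y) ∈ Ω → t ∈ Icc 0 b →
        Real.sqrt (∑ i, y i ^ 2) < h t := by
      intro t y hty ht
      obtain ⟨h1, h2, h3⟩ := hty
      have hm := hIVT t ht
      have hy : Real.sqrt (∑ i, y i ^ 2) ∈ Icc 0 a := ⟨Real.sqrt_nonneg _, h3.le⟩
      have hlt : g (Real.sqrt (∑ i, y i ^ 2)) < g (h t) := by rw [hm.2]; exact h1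
      exact (hgm.lt_iff_lt hy hm.1).1 hlt
    have hSmeas : ∀ t : ℝ, MeasurableSet {y : Fin k → ℝ |
        0 < Real.sqrt (∑ i, y i ^ 2) ∧ Real.sqrt (∑ i, y i ^ 2) < h t} := fun t =>
      (measurableSet_lt measurable_const hcontnrm.measurable).inter
        (measurableSet_lt hcontnrm.measurable measurable_const)
    haveI : Nonempty (Fin k) := ⟨⟨0, hk⟩⟩
    have hnull0 : volume ({(0 : Fin k → ℝ)} : Set (Fin k → ℝ)) = 0 := by
      have hs : ({(0 : Fin k → ℝ)} : Set (Fin k → ℝ)) =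
          Set.pi Set.univ fun _ : Fin k => ({0} : Set ℝ) := by
        ext y
        simp [funext_iff]
      rw [hs, volume_pi_pi]
      simp
      omega
    have hSnΦ : ∀ n, ∀ t ∈ Ioo 0 b,
        ∫ y in {y : Fin k → ℝ | 0 < Real.sqrt (∑ i, y i ^ 2) ∧
          Real.sqrt (∑ i, y i ^ 2) < h t}, ψ n (t, y) = ∫ y, ψ n (t, y) := by
      intro n t ht
      rw [← integral_indicator (hSmeas t)]
      refine integral_congr_ae ?_
      have hsub : {y : Fin k → ℝ | ¬ ({y : Fin k → ℝ | 0 < Real.sqrt (∑ i, y i ^ 2) ∧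
          Real.sqrt (∑ i, y i ^ 2) < h t}.indicator (fun y => ψ n (t, y)) y = ψ n (t, y))}
          ⊆ {(0 : Fin k → ℝ)} := by
        intro y hy
        simp only [Set.mem_setOf_eq] at hy
        by_cases hyS : y ∈ {y : Fin k → ℝ | 0 < Real.sqrt (∑ i, y i ^ 2) ∧
            Real.sqrt (∑ i, y i ^ 2) < h t}
        · exact absurd (Set.indicator_of_mem hyS _) hy
        · rw [Set.indicator_of_notMem hyS] at hy
          have hψ0 : ψ n (t, y) ≠ 0 := fun hc => hy hc.symm
          have hmem : (t, y) ∈ Ω := (hψtest n).2.2 (subset_tsupport _ hψ0)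
          have h2 := hΩslice t y hmem ⟨ht.1.le, ht.2.le⟩
          have h1 : ¬ (0 < Real.sqrt (∑ i, y i ^ 2)) := fun hpos => hyS ⟨hpos, h2⟩
          push_neg at h1
          have h0 : Real.sqrt (∑ i, y i ^ 2) = 0 := le_antisymm h1 (Real.sqrt_nonneg _)
          simp [hzero_of y h0]
      exact (MeasureTheory.ae_iff).2 (measure_mono_null hsub hnull0)
    -- measurable representative of f on Ω
    have hfint : IntegrableOn f Ω := hfLp.integrable hq1
    have haesm_ind : AEStronglyMeasurable (Ω.indicator f) volume :=
      (aestronglyMeasurable_indicator_iff hΩmeas).2 hfLp.aestronglyMeasurable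
    set f₀ : ℝ × (Fin k → ℝ) → ℝ := haesm_ind.mk _ with hf0def
    have hf0sm : StronglyMeasurable f₀ := haesm_ind.stronglyMeasurable_mk
    have heq0 : Ω.indicator f =ᵐ[volume] f₀ := haesm_ind.ae_eq_mk
    have hind_fint : Integrable (Ω.indicator f) volume :=
      (integrable_indicator_iff hΩmeas).2 hfint
    have hf0int : Integrable f₀ volume := hind_fint.congr heq0
    set U : Set (ℝ × (Fin k → ℝ)) := {z : ℝ × (Fin k → ℝ) | z.1 ∈ Ioo 0 b ∧
        0 < Real.sqrt (∑ i, z.2 i ^ 2) ∧ Real.sqrt (∑ i, z.2 i ^ 2) < H z.1} with hUdef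
    have hUmeas : MeasurableSet U := by
      have h1 : MeasurableSet {z : ℝ × (Fin k → ℝ) | z.1 ∈ Ioo 0 b} :=
        measurable_fst measurableSet_Ioo
      have h2 : MeasurableSet {z : ℝ × (Fin k → ℝ) | 0 < Real.sqrt (∑ i, z.2 i ^ 2)} :=
        measurableSet_lt measurable_const (hcontnrm.measurable.comp measurable_snd)
      have h3 : MeasurableSet {z : ℝ × (Fin k → ℝ) | Real.sqrt (∑ i, z.2 i ^ 2) < H z.1} :=
        measurableSet_lt (hcontnrm.measurable.comp measurable_snd) (hHmeas.comp measurable_fst)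
      exact h1.inter (h2.inter h3)
    have hUsubΩ : U ⊆ Ω := by
      rintro ⟨t, y⟩ hz
      obtain ⟨ht, h1, h2⟩ := hz
      rw [hHeq t ⟨ht.1.le, ht.2.le⟩] at h2
      exact hSsubΩ t ht y h1 h2
    set V : ℕ → ℝ × (Fin k → ℝ) → ℝ≥0∞ := fun n =>
      U.indicator fun z => (‖f₀ z - ψ n z‖₊ : ℝ≥0∞) with hVdef
    have hVmeas : ∀ n, Measurable (V n) := fun n =>
      Measurable.indicator
        ((hf0sm.measurable.sub (hψtest n).1.continuous.measurable).nnnorm.coe_nnreal_ennreal)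
        hUmeas
    set DD : ℕ → ℝ → ℝ≥0∞ := fun n t => ∫⁻ y, V n (t, y) with hDDdef
    have hDDmeas : ∀ n, Measurable (DD n) := fun n => (hVmeas n).lintegral_prod_right'
    have hDDbound : ∀ n, ∫⁻ t, DD n t ≤ ∫⁻ x in Ω, (‖f₀ x - ψ n x‖₊ : ℝ≥0∞) := by
      intro n
      have h1 : (∫⁻ z, V n z) = ∫⁻ t, DD n t := by
        rw [Measure.volume_eq_prod, MeasureTheory.lintegral_prod _ (hVmeas n).aemeasurable]
      rw [← h1, ← lintegral_indicator hΩmeas]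
      refine lintegral_mono fun z => ?_
      by_cases hz : z ∈ U
      · rw [hVdef]
        simp only
        rw [Set.indicator_of_mem hz, Set.indicator_of_mem (hUsubΩ hz)]
      · rw [hVdef]
        simp only
        rw [Set.indicator_of_notMem hz]
        exact zero_le
    have hf0f : f₀ =ᵐ[volume.restrict Ω] f := by
      have h1 : Ω.indicator f =ᵐ[volume.restrict Ω] f₀ := ae_restrict_of_ae heq0
      have h2 : Ω.indicator f =ᵐ[volume.restrict Ω] f := indicator_ae_eq_restrict hΩmeas
      exact h1.symm.trans h2
    have hLconv : Tendsto (fun n => ∫⁻ x in Ω, (‖f₀ x - ψ n x‖₊ : ℝ≥0∞)) atTop (𝓝 0) := by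
      have hbound : ∀ n, (∫⁻ x in Ω, (‖f₀ x - ψ n x‖₊ : ℝ≥0∞)) ≤
          eLpNorm (fun x => f x - ψ n x) q (volume.restrict Ω) * (volume Ω) ^ (1 - 1/p) := by
        intro n
        have hcong : (∫⁻ x in Ω, (‖f₀ x - ψ n x‖₊ : ℝ≥0∞)) =
            ∫⁻ x in Ω, (‖f x - ψ n x‖₊ : ℝ≥0∞) := by
          refine lintegral_congr_ae ?_
          filter_upwards [hf0f] with x hx
          rw [hx]
        rw [hcong]
        have := l1_control (μ := volume.restrict Ω) hp1
          (hfLp.aestronglyMeasurable.sub ((hψtest n).1.continuous.aestronglyMeasurable))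
        rwa [Measure.restrict_apply_univ] at this
      have hprod : Tendsto (fun n => eLpNorm (fun x => f x - ψ n x) q (volume.restrict Ω) *
          (volume Ω) ^ (1 - 1/p)) atTop (𝓝 0) := by
        have h1 := ENNReal.Tendsto.mul_const hψf
          (Or.inr (ENNReal.rpow_ne_top_of_nonneg hexp hvol))
        rwa [zero_mul] at h1
      exact tendsto_of_tendsto_of_tendsto_of_le_of_le tendsto_const_nhds hprod
        (fun n => zero_le) hbound
    have hDDtend : Tendsto (fun n => ∫⁻ t, DD n t) atTop (𝓝 0) :=
      tendsto_of_tendsto_of_tendsto_of_le_of_le tendsto_const_nhds hLconv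
        (fun n => zero_le) hDDbound
    obtain ⟨ns, hns_mono, hns⟩ := Filter.extraction_forall_of_eventually
      (P := fun j n => ∫⁻ t, DD n t < (2⁻¹ : ℝ≥0∞) ^ j)
      (fun j => hDDtend.eventually_lt_const (ENNReal.pow_pos (by simp) j))
    have hsum_ne : (∫⁻ t, ∑' j, DD (ns j) t) ≠ ⊤ := by
      rw [lintegral_tsum (fun j => (hDDmeas (ns j)).aemeasurable)]
      refine ne_top_of_le_ne_top ?_ (ENNReal.tsum_le_tsum fun j => (hns j).le)
      rw [ENNReal.tsum_geometric, ENNReal.one_sub_inv_two]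
      simp
    have hae1 : ∀ᵐ t : ℝ, Tendsto (fun j => DD (ns j) t) atTop (𝓝 0) := by
      have hmeas : Measurable fun t => ∑' j, DD (ns j) t :=
        Measurable.ennreal_tsum fun j => hDDmeas (ns j)
      filter_upwards [ae_lt_top hmeas hsum_ne] with t htt
      exact ENNReal.tendsto_atTop_zero_of_tsum_ne_top htt.ne
    have hae2 : ∀ᵐ t : ℝ, ∀ᵐ y : Fin k → ℝ, Ω.indicator f (t, y) = f₀ (t, y) := by
      have h1 : ∀ᵐ z : ℝ × (Fin k → ℝ) ∂((volume : Measure ℝ).prod volume),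
          Ω.indicator f z = f₀ z := by
        rw [← Measure.volume_eq_prod]
        exact heq0
      exact Measure.ae_ae_of_ae_prod h1
    have hae3 : ∀ᵐ t : ℝ, Integrable (fun y => Ω.indicator f (t, y)) volume := by
      have h1 : Integrable (Ω.indicator f) ((volume : Measure ℝ).prod volume) := by
        rwa [← Measure.volume_eq_prod]
      exact h1.prod_right_ae
    have hmain : ∀ᵐ t : ℝ, t ∈ Ioo 0 b → A t = ∫ y in {y : Fin k → ℝ |
        0 < Real.sqrt (∑ i, y i ^ 2) ∧ Real.sqrt (∑ i, y i ^ 2) < h t}, f (t, y) := by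
      filter_upwards [hae1, hae2, hae3] with t h1 h2 h3 ht
      have hst_sub : ∀ y ∈ {y : Fin k → ℝ | 0 < Real.sqrt (∑ i, y i ^ 2) ∧
          Real.sqrt (∑ i, y i ^ 2) < h t}, (t, y) ∈ Ω := fun y hy => hSsubΩ t ht y hy.1 hy.2
      have hDDt : ∀ n, DD n t = ∫⁻ y in {y : Fin k → ℝ | 0 < Real.sqrt (∑ i, y i ^ 2) ∧
          Real.sqrt (∑ i, y i ^ 2) < h t}, (‖f₀ (t, y) - ψ n (t, y)‖₊ : ℝ≥0∞) := by
        intro n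
        rw [hDDdef]
        simp only
        rw [← lintegral_indicator (hSmeas t)]
        refine lintegral_congr fun y => ?_
        have hiff : (t, y) ∈ U ↔ y ∈ {y : Fin k → ℝ | 0 < Real.sqrt (∑ i, y i ^ 2) ∧
            Real.sqrt (∑ i, y i ^ 2) < h t} := by
          simp only [hUdef, Set.mem_setOf_eq]
          rw [hHeq t ⟨ht.1.le, ht.2.le⟩]
          exact ⟨fun hz => ⟨hz.2.1, hz.2.2⟩, fun hy => ⟨ht, hy.1, hy.2⟩⟩
        by_cases hy : y ∈ {y : Fin k → ℝ | 0 < Real.sqrt (∑ i, y i ^ 2) ∧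
            Real.sqrt (∑ i, y i ^ 2) < h t}
        · rw [hVdef]
          simp only
          rw [Set.indicator_of_mem (hiff.2 hy), Set.indicator_of_mem hy]
        · rw [hVdef]
          simp only
          rw [Set.indicator_of_notMem (fun hc => hy (hiff.1 hc)),
            Set.indicator_of_notMem hy]
      have hfty : Integrable (fun y => f₀ (t, y)) volume := h3.congr h2
      have hψty : ∀ n, Integrable (fun y => ψ n (t, y)) volume := fun n =>
        ((hψtest n).1.continuous.comp (continuous_const.prodMk
          continuous_id)).integrable_of_hasCompactSupport
          ((hψtest n).2.1.comp_isClosedEmbedding (isClosedEmbedding_mk_right t))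
      have hbound : ∀ n, |(∫ y in {y : Fin k → ℝ | 0 < Real.sqrt (∑ i, y i ^ 2) ∧
          Real.sqrt (∑ i, y i ^ 2) < h t}, f₀ (t, y)) -
          ∫ y in {y : Fin k → ℝ | 0 < Real.sqrt (∑ i, y i ^ 2) ∧
          Real.sqrt (∑ i, y i ^ 2) < h t}, ψ n (t, y)| ≤ (DD n t).toReal := by
        intro n
        rw [← integral_sub hfty.integrableOn (hψty n).integrableOn, ← Real.norm_eq_abs]
        calc ‖∫ y in {y : Fin k → ℝ | 0 < Real.sqrt (∑ i, y i ^ 2) ∧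
              Real.sqrt (∑ i, y i ^ 2) < h t}, (f₀ (t, y) - ψ n (t, y))‖
            ≤ (∫⁻ y in {y : Fin k → ℝ | 0 < Real.sqrt (∑ i, y i ^ 2) ∧
              Real.sqrt (∑ i, y i ^ 2) < h t},
              ENNReal.ofReal ‖f₀ (t, y) - ψ n (t, y)‖).toReal :=
              norm_integral_le_lintegral_norm _
          _ = (DD n t).toReal := by
              rw [hDDt n]
              congr 1
              exact lintegral_congr fun y => by rw [ofReal_norm_eq_enorm, enorm_eq_nnnorm]
      have htoReal : Tendsto (fun j => (DD (ns j) t).toReal) atTop (𝓝 0) := by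
        have h4 := (ENNReal.tendsto_toReal (a := 0) (by simp)).comp h1
        simpa only [Function.comp_def, ENNReal.toReal_zero] using h4
      have hconv1 : Tendsto (fun j => ∫ y in {y : Fin k → ℝ | 0 < Real.sqrt (∑ i, y i ^ 2) ∧
          Real.sqrt (∑ i, y i ^ 2) < h t}, ψ (ns j) (t, y)) atTop
          (𝓝 (∫ y in {y : Fin k → ℝ | 0 < Real.sqrt (∑ i, y i ^ 2) ∧
          Real.sqrt (∑ i, y i ^ 2) < h t}, f₀ (t, y))) := by
        rw [tendsto_iff_norm_sub_tendsto_zero]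
        refine squeeze_zero (fun j => norm_nonneg _) (fun j => ?_) htoReal
        rw [Real.norm_eq_abs, abs_sub_comm]
        exact hbound (ns j)
      have hconv2 : Tendsto (fun j => ∫ y in {y : Fin k → ℝ | 0 < Real.sqrt (∑ i, y i ^ 2) ∧
          Real.sqrt (∑ i, y i ^ 2) < h t}, ψ (ns j) (t, y)) atTop (𝓝 (A t)) := by
        have h4 := (hΦA t ⟨ht.1.le, ht.2.le⟩).comp hns_mono.tendsto_atTop
        exact h4.congr fun j => (hSnΦ (ns j) t ht).symm
      have hfeq : ∫ y in {y : Fin k → ℝ | 0 < Real.sqrt (∑ i, y i ^ 2) ∧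
          Real.sqrt (∑ i, y i ^ 2) < h t}, f (t, y) =
          ∫ y in {y : Fin k → ℝ | 0 < Real.sqrt (∑ i, y i ^ 2) ∧
          Real.sqrt (∑ i, y i ^ 2) < h t}, f₀ (t, y) := by
        refine setIntegral_congr_ae (hSmeas t) ?_
        filter_upwards [h2] with y hy hyst
        rw [← hy, Set.indicator_of_mem (hst_sub y hyst)]
      rw [hfeq]
      exact tendsto_nhds_unique hconv2 hconv1
    have hres := ae_restrict_of_ae (μ := volume) (s := Ioo 0 b) hmain
    filter_upwards [hres, ae_restrict_mem measurableSet_Ioo] with t h1 h2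
    exact h1 h2
  · have := hAcont.tendsto 0
    rw [hA0] at this
    exact this.mono_left nhdsWithin_le_nhds
end
end

section
/- Let 1 < p < ∞ and m > 0. Let Ω ⊂ ℝ² be the domain whose boundary is described by the curves y = x^m and y = −x^m for 0 < x < 1 and y² + (x−1)² = 1 for 1 < x < 2. Let u = (u₁, u₂) ∈ (W^{1,p}_0(Ω))². Define, for a.e. x ∈ (0,1), g(x) := ∫_{−x^m}^{x^m} div u(x,y) dy and A(x) := ∫_{−x^m}^{x^m} u₁(x,y) dy. Then for a.e. x ∈ (0,1) it holds that A(x) = ∫_0^x g(s) ds. -/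
open MeasureTheory Real Set Filter Topology
open scoped ENNReal NNReal

noncomputable section

/-- The two-dimensional cusp domain `Ω_m`: the bounded domain whose boundary consists of the
curves `y = x^m`, `y = -x^m` for `0 < x < 1` and the circular arc `y² + (x-1)² = 1` for
`1 < x < 2`. -/
def cuspDomain (m : ℝ) : Set (ℝ × ℝ) :=
  {q | (0 < q.1 ∧ q.1 ≤ 1 ∧ |q.2| < q.1 ^ m) ∨ (1 < q.1 ∧ q.2 ^ 2 + (q.1 - 1) ^ 2 < 1)}


section Aux

/-- The part of the cusp domain over `0 < x < 1`. -/
def cuspCore (m : ℝ) : Set (ℝ × ℝ) :=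
  {z | z.1 ∈ Ioo (0:ℝ) 1 ∧ z.2 ∈ Ioo (-(z.1 ^ m)) (z.1 ^ m)}

variable {m x y : ℝ}

lemma cusp_subset (hm : 0 < m) : cuspDomain m ⊆ Ioo (0:ℝ) 2 ×ˢ Ioo (-1:ℝ) 1 := by
  rintro ⟨x, y⟩ (⟨hx, hx1, hy⟩ | ⟨hx, hc⟩)
  · have h1 : x ^ m ≤ 1 := Real.rpow_le_one hx.le hx1 hm.le
    have := abs_lt.mp (lt_of_lt_of_le hy h1)
    exact ⟨⟨hx, by linarith⟩, this⟩
  · have h2 : y ^ 2 < 1 := by nlinarith [sq_nonneg (x - 1)]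
    have h1 : (x - 1) ^ 2 < 1 := by nlinarith [sq_nonneg y]
    constructor
    · constructor <;> nlinarith
    · constructor <;> nlinarith

lemma not_mem_cusp (hx1 : x ≤ 1) (hy : x ^ m ≤ |y|) : (x, y) ∉ cuspDomain m := by
  rintro (⟨_, _, hy'⟩ | ⟨hx, _⟩) <;> [linarith; linarith]

lemma meas_rpow (hm : 0 < m) : Continuous fun x : ℝ => x ^ m :=
  Real.continuous_rpow_const hm.le

lemma measurableSet_cusp (hm : 0 < m) : MeasurableSet (cuspDomain m) := by
  apply MeasurableSet.union
  · exact (measurableSet_lt measurable_const measurable_fst).inter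
      ((measurableSet_le measurable_fst measurable_const).inter
        (measurableSet_lt measurable_snd.abs
          (((meas_rpow hm).measurable).comp measurable_fst)))
  · exact (measurableSet_lt measurable_const measurable_fst).inter
      (measurableSet_lt ((measurable_snd.pow_const 2).add
        (((measurable_fst.sub measurable_const)).pow_const 2)) measurable_const)

lemma measurableSet_core (hm : 0 < m) : MeasurableSet (cuspCore m) := by
  have h : Measurable fun z : ℝ × ℝ => z.1 ^ m := ((meas_rpow hm).measurable).comp measurable_fst
  exact ((measurableSet_lt measurable_const measurable_fst).inter
      (measurableSet_lt measurable_fst measurable_const)).inter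
    ((measurableSet_lt h.neg measurable_snd).inter (measurableSet_lt measurable_snd h))

lemma core_subset_cusp : cuspCore m ⊆ cuspDomain m := by
  rintro ⟨x, y⟩ ⟨hx, hy⟩
  exact Or.inl ⟨hx.1, hx.2.le, abs_lt.mpr ⟨by simpa using hy.1, hy.2⟩⟩

lemma cusp_volume (hm : 0 < m) : volume (cuspDomain m) < ⊤ := by
  refine lt_of_le_of_lt (measure_mono (cusp_subset hm)) ?_
  rw [show (volume : Measure (ℝ×ℝ)) = (volume : Measure ℝ).prod volume from rfl,
    Measure.prod_prod, Real.volume_Ioo, Real.volume_Ioo]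
  exact ENNReal.mul_lt_top (by simp) (by simp)


variable {Ω : Set (ℝ × ℝ)} {φ : ℝ × ℝ → ℝ} {z : ℝ × ℝ}

lemma TestFun.eq_zero (hφ : TestFun Ω φ) (hz : z ∉ Ω) : φ z = 0 :=
  image_eq_zero_of_notMem_tsupport fun h => hz (hφ.2.2 h)

lemma TestFun.fderiv_eq_zero (hφ : TestFun Ω φ) (hz : z ∉ Ω) : fderiv ℝ φ z = 0 := by
  have hmem : (tsupport φ)ᶜ ∈ 𝓝 z :=
    (isClosed_tsupport φ).isOpen_compl.mem_nhds fun h => hz (hφ.2.2 h)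
  have h : φ =ᶠ[𝓝 z] fun _ => (0:ℝ) :=
    Filter.eventuallyEq_of_mem hmem fun w hw => image_eq_zero_of_notMem_tsupport hw
  rw [h.fderiv_eq, fderiv_fun_const]
  rfl

lemma TestFun.contFderiv (hφ : TestFun Ω φ) (v : ℝ × ℝ) :
    Continuous fun z => fderiv ℝ φ z v :=
  (ContinuousLinearMap.apply ℝ ℝ v).continuous.comp (hφ.1.continuous_fderiv (by simp))

lemma TestFun.hcsFderiv (hφ : TestFun Ω φ) (v : ℝ × ℝ) :
    HasCompactSupport fun z => fderiv ℝ φ z v := by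
  have := (hφ.2.1.fderiv ℝ).comp_left (g := fun L : (ℝ × ℝ) →L[ℝ] ℝ => L v) rfl
  exact this


/-- slice integral -/
def sliceInt (m : ℝ) (f : ℝ × ℝ → ℝ) : ℝ → ℝ :=
  fun x => ∫ y in Ioo (-(x ^ m)) (x ^ m), f (x, y)

variable {m : ℝ} {f : ℝ × ℝ → ℝ}

lemma indicator_core_apply_mem {M : Type*} [Zero M] (f : ℝ × ℝ → M) {x : ℝ}
    (hx : x ∈ Ioo (0:ℝ) 1) :
    (fun y => (cuspCore m).indicator f (x, y))
      = (Ioo (-(x ^ m)) (x ^ m)).indicator (fun y => f (x, y)) := by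
  funext y
  by_cases hy : y ∈ Ioo (-(x ^ m)) (x ^ m)
  · exact (Set.indicator_of_mem (show (x,y) ∈ cuspCore m from ⟨hx, hy⟩) f).trans
      (Set.indicator_of_mem hy (fun y => f (x, y))).symm
  · exact (Set.indicator_of_notMem (show (x,y) ∉ cuspCore m from fun h => hy h.2) f).trans
      (Set.indicator_of_notMem hy (fun y => f (x, y))).symm

lemma indicator_core_apply_not_mem {M : Type*} [Zero M] (f : ℝ × ℝ → M) {x : ℝ}
    (hx : x ∉ Ioo (0:ℝ) 1) :
    (fun y => (cuspCore m).indicator f (x, y)) = fun _ => (0 : M) := by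
  funext y; exact indicator_of_notMem (fun h => hx h.1) _

lemma aesm_indicator_core (hm : 0 < m)
    (hf : AEStronglyMeasurable f (volume.restrict (cuspDomain m))) :
    AEStronglyMeasurable ((cuspCore m).indicator f) volume := by
  obtain ⟨g, hg, hfg⟩ := hf
  refine ⟨(cuspCore m).indicator g, hg.indicator (measurableSet_core hm), ?_⟩
  have hfg' := (ae_restrict_iff' (measurableSet_cusp hm)).mp hfg
  filter_upwards [hfg'] with z hz
  by_cases hzc : z ∈ cuspCore m
  · rw [indicator_of_mem hzc, indicator_of_mem hzc, hz (core_subset_cusp hzc)]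
  · rw [indicator_of_notMem hzc, indicator_of_notMem hzc]

lemma lintegral_core (hm : 0 < m) (F : ℝ × ℝ → ℝ≥0∞)
    (hF : AEMeasurable ((cuspCore m).indicator F) volume) :
    ∫⁻ z in cuspCore m, F z
      = ∫⁻ x in Ioo (0:ℝ) 1, ∫⁻ y in Ioo (-(x ^ m)) (x ^ m), F (x, y) := by
  rw [← lintegral_indicator (measurableSet_core hm)]
  rw [show (volume : Measure (ℝ × ℝ)) = (volume : Measure ℝ).prod volume from rfl] at hF ⊢
  rw [MeasureTheory.lintegral_prod _ hF]
  rw [← lintegral_indicator measurableSet_Ioo]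
  congr 1
  funext x
  by_cases hx : x ∈ Ioo (0:ℝ) 1
  · rw [indicator_of_mem hx, indicator_core_apply_mem F hx,
      lintegral_indicator measurableSet_Ioo]
  · rw [indicator_of_notMem hx, indicator_core_apply_not_mem F hx, lintegral_zero]

lemma sliceInt_bound (hm : 0 < m)
    (hf : AEStronglyMeasurable f (volume.restrict (cuspDomain m))) :
    ∫⁻ x in Ioo (0:ℝ) 1, ‖sliceInt m f x‖₊
      ≤ eLpNorm f 1 (volume.restrict (cuspDomain m)) := by
  have h1 : ∀ x, (‖sliceInt m f x‖₊ : ℝ≥0∞)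
      ≤ ∫⁻ y in Ioo (-(x ^ m)) (x ^ m), ‖f (x, y)‖₊ := fun x =>
    enorm_integral_le_lintegral_enorm _
  have hind : (cuspCore m).indicator (fun z => (‖f z‖₊ : ℝ≥0∞))
      = fun z => (‖(cuspCore m).indicator f z‖₊ : ℝ≥0∞) := by
    funext z
    by_cases hz : z ∈ cuspCore m <;> simp [indicator_of_mem, indicator_of_notMem, hz]
  calc ∫⁻ x in Ioo (0:ℝ) 1, ‖sliceInt m f x‖₊
      ≤ ∫⁻ x in Ioo (0:ℝ) 1, ∫⁻ y in Ioo (-(x ^ m)) (x ^ m), ‖f (x, y)‖₊ :=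
        lintegral_mono fun x => h1 x
    _ = ∫⁻ z in cuspCore m, ‖f z‖₊ := by
        rw [lintegral_core hm (fun z => (‖f z‖₊ : ℝ≥0∞)) (by
          rw [hind]; exact (aesm_indicator_core hm hf).aemeasurable.enorm)]
    _ ≤ ∫⁻ z in cuspDomain m, ‖f z‖₊ := lintegral_mono_set core_subset_cusp
    _ = eLpNorm f 1 (volume.restrict (cuspDomain m)) :=
        by rw [eLpNorm_one_eq_lintegral_enorm]; rfl

lemma aesm_sliceInt (hm : 0 < m)
    (hf : AEStronglyMeasurable f (volume.restrict (cuspDomain m))) :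
    AEStronglyMeasurable (sliceInt m f) (volume.restrict (Ioo (0:ℝ) 1)) := by
  have hF : AEStronglyMeasurable ((cuspCore m).indicator f)
      ((volume : Measure ℝ).prod volume) := by
    rw [← show (volume : Measure (ℝ × ℝ)) = (volume : Measure ℝ).prod volume from rfl]
    exact aesm_indicator_core hm hf
  have h := hF.integral_prod_right'
  refine (h.restrict).congr ?_
  filter_upwards [ae_restrict_mem measurableSet_Ioo] with x hx
  rw [indicator_core_apply_mem f hx, integral_indicator measurableSet_Ioo]
  rfl

lemma integrableOn_sliceInt (hm : 0 < m)
    (hf : IntegrableOn f (cuspDomain m) volume) :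
    IntegrableOn (sliceInt m f) (Ioo (0:ℝ) 1) volume := by
  refine ⟨aesm_sliceInt hm hf.aestronglyMeasurable, ?_⟩
  rw [hasFiniteIntegral_def]
  refine lt_of_le_of_lt (sliceInt_bound hm hf.aestronglyMeasurable) ?_
  rw [eLpNorm_one_eq_lintegral_enorm]
  exact hf.2

lemma ae_slice_integrable (hm : 0 < m)
    (hf : IntegrableOn f (cuspDomain m) volume) :
    ∀ᵐ x ∂(volume.restrict (Ioo (0:ℝ) 1)),
      IntegrableOn (fun y => f (x, y)) (Ioo (-(x ^ m)) (x ^ m)) volume := by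
  have hR : IntegrableOn f (cuspCore m) volume := hf.mono_set core_subset_cusp
  have hind : Integrable ((cuspCore m).indicator f)
      ((volume : Measure ℝ).prod volume) := by
    rw [← show (volume : Measure (ℝ × ℝ)) = (volume : Measure ℝ).prod volume from rfl]
    exact (integrable_indicator_iff (measurableSet_core hm)).mpr hR
  have h := hind.prod_right_ae
  rw [ae_restrict_iff' measurableSet_Ioo]
  filter_upwards [h] with x hx hmem
  rw [← integrable_indicator_iff measurableSet_Ioo, ← indicator_core_apply_mem f hmem]
  exact hx


/-- Shrinking the `y`-integration domain for a function vanishing outside the cusp. -/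
lemma shrink (hm : 0 < m) {F : ℝ × ℝ → ℝ}
    (hF : ∀ s y : ℝ, s ≤ 1 → s ^ m ≤ |y| → F (s, y) = 0) {s : ℝ}
    (hs0 : 0 ≤ s) (hs1 : s ≤ 1) :
    (∫ y in Ioo (-(s ^ m)) (s ^ m), F (s, y)) = ∫ y in Ioo (-1 : ℝ) 1, F (s, y) := by
  have hsm : s ^ m ≤ 1 := Real.rpow_le_one hs0 hs1 hm.le
  have hind : (Ioo (-(s ^ m)) (s ^ m)).indicator (fun y' => F (s, y'))
      = (Ioo (-1 : ℝ) 1).indicator (fun y' => F (s, y')) := by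
    funext y
    by_cases hy : y ∈ Ioo (-(s ^ m)) (s ^ m)
    · have hy1 : y ∈ Ioo (-1:ℝ) 1 := ⟨by linarith [hy.1], by linarith [hy.2]⟩
      exact (Set.indicator_of_mem hy (fun y' => F (s, y'))).trans
        (Set.indicator_of_mem hy1 (fun y' => F (s, y'))).symm
    · refine (Set.indicator_of_notMem hy (fun y' => F (s, y'))).trans ?_
      by_cases hy1 : y ∈ Ioo (-1 : ℝ) 1
      · refine ((Set.indicator_of_mem hy1 (fun y' => F (s, y'))).trans ?_).symm
        have habs : s ^ m ≤ |y| := by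
          rcases not_and_or.mp (fun h => hy ⟨h.1, h.2⟩) with h | h
          · push_neg at h; rw [abs_of_nonpos (by nlinarith [Real.rpow_nonneg hs0 m])]
            linarith
          · push_neg at h
            exact le_trans h (le_abs_self y)
        exact hF s y hs1 habs
      · exact (Set.indicator_of_notMem hy1 (fun y' => F (s, y'))).symm
  rw [← integral_indicator measurableSet_Ioo, hind, integral_indicator measurableSet_Ioo]

lemma smooth_identity (hm : 0 < m) {ψ₁ ψ₂ : ℝ × ℝ → ℝ}
    (hψ₁ : TestFun (cuspDomain m) ψ₁) (hψ₂ : TestFun (cuspDomain m) ψ₂)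
    {x : ℝ} (hx : x ∈ Ioo (0:ℝ) 1) :
    sliceInt m ψ₁ x
      = ∫ s in (0:ℝ)..x,
          sliceInt m (fun z => fderiv ℝ ψ₁ z (1, 0) + fderiv ℝ ψ₂ z (0, 1)) s := by
  set D₁ : ℝ × ℝ → ℝ := fun z => fderiv ℝ ψ₁ z ((1:ℝ), (0:ℝ)) with hD₁
  set D₂ : ℝ × ℝ → ℝ := fun z => fderiv ℝ ψ₂ z ((0:ℝ), (1:ℝ)) with hD₂
  -- vanishing facts
  have hψ₁0 : ∀ s y : ℝ, s ≤ 1 → s ^ m ≤ |y| → ψ₁ (s, y) = 0 := fun s y h1 h2 =>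
    hψ₁.eq_zero (not_mem_cusp h1 h2)
  have hD0 : ∀ s y : ℝ, s ≤ 1 → s ^ m ≤ |y| → (fun z => D₁ z + D₂ z) (s, y) = 0 := by
    intro s y h1 h2
    have e1 : fderiv ℝ ψ₁ (s, y) = 0 := hψ₁.fderiv_eq_zero (not_mem_cusp h1 h2)
    have e2 : fderiv ℝ ψ₂ (s, y) = 0 := hψ₂.fderiv_eq_zero (not_mem_cusp h1 h2)
    simp [hD₁, hD₂, e1, e2]
  -- derivative facts
  have hd1 : ∀ (s y : ℝ), HasDerivAt (fun t => ψ₁ (t, y)) (D₁ (s, y)) s := by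
    intro s y
    have h1 : HasDerivAt (fun t : ℝ => (t, y)) ((1:ℝ), (0:ℝ)) s :=
      (hasDerivAt_id s).prodMk (hasDerivAt_const s y)
    exact ((hψ₁.1.differentiable (by simp) (s, y)).hasFDerivAt).comp_hasDerivAt s h1
  have hd2 : ∀ (s y : ℝ), HasDerivAt (fun t => ψ₂ (s, t)) (D₂ (s, y)) y := by
    intro s y
    have h1 : HasDerivAt (fun t : ℝ => (s, t)) ((0:ℝ), (1:ℝ)) y :=
      (hasDerivAt_const y s).prodMk (hasDerivAt_id y)
    exact ((hψ₂.1.differentiable (by simp) (s, y)).hasFDerivAt).comp_hasDerivAt y h1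
  -- continuity
  have hc1 : Continuous D₁ := hψ₁.contFderiv _
  have hc2 : Continuous D₂ := hψ₂.contFderiv _
  -- Step 1: enlarge domain
  have step1 : sliceInt m ψ₁ x = ∫ y in Ioo (-1:ℝ) 1, ψ₁ (x, y) :=
    shrink hm hψ₁0 hx.1.le hx.2.le
  -- Step 2: FTC in the first variable
  have step2 : ∀ y : ℝ, ψ₁ (x, y) = ∫ s in (0:ℝ)..x, D₁ (s, y) := by
    intro y
    have h0 : ψ₁ (0, y) = 0 := by
      refine hψ₁.eq_zero (not_mem_cusp (by norm_num) ?_)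
      rw [Real.zero_rpow hm.ne']
      exact abs_nonneg y
    rw [intervalIntegral.integral_eq_sub_of_hasDerivAt (fun s _ => hd1 s y)
      ((hc1.comp (continuous_id.prodMk continuous_const)).intervalIntegrable 0 x), h0, sub_zero]
  -- Step 3: Fubini
  have hswap : (∫ y in Ioo (-1:ℝ) 1, ∫ s in Ioc (0:ℝ) x, D₁ (s, y))
      = ∫ s in Ioc (0:ℝ) x, ∫ y in Ioo (-1:ℝ) 1, D₁ (s, y) := by
    have hint : Integrable (Function.uncurry fun y s => D₁ (s, y))
        ((volume.restrict (Ioo (-1:ℝ) 1)).prod (volume.restrict (Ioc (0:ℝ) x))) := by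
      rw [Measure.prod_restrict]
      refine (Continuous.integrable_of_hasCompactSupport (hc1.comp continuous_swap)
        ?_).restrict
      exact (hψ₁.hcsFderiv _).comp_homeomorph (Homeomorph.prodComm ℝ ℝ)
    exact MeasureTheory.integral_integral_swap hint
  -- Step 4: the second component integrates to zero
  have step4 : ∀ s : ℝ, s ∈ Ioc (0:ℝ) x → (∫ y in Ioo (-1:ℝ) 1, D₂ (s, y)) = 0 := by
    intro s hs
    have hs1 : s ≤ 1 := le_trans hs.2 hx.2.le
    have hz : ∀ y : ℝ, s ^ m ≤ |y| → ψ₂ (s, y) = 0 := fun y h =>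
      hψ₂.eq_zero (not_mem_cusp hs1 h)
    have hsm : s ^ m ≤ 1 := Real.rpow_le_one hs.1.le hs1 hm.le
    rw [← integral_Ioc_eq_integral_Ioo, ← intervalIntegral.integral_of_le (by norm_num : (-1:ℝ) ≤ 1)]
    rw [intervalIntegral.integral_eq_sub_of_hasDerivAt (fun y _ => hd2 s y)
      ((hc2.comp (continuous_const.prodMk continuous_id)).intervalIntegrable (-1) 1)]
    rw [hz 1 (by rw [abs_one]; exact hsm), hz (-1) (by rw [abs_neg, abs_one]; exact hsm), sub_zero]
  -- integrability of slices in y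
  have hIy : ∀ (F : ℝ × ℝ → ℝ), Continuous F → ∀ s : ℝ,
      IntegrableOn (fun y' => F (s, y')) (Ioo (-1:ℝ) 1) volume := by
    intro F hF s
    exact (((hF.comp (continuous_const.prodMk continuous_id)).continuousOn).integrableOn_compact
      isCompact_Icc).mono_set Ioo_subset_Icc_self
  -- combine
  rw [step1]
  calc (∫ y in Ioo (-1:ℝ) 1, ψ₁ (x, y))
      = ∫ y in Ioo (-1:ℝ) 1, ∫ s in Ioc (0:ℝ) x, D₁ (s, y) := by
        refine integral_congr_ae (Filter.Eventually.of_forall fun y => ?_)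
        show ψ₁ (x, y) = ∫ s in Ioc (0:ℝ) x, D₁ (s, y)
        rw [step2 y, intervalIntegral.integral_of_le hx.1.le]
    _ = ∫ s in Ioc (0:ℝ) x, ∫ y in Ioo (-1:ℝ) 1, D₁ (s, y) := hswap
    _ = ∫ s in Ioc (0:ℝ) x, ∫ y in Ioo (-1:ℝ) 1, (D₁ (s, y) + D₂ (s, y)) := by
        refine setIntegral_congr_fun measurableSet_Ioc (fun s hs => ?_)
        rw [integral_add (hIy D₁ hc1 s) (hIy D₂ hc2 s), step4 s hs, add_zero]
    _ = ∫ s in Ioc (0:ℝ) x, sliceInt m (fun z => D₁ z + D₂ z) s := by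
        refine setIntegral_congr_fun measurableSet_Ioc (fun s hs => ?_)
        exact (shrink (F := fun z => D₁ z + D₂ z) hm hD0 hs.1.le (le_trans hs.2 hx.2.le)).symm
    _ = ∫ s in (0:ℝ)..x, sliceInt m (fun z => D₁ z + D₂ z) s :=
        (intervalIntegral.integral_of_le hx.1.le).symm


lemma eLpNorm_one_tendsto {α : Type*} [MeasurableSpace α] {μ : Measure α} [IsFiniteMeasure μ]
    {p : ℝ} (hp1 : 1 < p) {h : ℕ → α → ℝ}
    (hmeas : ∀ n, AEStronglyMeasurable (h n) μ)
    (htend : Tendsto (fun n => eLpNorm (h n) (ENNReal.ofReal p) μ) atTop (𝓝 0)) :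
    Tendsto (fun n => eLpNorm (h n) 1 μ) atTop (𝓝 0) := by
  have hp : (1 : ℝ≥0∞) ≤ ENNReal.ofReal p := by
    rw [show (1:ℝ≥0∞) = ENNReal.ofReal 1 by simp]
    exact ENNReal.ofReal_le_ofReal hp1.le
  set r : ℝ := 1 / (1:ℝ≥0∞).toReal - 1 / (ENNReal.ofReal p).toReal with hr
  have hr0 : 0 ≤ r := by
    rw [hr, ENNReal.toReal_one, ENNReal.toReal_ofReal (by linarith)]
    have h1 : 1 / p ≤ 1 := by rw [div_le_one (by linarith)]; linarith
    simpa using h1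
  set C : ℝ≥0∞ := μ Set.univ ^ r with hC
  have hCne : C ≠ ⊤ := ENNReal.rpow_ne_top_of_nonneg hr0 (measure_ne_top μ _)
  have hbound : ∀ n, eLpNorm (h n) 1 μ ≤ eLpNorm (h n) (ENNReal.ofReal p) μ * C :=
    fun n => eLpNorm_le_eLpNorm_mul_rpow_measure_univ hp (hmeas n)
  have hmul : Tendsto (fun n => eLpNorm (h n) (ENNReal.ofReal p) μ * C) atTop (𝓝 0) := by
    have := ENNReal.Tendsto.mul_const htend (Or.inr hCne)
    simpa using this
  exact tendsto_of_tendsto_of_tendsto_of_le_of_le tendsto_const_nhds hmul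
    (fun n => zero_le) hbound


end Aux

/-- For `u = (u₁,u₂) ∈ (W^{1,p}_0(Ω_m))²`, with
`g(x) = ∫_{-x^m}^{x^m} div u(x,y) dy` and `A(x) = ∫_{-x^m}^{x^m} u₁(x,y) dy`, one has
`A(x) = ∫_0^x g(s) ds` for a.e. `x ∈ (0,1)`. -/
theorem statement2 (p m : ℝ) (hp1 : 1 < p) (hm : 0 < m)
    (u₁ u₂ : ℝ × ℝ → ℝ) (du₁ du₂ : ℝ × ℝ → (ℝ × ℝ) →L[ℝ] ℝ)
    (hu₁ : MemW1p0 p (cuspDomain m) u₁ du₁) (hu₂ : MemW1p0 p (cuspDomain m) u₂ du₂) :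
    ∀ᵐ x ∂(volume.restrict (Ioo (0 : ℝ) 1)),
      (∫ y in Ioo (-(x ^ m)) (x ^ m), u₁ (x, y))
        = ∫ s in (0 : ℝ)..x,
            (∫ y in Ioo (-(s ^ m)) (s ^ m), (du₁ (s, y) (1, 0) + du₂ (s, y) (0, 1))) := by
  haveI hfin : IsFiniteMeasure (volume.restrict (cuspDomain m)) :=
    ⟨by rw [Measure.restrict_apply_univ]; exact cusp_volume hm⟩
  have hple : (1 : ℝ≥0∞) ≤ ENNReal.ofReal p := by
    rw [show (1:ℝ≥0∞) = ENNReal.ofReal 1 by simp]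
    exact ENNReal.ofReal_le_ofReal hp1.le
  obtain ⟨hu₁p, hdu₁p, -, ψ, hψ, hψ0, hψd⟩ := hu₁
  obtain ⟨hu₂p, hdu₂p, -, χ, hχ, hχ0, hχd⟩ := hu₂
  set Ω := cuspDomain m with hΩ
  set D : ℝ × ℝ → ℝ := fun z => du₁ z (1, 0) + du₂ z (0, 1) with hD
  set Dn : ℕ → ℝ × ℝ → ℝ :=
    fun n z => fderiv ℝ (ψ n) z (1, 0) + fderiv ℝ (χ n) z (0, 1) with hDn
  -- basic integrability and measurability
  have hu₁int : IntegrableOn u₁ Ω volume := hu₁p.integrable hple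
  have hu₁sm : AEStronglyMeasurable u₁ (volume.restrict Ω) := hu₁p.aestronglyMeasurable
  have hDmem : MemLp D (ENNReal.ofReal p) (volume.restrict Ω) :=
    (hdu₁p (1, 0)).add (hdu₂p (0, 1))
  have hDint : IntegrableOn D Ω volume := hDmem.integrable hple
  have hDsm : AEStronglyMeasurable D (volume.restrict Ω) := hDmem.aestronglyMeasurable
  have hψcont : ∀ n, Continuous (ψ n) := fun n => (hψ n).1.continuous
  have hDncont : ∀ n, Continuous (Dn n) := by
    intro n
    have h1 : Continuous fun z => fderiv ℝ (ψ n) z ((1:ℝ), (0:ℝ)) :=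
      (ContinuousLinearMap.apply ℝ ℝ ((1:ℝ), (0:ℝ))).continuous.comp
        ((hψ n).1.continuous_fderiv (by simp))
    have h2 : Continuous fun z => fderiv ℝ (χ n) z ((0:ℝ), (1:ℝ)) :=
      (ContinuousLinearMap.apply ℝ ℝ ((0:ℝ), (1:ℝ))).continuous.comp
        ((hχ n).1.continuous_fderiv (by simp))
    exact h1.add h2
  have hDnint : ∀ n, IntegrableOn (Dn n) Ω volume := by
    intro n
    have h1 : HasCompactSupport (Dn n) := by
      have a1 := ((hψ n).2.1.fderiv ℝ).comp_left
        (g := fun L : (ℝ × ℝ) →L[ℝ] ℝ => L ((1:ℝ), (0:ℝ))) rfl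
      have a2 := ((hχ n).2.1.fderiv ℝ).comp_left
        (g := fun L : (ℝ × ℝ) →L[ℝ] ℝ => L ((0:ℝ), (1:ℝ))) rfl
      exact a1.add a2
    exact ((hDncont n).integrable_of_hasCompactSupport h1).integrableOn
  -- L¹ convergence of the zero-order approximations
  have hL1 : Tendsto (fun n => eLpNorm (fun z => u₁ z - ψ n z) 1 (volume.restrict Ω))
      atTop (𝓝 0) :=
    eLpNorm_one_tendsto hp1 (fun n => hu₁sm.sub (hψcont n).aestronglyMeasurable) hψ0
  -- L¹ convergence of the divergences
  have hL2 : Tendsto (fun n => eLpNorm (fun z => D z - Dn n z) 1 (volume.restrict Ω))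
      atTop (𝓝 0) := by
    refine eLpNorm_one_tendsto hp1
      (fun n => hDsm.sub (hDncont n).aestronglyMeasurable) ?_
    have hb : ∀ n, eLpNorm (fun z => D z - Dn n z) (ENNReal.ofReal p) (volume.restrict Ω)
        ≤ eLpNorm (fun z => du₁ z (1, 0) - fderiv ℝ (ψ n) z (1, 0)) (ENNReal.ofReal p)
            (volume.restrict Ω)
          + eLpNorm (fun z => du₂ z (0, 1) - fderiv ℝ (χ n) z (0, 1)) (ENNReal.ofReal p)
            (volume.restrict Ω) := by
      intro n
      have heq : (fun z => D z - Dn n z)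
          = (fun z => du₁ z (1, 0) - fderiv ℝ (ψ n) z (1, 0))
            + (fun z => du₂ z (0, 1) - fderiv ℝ (χ n) z (0, 1)) := by
        funext z; simp [hD, hDn]; ring
      rw [heq]
      refine eLpNorm_add_le ?_ ?_ hple
      · exact (hdu₁p (1, 0)).aestronglyMeasurable.sub
          (((ContinuousLinearMap.apply ℝ ℝ ((1:ℝ), (0:ℝ))).continuous.comp
            ((hψ n).1.continuous_fderiv (by simp))).aestronglyMeasurable)
      · exact (hdu₂p (0, 1)).aestronglyMeasurable.sub
          (((ContinuousLinearMap.apply ℝ ℝ ((0:ℝ), (1:ℝ))).continuous.comp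
            ((hχ n).1.continuous_fderiv (by simp))).aestronglyMeasurable)
    have hsum : Tendsto (fun n =>
        eLpNorm (fun z => du₁ z (1, 0) - fderiv ℝ (ψ n) z (1, 0)) (ENNReal.ofReal p)
          (volume.restrict Ω)
        + eLpNorm (fun z => du₂ z (0, 1) - fderiv ℝ (χ n) z (0, 1)) (ENNReal.ofReal p)
          (volume.restrict Ω)) atTop (𝓝 0) := by
      have := (hψd (1, 0)).add (hχd (0, 1))
      simpa using this
    exact tendsto_of_tendsto_of_tendsto_of_le_of_le tendsto_const_nhds hsum
      (fun n => zero_le) hb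
  -- convergence of slice integrals of u₁ in L¹ of (0,1)
  have hslice_int_ψ : ∀ n (x : ℝ),
      IntegrableOn (fun y => ψ n (x, y)) (Ioo (-(x ^ m)) (x ^ m)) volume := by
    intro n x
    exact ((((hψcont n).comp (continuous_const.prodMk continuous_id)).continuousOn).integrableOn_compact
      isCompact_Icc).mono_set Ioo_subset_Icc_self
  have hkey : ∀ n, eLpNorm (sliceInt m (ψ n) - sliceInt m u₁) 1 (volume.restrict (Ioo (0:ℝ) 1))
      ≤ eLpNorm (fun z => u₁ z - ψ n z) 1 (volume.restrict Ω) := by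
    intro n
    rw [eLpNorm_one_eq_lintegral_enorm]
    have hae : ∀ᵐ x ∂(volume.restrict (Ioo (0:ℝ) 1)),
        (‖(sliceInt m (ψ n) - sliceInt m u₁) x‖₊ : ℝ≥0∞)
          = ‖sliceInt m (fun z => ψ n z - u₁ z) x‖₊ := by
      filter_upwards [ae_slice_integrable hm hu₁int] with x hx
      have : sliceInt m (fun z => ψ n z - u₁ z) x = sliceInt m (ψ n) x - sliceInt m u₁ x := by
        simpa [sliceInt] using integral_sub (hslice_int_ψ n x) hx
      rw [this]
      rfl
    refine (lintegral_congr_ae hae).trans_le ?_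
    calc ∫⁻ x in Ioo (0:ℝ) 1, ‖sliceInt m (fun z => ψ n z - u₁ z) x‖₊
        ≤ eLpNorm (fun z => ψ n z - u₁ z) 1 (volume.restrict Ω) :=
          sliceInt_bound hm ((hψcont n).aestronglyMeasurable.sub hu₁sm)
      _ = eLpNorm (fun z => u₁ z - ψ n z) 1 (volume.restrict Ω) := by
          rw [show (fun z => ψ n z - u₁ z) = -(fun z => u₁ z - ψ n z) by funext z; simp]
          exact eLpNorm_neg _ _ _
  have hAtend : Tendsto (fun n => eLpNorm (sliceInt m (ψ n) - sliceInt m u₁) 1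
      (volume.restrict (Ioo (0:ℝ) 1))) atTop (𝓝 0) :=
    tendsto_of_tendsto_of_tendsto_of_le_of_le tendsto_const_nhds hL1
      (fun n => zero_le) hkey
  have hmeasIn : TendstoInMeasure (volume.restrict (Ioo (0:ℝ) 1))
      (fun n => sliceInt m (ψ n)) atTop (sliceInt m u₁) :=
    tendstoInMeasure_of_tendsto_eLpNorm one_ne_zero
      (fun n => aesm_sliceInt hm (hψcont n).aestronglyMeasurable)
      (aesm_sliceInt hm hu₁sm) hAtend
  obtain ⟨ns, hns_mono, hns⟩ := hmeasIn.exists_seq_tendsto_ae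
  -- uniform convergence of the primitive of g
  have hg_int : IntegrableOn (sliceInt m D) (Ioo (0:ℝ) 1) volume :=
    integrableOn_sliceInt hm hDint
  have hgn_int : ∀ n, IntegrableOn (sliceInt m (Dn n)) (Ioo (0:ℝ) 1) volume :=
    fun n => integrableOn_sliceInt hm (hDnint n)
  have hgbound : ∀ n, ∫⁻ s in Ioo (0:ℝ) 1, ‖sliceInt m D s - sliceInt m (Dn n) s‖₊
      ≤ eLpNorm (fun z => D z - Dn n z) 1 (volume.restrict Ω) := by
    intro n
    have hslice_int_Dn : ∀ (x : ℝ),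
        IntegrableOn (fun y => Dn n (x, y)) (Ioo (-(x ^ m)) (x ^ m)) volume := fun x =>
      ((((hDncont n).comp (continuous_const.prodMk continuous_id)).continuousOn).integrableOn_compact
        isCompact_Icc).mono_set Ioo_subset_Icc_self
    have hae : ∀ᵐ s ∂(volume.restrict (Ioo (0:ℝ) 1)),
        (‖sliceInt m D s - sliceInt m (Dn n) s‖₊ : ℝ≥0∞)
          = ‖sliceInt m (fun z => D z - Dn n z) s‖₊ := by
      filter_upwards [ae_slice_integrable hm hDint] with s hs
      have : sliceInt m (fun z => D z - Dn n z) s = sliceInt m D s - sliceInt m (Dn n) s := by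
        simpa [sliceInt] using integral_sub hs (hslice_int_Dn s)
      rw [this]
    rw [lintegral_congr_ae hae]
    exact sliceInt_bound hm (hDsm.sub (hDncont n).aestronglyMeasurable)
  -- final assembly
  filter_upwards [hns, ae_restrict_mem measurableSet_Ioo,
    (ae_slice_integrable hm hu₁int)] with x hxA hxmem hxint
  have hsm : ∀ k, sliceInt m (ψ (ns k)) x
      = ∫ s in (0:ℝ)..x, sliceInt m (Dn (ns k)) s := fun k =>
    smooth_identity hm (hψ (ns k)) (hχ (ns k)) hxmem
  -- Gn → G at x
  have hGtend : Tendsto (fun n => ∫ s in (0:ℝ)..x, sliceInt m (Dn n) s) atTop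
      (𝓝 (∫ s in (0:ℝ)..x, sliceInt m D s)) := by
    have hsub_set : Ioc (0:ℝ) x ⊆ Ioo (0:ℝ) 1 := fun s hs =>
      ⟨hs.1, lt_of_le_of_lt hs.2 hxmem.2⟩
    have hdiff : ∀ n, (‖(∫ s in (0:ℝ)..x, sliceInt m D s)
        - ∫ s in (0:ℝ)..x, sliceInt m (Dn n) s‖₊ : ℝ≥0∞)
        ≤ eLpNorm (fun z => D z - Dn n z) 1 (volume.restrict Ω) := by
      intro n
      have h1 : (∫ s in (0:ℝ)..x, sliceInt m D s) - (∫ s in (0:ℝ)..x, sliceInt m (Dn n) s)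
          = ∫ s in Ioc (0:ℝ) x, (sliceInt m D s - sliceInt m (Dn n) s) := by
        rw [intervalIntegral.integral_of_le hxmem.1.le,
          intervalIntegral.integral_of_le hxmem.1.le]
        rw [← integral_sub (hg_int.mono_set hsub_set) ((hgn_int n).mono_set hsub_set)]
      rw [h1]
      calc (‖∫ s in Ioc (0:ℝ) x, (sliceInt m D s - sliceInt m (Dn n) s)‖₊ : ℝ≥0∞)
          ≤ ∫⁻ s in Ioc (0:ℝ) x, ‖sliceInt m D s - sliceInt m (Dn n) s‖₊ :=
            enorm_integral_le_lintegral_enorm _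
        _ ≤ ∫⁻ s in Ioo (0:ℝ) 1, ‖sliceInt m D s - sliceInt m (Dn n) s‖₊ :=
            lintegral_mono_set hsub_set
        _ ≤ eLpNorm (fun z => D z - Dn n z) 1 (volume.restrict Ω) := hgbound n
    have hnn : Tendsto (fun n => (‖(∫ s in (0:ℝ)..x, sliceInt m D s)
        - ∫ s in (0:ℝ)..x, sliceInt m (Dn n) s‖₊ : ℝ≥0∞)) atTop (𝓝 0) :=
      tendsto_of_tendsto_of_tendsto_of_le_of_le tendsto_const_nhds hL2
        (fun n => zero_le) hdiff
    have hnn' : Tendsto (fun n => ‖(∫ s in (0:ℝ)..x, sliceInt m D s)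
        - ∫ s in (0:ℝ)..x, sliceInt m (Dn n) s‖₊) atTop (𝓝 0) := by
      rw [← ENNReal.coe_zero] at hnn
      exact (ENNReal.tendsto_coe).mp hnn
    have hsub : Tendsto (fun n => (∫ s in (0:ℝ)..x, sliceInt m D s)
        - ∫ s in (0:ℝ)..x, sliceInt m (Dn n) s) atTop (𝓝 0) := by
      rw [tendsto_zero_iff_norm_tendsto_zero]
      have := NNReal.tendsto_coe.mpr hnn'
      simpa [coe_nnnorm] using this
    have := ((tendsto_const_nhds (x := ∫ s in (0:ℝ)..x, sliceInt m D s)).sub hsub)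
    simpa using this
  -- pass to the subsequence
  have hGsub : Tendsto (fun k => ∫ s in (0:ℝ)..x, sliceInt m (Dn (ns k)) s) atTop
      (𝓝 (∫ s in (0:ℝ)..x, sliceInt m D s)) :=
    hGtend.comp hns_mono.tendsto_atTop
  have hAsub : Tendsto (fun k => sliceInt m (ψ (ns k)) x) atTop
      (𝓝 (sliceInt m u₁ x)) := hxA
  have : Tendsto (fun k => sliceInt m (ψ (ns k)) x) atTop
      (𝓝 (∫ s in (0:ℝ)..x, sliceInt m D s)) := by
    have heq : (fun k => sliceInt m (ψ (ns k)) x)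
        = fun k => ∫ s in (0:ℝ)..x, sliceInt m (Dn (ns k)) s := funext hsm
    rw [heq]
    exact hGsub
  exact tendsto_nhds_unique hAsub this
end
end

section
/- Let 1 < p < ∞ and m > 0. Let Ω ⊂ ℝ² be the cusp domain Ω_m, and let u = (u₁, u₂) ∈ (W^{1,p}_0(Ω))². Define, for a.e. x ∈ (0,1), A(x) := ∫_{−x^m}^{x^m} u₁(x,y) dy. Then the function x ↦ A(x)/x^{m(2p−1)/p} belongs to L^p((0,1)); moreover ∫_0^1 (|A(x)|/x^{m(2p−1)/p})^p dx ≤ 2^{2p−1} ((p−1)/(2p−1))^{p−1} ∫_0^1 ∫_{−x^m}^{x^m} |∂u₁/∂y (x,y)|^p dy dx. -/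
open MeasureTheory Real Set Filter Topology

noncomputable section

namespace Statement3Aux

/-- The part of the cusp domain over `x ∈ (0,1)`. -/
def slab (m : ℝ) : Set (ℝ × ℝ) :=
  {q : ℝ × ℝ | q.1 ∈ Ioo (0:ℝ) 1 ∧ q.2 ∈ Ioo (-(q.1 ^ m)) (q.1 ^ m)}

variable {m : ℝ}

lemma measurableSet_slab (hm : 0 < m) : MeasurableSet (slab m) := by
  have hxm : Measurable fun q : ℝ × ℝ => q.1 ^ m :=
    ((Real.continuous_rpow_const hm.le).comp continuous_fst).measurable
  have h1 : MeasurableSet {q : ℝ × ℝ | 0 < q.1} := measurableSet_lt measurable_const measurable_fst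
  have h2 : MeasurableSet {q : ℝ × ℝ | q.1 < 1} := measurableSet_lt measurable_fst measurable_const
  have h3 : MeasurableSet {q : ℝ × ℝ | -(q.1 ^ m) < q.2} := measurableSet_lt hxm.neg measurable_snd
  have h4 : MeasurableSet {q : ℝ × ℝ | q.2 < q.1 ^ m} := measurableSet_lt measurable_snd hxm
  have : slab m = ({q : ℝ × ℝ | 0 < q.1} ∩ {q | q.1 < 1}) ∩ ({q : ℝ × ℝ | -(q.1 ^ m) < q.2} ∩ {q | q.2 < q.1 ^ m}) := by
    ext q; simp [slab, mem_Ioo, and_assoc]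
  rw [this]
  exact ((h1.inter h2).inter (h3.inter h4))

lemma slab_subset (hm : 0 < m) : slab m ⊆ cuspDomain m := by
  rintro ⟨x, y⟩ ⟨hx, hy⟩
  exact Or.inl ⟨hx.1, hx.2.le, abs_lt.2 ⟨hy.1, hy.2⟩⟩

lemma rpow_le_one_of_mem {x : ℝ} (hm : 0 < m) (hx : x ∈ Ioo (0:ℝ) 1) : x ^ m ≤ 1 :=
  Real.rpow_le_one hx.1.le hx.2.le hm.le

lemma slab_subset_box (hm : 0 < m) : slab m ⊆ (Ioo (0:ℝ) 1) ×ˢ (Ioo (-1:ℝ) 1) := by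
  rintro ⟨x, y⟩ ⟨hx, hy⟩
  have h1 : x ^ m ≤ 1 := rpow_le_one_of_mem hm hx
  exact ⟨hx, by constructor <;> [nlinarith [hy.1, hy.2]; nlinarith [hy.1, hy.2]]⟩

lemma volume_slab_lt_top (hm : 0 < m) : volume (slab m) < ⊤ := by
  refine lt_of_le_of_lt (measure_mono (slab_subset_box hm)) ?_
  rw [show (volume : Measure (ℝ × ℝ)) = (volume : Measure ℝ).prod volume from rfl,
    Measure.prod_prod]
  simp [Real.volume_Ioo]

/-- Fubini for the slab. -/
lemma slab_fubini (hm : 0 < m) {f : ℝ × ℝ → ℝ} (hf : IntegrableOn f (slab m)) :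
    (∀ᵐ x ∂(volume.restrict (Ioo (0:ℝ) 1)),
        IntegrableOn (fun y => f (x, y)) (Ioo (-(x ^ m)) (x ^ m))) ∧
    IntegrableOn (fun x => ∫ y in Ioo (-(x ^ m)) (x ^ m), f (x, y)) (Ioo (0:ℝ) 1) ∧
    ∫ x in Ioo (0:ℝ) 1, ∫ y in Ioo (-(x ^ m)) (x ^ m), f (x, y) = ∫ q in slab m, f q := by
  set F := (slab m).indicator f with hF
  have hFi : Integrable F volume := (integrable_indicator_iff (measurableSet_slab hm)).2 hf
  have hprod : (volume : Measure (ℝ × ℝ)) = (volume : Measure ℝ).prod volume := rfl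
  have hslice : ∀ x ∈ Ioo (0:ℝ) 1,
      (fun y => F (x, y)) = (Ioo (-(x ^ m)) (x ^ m)).indicator (fun y => f (x, y)) := by
    intro x hx
    funext y
    by_cases hy : y ∈ Ioo (-(x ^ m)) (x ^ m)
    · rw [indicator_of_mem hy, hF, indicator_of_mem]
      exact ⟨hx, hy⟩
    · rw [indicator_of_notMem hy, hF, indicator_of_notMem]
      exact fun h => hy h.2
  have hslice0 : ∀ x, x ∉ Ioo (0:ℝ) 1 → (fun y => F (x, y)) = 0 := by
    intro x hx
    funext y
    exact indicator_of_notMem (fun h => hx h.1) f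
  have hFi' : Integrable F ((volume : Measure ℝ).prod volume) := by rwa [← hprod]
  have h1 : ∀ᵐ x ∂(volume : Measure ℝ), Integrable (fun y => F (x, y)) volume :=
    hFi'.prod_right_ae
  have h2 : Integrable (fun x => ∫ y, F (x, y)) volume := hFi'.integral_prod_left
  refine ⟨?_, ?_, ?_⟩
  · filter_upwards [ae_restrict_of_ae h1, ae_restrict_mem measurableSet_Ioo] with x hx1 hx2
    rw [hslice x hx2] at hx1
    exact (integrable_indicator_iff measurableSet_Ioo).1 hx1
  · refine (h2.integrableOn).congr_fun (fun x hx => ?_) measurableSet_Ioo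
    beta_reduce
    rw [hslice x hx, integral_indicator measurableSet_Ioo]
  · have e1 : ∫ x in Ioo (0:ℝ) 1, ∫ y in Ioo (-(x ^ m)) (x ^ m), f (x, y)
        = ∫ x in Ioo (0:ℝ) 1, ∫ y, F (x, y) :=
      setIntegral_congr_fun measurableSet_Ioo
        (fun x hx => by rw [hslice x hx, integral_indicator measurableSet_Ioo])
    rw [e1, setIntegral_eq_integral_of_forall_compl_eq_zero
        (fun x hx => by rw [hslice0 x hx]; simp),
      ← MeasureTheory.integral_prod _ hFi', ← hprod, hF,
      integral_indicator (measurableSet_slab hm)]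


lemma not_mem_cusp_boundary {x y : ℝ} (hx : x ∈ Ioo (0:ℝ) 1) (hy : |y| = x ^ m) :
    (x, y) ∉ cuspDomain m := by
  rintro (⟨_, _, h⟩ | ⟨h1, _⟩)
  · exact absurd hy (ne_of_lt h)
  · exact absurd hx.2 (not_lt.2 h1.le)

lemma testFun_eval_boundary {φ : ℝ × ℝ → ℝ} (hφ : TestFun (cuspDomain m) φ)
    {x y : ℝ} (hx : x ∈ Ioo (0:ℝ) 1) (hy : |y| = x ^ m) : φ (x, y) = 0 := by
  have := not_mem_cusp_boundary hx hy
  exact image_eq_zero_of_notMem_tsupport (fun h => this (hφ.2.2 h))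

lemma testFun_ibp (hm : 0 < m) {φ : ℝ × ℝ → ℝ} (hφ : TestFun (cuspDomain m) φ)
    {x : ℝ} (hx : x ∈ Ioo (0:ℝ) 1) :
    ∫ y in Ioo (-(x ^ m)) (x ^ m), φ (x, y)
      = - ∫ y in Ioo (-(x ^ m)) (x ^ m), (fderiv ℝ φ (x, y)) (0, 1) * y := by
  set a := x ^ m with ha'
  have ha : 0 < a := Real.rpow_pos_of_pos hx.1 m
  have hd : Differentiable ℝ φ := hφ.1.differentiable (by simp)
  have hder : ∀ y : ℝ, HasDerivAt (fun y => φ (x, y)) ((fderiv ℝ φ (x, y)) (0, 1)) y := by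
    intro y
    have h1 : HasDerivAt (fun y : ℝ => ((x : ℝ), y)) ((0 : ℝ), (1 : ℝ)) y :=
      (hasDerivAt_const y x).prodMk (hasDerivAt_id y)
    exact (hd (x, y)).hasFDerivAt.comp_hasDerivAt y h1
  have hcont : Continuous fun y : ℝ => (fderiv ℝ φ (x, y)) ((0 : ℝ), (1 : ℝ)) := by
    have h1 : Continuous fun y : ℝ => fderiv ℝ φ (x, y) :=
      (hφ.1.continuous_fderiv (by simp)).comp (Continuous.prodMk_right x)
    exact h1.clm_apply continuous_const
  have hibp := intervalIntegral.integral_mul_deriv_eq_deriv_mul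
    (u := fun y => φ (x, y)) (v := fun y => y)
    (u' := fun y => (fderiv ℝ φ (x, y)) (0, 1)) (v' := fun _ => 1)
    (a := -a) (b := a)
    (fun y _ => hder y) (fun y _ => hasDerivAt_id y)
    (hcont.intervalIntegrable _ _) (intervalIntegrable_const)
  have hb1 : φ (x, a) = 0 := testFun_eval_boundary hφ hx (abs_of_pos ha)
  have hb2 : φ (x, -a) = 0 := testFun_eval_boundary hφ hx (by rw [abs_neg, abs_of_pos ha])
  simp only [mul_one, hb1, hb2, zero_mul, sub_zero, zero_sub] at hibp
  rw [← integral_Ioc_eq_integral_Ioo, ← intervalIntegral.integral_of_le (by linarith),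
    ← integral_Ioc_eq_integral_Ioo, ← intervalIntegral.integral_of_le (by linarith)]
  exact hibp

lemma integral_abs_rpow {a c : ℝ} (ha : 0 < a) (hc : 0 ≤ c) :
    ∫ y in Ioo (-a) a, |y| ^ c = 2 * a ^ (c + 1) / (c + 1) := by
  have hcont : Continuous fun y : ℝ => |y| ^ c :=
    continuous_abs.rpow_const (fun y => Or.inr hc)
  have hint : ∀ u v : ℝ, IntervalIntegrable (fun y : ℝ => |y| ^ c) volume u v :=
    fun u v => hcont.intervalIntegrable u v
  have hpos : ∫ y in (0:ℝ)..a, |y| ^ c = a ^ (c + 1) / (c + 1) := by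
    rw [show (∫ y in (0:ℝ)..a, |y| ^ c) = ∫ y in (0:ℝ)..a, y ^ c from
      intervalIntegral.integral_congr (fun y hy => by
        rw [uIcc_of_le ha.le] at hy
        rw [abs_of_nonneg hy.1])]
    rw [integral_rpow (Or.inl (by linarith))]
    rw [Real.zero_rpow (by linarith), sub_zero]
  have hneg : ∫ y in (-a)..(0:ℝ), |y| ^ c = a ^ (c + 1) / (c + 1) := by
    have := intervalIntegral.integral_comp_neg (a := (0:ℝ)) (b := a) (fun y : ℝ => |y| ^ c)
    simp only [abs_neg, neg_zero] at this
    rw [← this, hpos]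
  rw [← integral_Ioc_eq_integral_Ioo, ← intervalIntegral.integral_of_le (by linarith),
    ← intervalIntegral.integral_add_adjacent_intervals (hint (-a) 0) (hint 0 a),
    hpos, hneg]
  ring


lemma slice_bound {p m x : ℝ} (hp1 : 1 < p) (hm : 0 < m) (hx : x ∈ Ioo (0:ℝ) 1)
    {g : ℝ → ℝ} (hg : IntegrableOn g (Ioo (-(x ^ m)) (x ^ m)))
    (hgp : IntegrableOn (fun y => |g y| ^ p) (Ioo (-(x ^ m)) (x ^ m))) :
    (|∫ y in Ioo (-(x ^ m)) (x ^ m), g y * y| / x ^ (m * (2 * p - 1) / p)) ^ p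
      ≤ 2 ^ (2 * p - 1) * ((p - 1) / (2 * p - 1)) ^ (p - 1)
        * ∫ y in Ioo (-(x ^ m)) (x ^ m), |g y| ^ p := by
  have hp0 : (0:ℝ) < p := by linarith
  have hpq := Real.HolderConjugate.conjExponent hp1
  set q := Real.conjExponent p with hqdef
  have hq' : q = p / (p - 1) := hpq.conjugate_eq
  have hq0 : 0 < q := hpq.symm.pos
  have hP0 : ENNReal.ofReal p ≠ 0 := by simp [ENNReal.ofReal_eq_zero, not_le, hp0]
  have hPt : ENNReal.ofReal p ≠ ⊤ := ENNReal.ofReal_ne_top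
  set a := x ^ m with hadef
  have ha : 0 < a := Real.rpow_pos_of_pos hx.1 m
  have ha1 : a ≤ 1 := Real.rpow_le_one hx.1.le hx.2.le hm.le
  haveI : IsFiniteMeasure (volume.restrict (Ioo (-a) a)) :=
    ⟨by rw [Measure.restrict_apply_univ]; simp [Real.volume_Ioo]⟩
  set w := ∫ y in Ioo (-a) a, |g y| ^ p with hwdef
  have hw0 : 0 ≤ w := integral_nonneg fun y => Real.rpow_nonneg (abs_nonneg _) p
  have hgae : AEStronglyMeasurable g (volume.restrict (Ioo (-a) a)) := hg.aestronglyMeasurable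
  have hgLp : MemLp g (ENNReal.ofReal p) (volume.restrict (Ioo (-a) a)) := by
    have h1 : MemLp (fun y => ‖g y‖ ^ (ENNReal.ofReal p).toReal) 1
        (volume.restrict (Ioo (-a) a)) := by
      rw [ENNReal.toReal_ofReal hp0.le]
      exact memLp_one_iff_integrable.2 (by simpa [Real.norm_eq_abs] using hgp.integrable)
    have h2 := (memLp_norm_rpow_iff (p := ENNReal.ofReal p) hgae hP0 hPt)
    rw [ENNReal.div_self hP0 hPt] at h2
    exact h2.1 h1
  have hyLp : MemLp (fun y : ℝ => |y|) (ENNReal.ofReal q) (volume.restrict (Ioo (-a) a)) := by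
    refine MemLp.of_bound continuous_abs.aestronglyMeasurable 1 ?_
    refine ae_restrict_of_forall_mem measurableSet_Ioo (fun y hy => ?_)
    rw [Real.norm_eq_abs, abs_abs]
    exact abs_le.2 ⟨by linarith [hy.1], by linarith [hy.2]⟩
  have hH := integral_mul_le_Lp_mul_Lq_of_nonneg (μ := volume.restrict (Ioo (-a) a)) hpq
    (f := fun y => |g y|) (g := fun y => |y|)
    (Eventually.of_forall fun y => abs_nonneg _) (Eventually.of_forall fun y => abs_nonneg _)
    (by simpa [Real.norm_eq_abs] using hgLp.norm) hyLp
  have hK : ∫ y in Ioo (-a) a, |y| ^ q = 2 * a ^ (q + 1) / (q + 1) :=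
    integral_abs_rpow ha hq0.le
  have habs : ∀ y : ℝ, |g y| ^ p = |g y| ^ p := fun _ => rfl
  have hAb : |∫ y in Ioo (-a) a, g y * y|
      ≤ w ^ (1 / p) * (2 * a ^ (q + 1) / (q + 1)) ^ (1 / q) := by
    have h1 : |∫ y in Ioo (-a) a, g y * y| ≤ ∫ y in Ioo (-a) a, |g y| * |y| := by
      calc |∫ y in Ioo (-a) a, g y * y| ≤ ∫ y in Ioo (-a) a, ‖g y * y‖ := by
            rw [← Real.norm_eq_abs]; exact norm_integral_le_integral_norm _
        _ = ∫ y in Ioo (-a) a, |g y| * |y| := by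
            simp only [Real.norm_eq_abs, abs_mul]
    refine h1.trans (hH.trans_eq ?_)
    rw [hK, ← hwdef]
  -- arithmetic
  set X := x ^ (m * (2 * p - 1) / p) with hXdef
  have hX : 0 < X := Real.rpow_pos_of_pos hx.1 _
  set K := 2 * a ^ (q + 1) / (q + 1) with hKdef
  have hK0 : 0 < K := by
    have : 0 < a ^ (q + 1) := Real.rpow_pos_of_pos ha _
    positivity
  have step1 : (|∫ y in Ioo (-a) a, g y * y| / X) ^ p
      ≤ ((w ^ (1 / p) * K ^ (1 / q)) / X) ^ p := by
    refine Real.rpow_le_rpow (by positivity) ?_ hp0.le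
    gcongr
  have hp1ne : p - 1 ≠ 0 := by linarith
  have h2p1 : (0:ℝ) < 2 * p - 1 := by linarith
  have hq1 : q + 1 = (2 * p - 1) / (p - 1) := by rw [hq']; field_simp; ring
  have hKsplit : K = (2 / (q + 1)) * a ^ (q + 1) := by rw [hKdef]; ring
  have hexp1 : (1 / p) * p = 1 := by field_simp
  have hexp2 : (1 / q) * p = p - 1 := by
    rw [hq']
    have hpne : p ≠ 0 := by linarith
    field_simp
  have hexp3 : (m * (2 * p - 1) / p) * p = m * (2 * p - 1) := by field_simp
  have hexp4 : m * (q + 1) * (p - 1) = m * (2 * p - 1) := by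
    rw [hq1]; field_simp
  have hxm1 : (0:ℝ) < x ^ (m * (2 * p - 1)) := Real.rpow_pos_of_pos hx.1 _
  have step2 : ((w ^ (1 / p) * K ^ (1 / q)) / X) ^ p = (2 / (q + 1)) ^ (p - 1) * w := by
    rw [Real.div_rpow (by positivity) hX.le,
      Real.mul_rpow (Real.rpow_nonneg hw0 _) (Real.rpow_nonneg hK0.le _),
      ← Real.rpow_mul hw0, ← Real.rpow_mul hK0.le, hexp1, hexp2, Real.rpow_one,
      hXdef, ← Real.rpow_mul hx.1.le, hexp3]
    have hKp : K ^ (p - 1) = (2 / (q + 1)) ^ (p - 1) * x ^ (m * (2 * p - 1)) := by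
      rw [hKsplit, Real.mul_rpow (by positivity) (Real.rpow_nonneg ha.le _),
        hadef, ← Real.rpow_mul hx.1.le, ← Real.rpow_mul hx.1.le, hexp4]
    rw [hKp]
    field_simp
  have step3 : (2 / (q + 1)) ^ (p - 1)
      ≤ 2 ^ (2 * p - 1) * ((p - 1) / (2 * p - 1)) ^ (p - 1) := by
    have h1 : 2 / (q + 1) = 2 * ((p - 1) / (2 * p - 1)) := by
      rw [hq1]; field_simp
    rw [h1, Real.mul_rpow (by norm_num) (div_nonneg (by linarith) (by linarith))]
    refine mul_le_mul_of_nonneg_right ?_ (Real.rpow_nonneg (div_nonneg (by linarith) (by linarith)) _)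
    exact Real.rpow_le_rpow_left_iff one_lt_two |>.2 (by linarith)
  calc (|∫ y in Ioo (-a) a, g y * y| / X) ^ p
      ≤ ((w ^ (1 / p) * K ^ (1 / q)) / X) ^ p := step1
    _ = (2 / (q + 1)) ^ (p - 1) * w := step2
    _ ≤ 2 ^ (2 * p - 1) * ((p - 1) / (2 * p - 1)) ^ (p - 1) * w :=
        mul_le_mul_of_nonneg_right step3 hw0


lemma main_identity {p m : ℝ} (hp1 : 1 < p) (hm : 0 < m)
    {u₁ : ℝ × ℝ → ℝ} {du₁ : ℝ × ℝ → (ℝ × ℝ) →L[ℝ] ℝ}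
    (hu₁ : MemW1p0 p (cuspDomain m) u₁ du₁) :
    ∀ᵐ x ∂(volume.restrict (Ioo (0:ℝ) 1)),
      (∫ y in Ioo (-(x ^ m)) (x ^ m), u₁ (x, y))
        = - ∫ y in Ioo (-(x ^ m)) (x ^ m), du₁ (x, y) (0, 1) * y := by
  obtain ⟨hu₁Lp, hdu₁Lp, -, ψ, hψtest, hψconv, hdψconv⟩ := hu₁
  have hp0 : (0:ℝ) < p := by linarith
  set P := ENNReal.ofReal p with hPdef
  have hP0 : P ≠ 0 := by simp [hPdef, ENNReal.ofReal_eq_zero, not_le, hp0]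
  have hPt : P ≠ ⊤ := ENNReal.ofReal_ne_top
  have h1P : (1:ENNReal) ≤ P := by
    rw [hPdef, ← ENNReal.ofReal_one]; exact ENNReal.ofReal_le_ofReal hp1.le
  have hSmeas : MeasurableSet (slab m) := measurableSet_slab hm
  have hSΩ : slab m ⊆ cuspDomain m := slab_subset hm
  have hSfin : volume (slab m) < ⊤ := volume_slab_lt_top hm
  haveI : IsFiniteMeasure (volume.restrict (slab m)) :=
    ⟨by rwa [Measure.restrict_apply_univ]⟩
  have hrestrict : (volume.restrict (cuspDomain m)).restrict (slab m)
      = volume.restrict (slab m) := by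
    rw [Measure.restrict_restrict hSmeas, Set.inter_eq_left.2 hSΩ]
  have hu₁S : MemLp u₁ P (volume.restrict (slab m)) := hrestrict ▸ hu₁Lp.restrict (slab m)
  have hD1S : MemLp (fun z => du₁ z (0, 1)) P (volume.restrict (slab m)) :=
    hrestrict ▸ (hdu₁Lp (0, 1)).restrict (slab m)
  have hu₁int : IntegrableOn u₁ (slab m) := hu₁S.integrable h1P
  have hD1int : IntegrableOn (fun z => du₁ z (0, 1)) (slab m) := hD1S.integrable h1P
  -- properties of the test functions
  have hψcont : ∀ n, Continuous (ψ n) := fun n => (hψtest n).1.continuous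
  have hψint : ∀ n, Integrable (ψ n) volume :=
    fun n => (hψcont n).integrable_of_hasCompactSupport (hψtest n).2.1
  have hDψcont : ∀ n, Continuous (fun z => fderiv ℝ (ψ n) z ((0:ℝ), (1:ℝ))) :=
    fun n => ((hψtest n).1.continuous_fderiv (by simp)).clm_apply continuous_const
  have hDψsupp : ∀ n, HasCompactSupport (fun z => fderiv ℝ (ψ n) z ((0:ℝ), (1:ℝ))) := by
    intro n
    have h1 : HasCompactSupport (fderiv ℝ (ψ n)) := (hψtest n).2.1.fderiv ℝ
    have h2 := h1.comp_left (g := fun L : (ℝ × ℝ) →L[ℝ] ℝ => L ((0:ℝ), (1:ℝ))) rfl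
    exact h2
  have hDψint : ∀ n, Integrable (fun z => fderiv ℝ (ψ n) z ((0:ℝ), (1:ℝ))) volume :=
    fun n => (hDψcont n).integrable_of_hasCompactSupport (hDψsupp n)
  -- error functions
  have he₁int : ∀ n, IntegrableOn (fun z => u₁ z - ψ n z) (slab m) :=
    fun n => hu₁int.sub ((hψint n).integrableOn)
  have he₂int : ∀ n,
      IntegrableOn (fun z => du₁ z (0, 1) - fderiv ℝ (ψ n) z (0, 1)) (slab m) :=
    fun n => hD1int.sub ((hDψint n).integrableOn)
  have hsnd : ∀ z ∈ slab m, |z.2| ≤ 1 := by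
    intro z hz
    have := slab_subset_box hm hz
    exact abs_le.2 ⟨this.2.1.le, this.2.2.le⟩
  have he₂yint : ∀ n,
      IntegrableOn (fun z => (du₁ z (0, 1) - fderiv ℝ (ψ n) z (0, 1)) * z.2) (slab m) := by
    intro n
    refine Integrable.mono' ((he₂int n).abs) ?_ ?_
    · exact (he₂int n).aestronglyMeasurable.mul measurable_snd.aestronglyMeasurable
    · refine ae_restrict_of_forall_mem hSmeas (fun z hz => ?_)
      rw [Real.norm_eq_abs, abs_mul]
      exact mul_le_of_le_one_right (abs_nonneg _) (hsnd z hz)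
  -- a.e. slice integrability
  have hu_slice := (slab_fubini hm hu₁int).1
  have hD_slice := (slab_fubini hm hD1int).1
  -- the function h
  set h : ℝ → ℝ := fun x => (∫ y in Ioo (-(x ^ m)) (x ^ m), u₁ (x, y))
      + ∫ y in Ioo (-(x ^ m)) (x ^ m), du₁ (x, y) (0, 1) * y with hhdef
  -- h agrees a.e. with the error representation, for every n
  have claim : ∀ n, h =ᵐ[volume.restrict (Ioo (0:ℝ) 1)]
      fun x => (∫ y in Ioo (-(x ^ m)) (x ^ m), (u₁ (x, y) - ψ n (x, y)))
        + ∫ y in Ioo (-(x ^ m)) (x ^ m),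
            (du₁ (x, y) (0, 1) - fderiv ℝ (ψ n) (x, y) (0, 1)) * y := by
    intro n
    filter_upwards [hu_slice, hD_slice, ae_restrict_mem measurableSet_Ioo]
      with x hx1 hx2 hx
    have ha : 0 < x ^ m := Real.rpow_pos_of_pos hx.1 m
    have ha1 : x ^ m ≤ 1 := Real.rpow_le_one hx.1.le hx.2.le hm.le
    have hψx : IntegrableOn (fun y => ψ n (x, y)) (Ioo (-(x ^ m)) (x ^ m)) :=
      (((hψcont n).comp (Continuous.prodMk_right x)).integrableOn_Icc).mono_set Ioo_subset_Icc_self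
    have hDψx : IntegrableOn (fun y => fderiv ℝ (ψ n) (x, y) (0, 1) * y)
        (Ioo (-(x ^ m)) (x ^ m)) :=
      ((((hDψcont n).comp (Continuous.prodMk_right x)).mul continuous_id).integrableOn_Icc).mono_set
        Ioo_subset_Icc_self
    have hD1y : IntegrableOn (fun y => du₁ (x, y) (0, 1) * y) (Ioo (-(x ^ m)) (x ^ m)) := by
      refine Integrable.mono' (hx2.abs) ?_ ?_
      · exact hx2.aestronglyMeasurable.mul aestronglyMeasurable_id
      · refine ae_restrict_of_forall_mem measurableSet_Ioo (fun y hy => ?_)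
        rw [Real.norm_eq_abs, abs_mul]
        have : |y| ≤ 1 := abs_le.2 ⟨by linarith [hy.1], by linarith [hy.2]⟩
        exact mul_le_of_le_one_right (abs_nonneg _) this
    have hibp := testFun_ibp hm (hψtest n) hx
    have h1 : ∫ y in Ioo (-(x ^ m)) (x ^ m), (u₁ (x, y) - ψ n (x, y))
        = (∫ y in Ioo (-(x ^ m)) (x ^ m), u₁ (x, y))
          - ∫ y in Ioo (-(x ^ m)) (x ^ m), ψ n (x, y) := integral_sub hx1 hψx
    have h2 : ∫ y in Ioo (-(x ^ m)) (x ^ m),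
          (du₁ (x, y) (0, 1) - fderiv ℝ (ψ n) (x, y) (0, 1)) * y
        = (∫ y in Ioo (-(x ^ m)) (x ^ m), du₁ (x, y) (0, 1) * y)
          - ∫ y in Ioo (-(x ^ m)) (x ^ m), fderiv ℝ (ψ n) (x, y) (0, 1) * y := by
      rw [← integral_sub hD1y hDψx]
      congr 1
      funext y
      ring
    rw [hhdef]
    simp only
    rw [h1, h2]
    have := hibp
    linarith [this]
  -- h is integrable
  have hre : ∀ n, IntegrableOn (fun x => (∫ y in Ioo (-(x ^ m)) (x ^ m),
        (u₁ (x, y) - ψ n (x, y)))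
      + ∫ y in Ioo (-(x ^ m)) (x ^ m),
          (du₁ (x, y) (0, 1) - fderiv ℝ (ψ n) (x, y) (0, 1)) * y) (Ioo (0:ℝ) 1) := by
    intro n
    exact ((slab_fubini hm (he₁int n)).2.1).add ((slab_fubini hm (he₂yint n)).2.1)
  have hhint : IntegrableOn h (Ioo (0:ℝ) 1) := (hre 0).congr ((claim 0).symm)
  -- the integral of |h| is bounded by the L¹(S) norms of the errors
  have hIbound : ∀ n, ∫ x in Ioo (0:ℝ) 1, |h x|
      ≤ (∫ z in slab m, |u₁ z - ψ n z|)
        + ∫ z in slab m, |du₁ z (0, 1) - fderiv ℝ (ψ n) z (0, 1)| := by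
    intro n
    have e1 := slab_fubini hm ((he₁int n).abs)
    have e2 := slab_fubini hm ((he₂yint n).abs)
    have hstep : ∫ x in Ioo (0:ℝ) 1, |h x|
        ≤ ∫ x in Ioo (0:ℝ) 1,
            ((∫ y in Ioo (-(x ^ m)) (x ^ m), |u₁ (x, y) - ψ n (x, y)|)
              + ∫ y in Ioo (-(x ^ m)) (x ^ m),
                  |(du₁ (x, y) (0, 1) - fderiv ℝ (ψ n) (x, y) (0, 1)) * y|) := by
      refine integral_mono_ae (hhint.abs) (e1.2.1.add e2.2.1) ?_
      filter_upwards [claim n] with x hx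
      rw [hx]
      refine (abs_add_le _ _).trans (add_le_add ?_ ?_)
      · rw [← Real.norm_eq_abs]
        refine (norm_integral_le_integral_norm _).trans_eq ?_
        simp only [Real.norm_eq_abs]
      · rw [← Real.norm_eq_abs]
        refine (norm_integral_le_integral_norm _).trans_eq ?_
        simp only [Real.norm_eq_abs]
    refine hstep.trans ?_
    rw [integral_add e1.2.1 e2.2.1, e1.2.2, e2.2.2]
    refine add_le_add (le_refl _) ?_
    refine integral_mono_ae ((he₂yint n).abs) ((he₂int n).abs) ?_
    refine ae_restrict_of_forall_mem hSmeas (fun z hz => ?_)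
    simp only [abs_mul]
    exact mul_le_of_le_one_right (abs_nonneg _) (hsnd z hz)
  -- pass to ℝ≥0∞ and use the convergence
  set V := (volume (slab m)) ^ (1 - 1 / p) with hVdef
  have hVt : V ≠ ⊤ := by
    refine ENNReal.rpow_ne_top_of_nonneg ?_ hSfin.ne
    have : 1 / p < 1 := by rw [div_lt_one hp0]; exact hp1
    linarith
  have hL1 : ∀ f : ℝ × ℝ → ℝ, IntegrableOn f (slab m) →
      ENNReal.ofReal (∫ z in slab m, |f z|)
        ≤ eLpNorm f P (volume.restrict (cuspDomain m)) * V := by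
    intro f hf
    have h1 : ENNReal.ofReal (∫ z in slab m, |f z|) = eLpNorm f 1 (volume.restrict (slab m)) := by
      rw [eLpNorm_one_eq_lintegral_enorm, ← ofReal_integral_norm_eq_lintegral_enorm hf]
      simp only [Real.norm_eq_abs]
    rw [h1]
    have h2 := eLpNorm_le_eLpNorm_mul_rpow_measure_univ (p := 1) (q := P) h1P
      hf.aestronglyMeasurable
    rw [Measure.restrict_apply_univ] at h2
    have h3 : ENNReal.toReal 1 = 1 := by simp
    rw [h3, ENNReal.toReal_ofReal hp0.le] at h2
    refine h2.trans ?_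
    rw [hVdef, show (1:ℝ)/1 = 1 by norm_num]
    exact mul_le_mul_left (eLpNorm_mono_measure f (Measure.restrict_mono hSΩ le_rfl)) _
  have hIE : ∀ n, ENNReal.ofReal (∫ x in Ioo (0:ℝ) 1, |h x|)
      ≤ (eLpNorm (fun z => u₁ z - ψ n z) P (volume.restrict (cuspDomain m))
        + eLpNorm (fun z => du₁ z (0, 1) - fderiv ℝ (ψ n) z (0, 1)) P
            (volume.restrict (cuspDomain m))) * V := by
    intro n
    refine (ENNReal.ofReal_le_ofReal (hIbound n)).trans ?_
    rw [ENNReal.ofReal_add (integral_nonneg (fun z => abs_nonneg _))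
      (integral_nonneg (fun z => abs_nonneg _)), add_mul]
    exact add_le_add (hL1 _ (he₁int n)) (hL1 _ (he₂int n))
  have hT : Tendsto (fun n =>
      (eLpNorm (fun z => u₁ z - ψ n z) P (volume.restrict (cuspDomain m))
        + eLpNorm (fun z => du₁ z (0, 1) - fderiv ℝ (ψ n) z (0, 1)) P
            (volume.restrict (cuspDomain m))) * V) atTop (𝓝 0) := by
    have h1 := (hψconv.add (hdψconv (0, 1)))
    rw [add_zero] at h1
    have h2 := ENNReal.Tendsto.mul_const h1 (Or.inr hVt)
    rwa [zero_mul] at h2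
  have hI0 : ENNReal.ofReal (∫ x in Ioo (0:ℝ) 1, |h x|) ≤ 0 := ge_of_tendsto' hT hIE
  have hInn : (0:ℝ) ≤ ∫ x in Ioo (0:ℝ) 1, |h x| := integral_nonneg (fun x => abs_nonneg _)
  have hIzero : ∫ x in Ioo (0:ℝ) 1, |h x| = 0 := by
    have := ENNReal.ofReal_eq_zero.1 (le_antisymm hI0 zero_le)
    linarith
  have habs := (integral_eq_zero_iff_of_nonneg_ae
    (Eventually.of_forall (fun x => abs_nonneg (h x))) hhint.abs).1 hIzero
  filter_upwards [habs] with x hx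
  have hx0 : h x = 0 := by
    have : |h x| = 0 := hx
    exact abs_eq_zero.1 this
  have : (∫ y in Ioo (-(x ^ m)) (x ^ m), u₁ (x, y))
      + ∫ y in Ioo (-(x ^ m)) (x ^ m), du₁ (x, y) (0, 1) * y = 0 := hx0
  linarith

end Statement3Aux

open Statement3Aux

set_option maxHeartbeats 1000000

/-- For `u = (u₁,u₂) ∈ (W^{1,p}_0(Ω_m))²` and
`A(x) = ∫_{-x^m}^{x^m} u₁(x,y) dy`, the function `x ↦ A(x)/x^{m(2p-1)/p}` belongs to
`L^p((0,1))`, with the quantitative bound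
`∫_0^1 (|A(x)|/x^{m(2p-1)/p})^p dx ≤ 2^{2p-1}((p-1)/(2p-1))^{p-1} ∫_0^1 ∫_{-x^m}^{x^m}
|∂u₁/∂y|^p dy dx`. -/
theorem statement3 (p m : ℝ) (hp1 : 1 < p) (hm : 0 < m)
    (u₁ u₂ : ℝ × ℝ → ℝ) (du₁ du₂ : ℝ × ℝ → (ℝ × ℝ) →L[ℝ] ℝ)
    (hu₁ : MemW1p0 p (cuspDomain m) u₁ du₁) (hu₂ : MemW1p0 p (cuspDomain m) u₂ du₂) :
    MemLp (fun x : ℝ => (∫ y in Ioo (-(x ^ m)) (x ^ m), u₁ (x, y)) / x ^ (m * (2 * p - 1) / p))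
        (ENNReal.ofReal p) (volume.restrict (Ioo (0 : ℝ) 1)) ∧
      ∫ x in Ioo (0 : ℝ) 1,
          (|∫ y in Ioo (-(x ^ m)) (x ^ m), u₁ (x, y)| / x ^ (m * (2 * p - 1) / p)) ^ p
        ≤ 2 ^ (2 * p - 1) * ((p - 1) / (2 * p - 1)) ^ (p - 1) *
          ∫ x in Ioo (0 : ℝ) 1, ∫ y in Ioo (-(x ^ m)) (x ^ m), |du₁ (x, y) (0, 1)| ^ p := by
  have hp0 : (0:ℝ) < p := by linarith
  have hP0 : ENNReal.ofReal p ≠ 0 := by simp [ENNReal.ofReal_eq_zero, not_le, hp0]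
  have hPt : ENNReal.ofReal p ≠ ⊤ := ENNReal.ofReal_ne_top
  have h1P : (1:ENNReal) ≤ ENNReal.ofReal p := by
    rw [← ENNReal.ofReal_one]; exact ENNReal.ofReal_le_ofReal hp1.le
  have hSmeas := measurableSet_slab (m := m) hm
  have hSΩ := slab_subset (m := m) hm
  haveI : IsFiniteMeasure (volume.restrict (slab m)) :=
    ⟨by rw [Measure.restrict_apply_univ]; exact volume_slab_lt_top hm⟩
  have hrestrict : (volume.restrict (cuspDomain m)).restrict (slab m)
      = volume.restrict (slab m) := by
    rw [Measure.restrict_restrict hSmeas, Set.inter_eq_left.2 hSΩ]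
  have hu₁int : IntegrableOn u₁ (slab m) :=
    (hrestrict ▸ hu₁.1.restrict (slab m)).integrable h1P
  have hD1S : MemLp (fun z => du₁ z (0, 1)) (ENNReal.ofReal p) (volume.restrict (slab m)) :=
    hrestrict ▸ (hu₁.2.1 (0, 1)).restrict (slab m)
  have hD1int : IntegrableOn (fun z => du₁ z (0, 1)) (slab m) := hD1S.integrable h1P
  have hD1pow : IntegrableOn (fun z => |du₁ z (0, 1)| ^ p) (slab m) := by
    have := hD1S.integrable_norm_rpow hP0 hPt
    unfold IntegrableOn
    simpa [ENNReal.toReal_ofReal hp0.le, Real.norm_eq_abs] using this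
  have hWfub := slab_fubini hm hD1pow
  have hDfub := slab_fubini hm hD1int
  have hAfub := slab_fubini hm hu₁int
  have hid := main_identity hp1 hm hu₁
  have hpt : ∀ᵐ x ∂(volume.restrict (Ioo (0:ℝ) 1)),
      (|∫ y in Ioo (-(x ^ m)) (x ^ m), u₁ (x, y)| / x ^ (m * (2 * p - 1) / p)) ^ p
        ≤ 2 ^ (2 * p - 1) * ((p - 1) / (2 * p - 1)) ^ (p - 1)
          * ∫ y in Ioo (-(x ^ m)) (x ^ m), |du₁ (x, y) (0, 1)| ^ p := by
    filter_upwards [hid, hDfub.1, hWfub.1, ae_restrict_mem measurableSet_Ioo]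
      with x hAx hgx hgpx hx
    rw [hAx, abs_neg]
    exact slice_bound hp1 hm hx hgx hgpx
  have hWint : IntegrableOn
      (fun x => ∫ y in Ioo (-(x ^ m)) (x ^ m), |du₁ (x, y) (0, 1)| ^ p) (Ioo (0:ℝ) 1) :=
    hWfub.2.1
  constructor
  · constructor
    · have h1 : AEStronglyMeasurable (fun x => ∫ y in Ioo (-(x ^ m)) (x ^ m), u₁ (x, y))
          (volume.restrict (Ioo (0:ℝ) 1)) := hAfub.2.1.aestronglyMeasurable
      have h2 : Measurable (fun x : ℝ => (x ^ (m * (2 * p - 1) / p))⁻¹) :=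
        (Real.continuous_rpow_const
          (div_nonneg (mul_nonneg hm.le (by linarith)) hp0.le)).measurable.inv
      simp only [div_eq_mul_inv]
      exact h1.mul h2.aestronglyMeasurable
    · rw [eLpNorm_eq_lintegral_rpow_enorm_toReal hP0 hPt, ENNReal.toReal_ofReal hp0.le]
      refine ENNReal.rpow_lt_top_of_nonneg (by positivity) ?_
      refine ne_of_lt (lt_of_le_of_lt (lintegral_mono_ae ?_)
        ((hWint.const_mul (2 ^ (2 * p - 1) * ((p - 1) / (2 * p - 1)) ^ (p - 1))).lintegral_lt_top))
      filter_upwards [hpt, ae_restrict_mem measurableSet_Ioo] with x hx1 hx2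
      have hX0 : (0:ℝ) ≤ x ^ (m * (2 * p - 1) / p) := Real.rpow_nonneg hx2.1.le _
      have heq : (‖(∫ y in Ioo (-(x ^ m)) (x ^ m), u₁ (x, y))
            / x ^ (m * (2 * p - 1) / p)‖ₑ) ^ p
          = ENNReal.ofReal ((|∫ y in Ioo (-(x ^ m)) (x ^ m), u₁ (x, y)|
            / x ^ (m * (2 * p - 1) / p)) ^ p) := by
        rw [← ENNReal.ofReal_rpow_of_nonneg (by positivity) hp0.le, ← ofReal_norm,
          Real.norm_eq_abs, abs_div, abs_of_nonneg hX0]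
      rw [heq]
      exact ENNReal.ofReal_le_ofReal hx1
  · refine le_trans (integral_mono_of_nonneg ?_
      (hWint.const_mul (2 ^ (2 * p - 1) * ((p - 1) / (2 * p - 1)) ^ (p - 1))) hpt) ?_
    · filter_upwards [ae_restrict_mem measurableSet_Ioo] with x hx
      have hX0 : (0:ℝ) ≤ x ^ (m * (2 * p - 1) / p) := Real.rpow_nonneg hx.1.le _
      positivity
    · rw [integral_const_mul]
end
end

section
/- Let 1 < p < ∞ and r > 0. Let Ω ⊂ ℝ² be the logarithmic cusp domain Ω_r and let u = (u₁, u₂) ∈ (W^{1,p}_0(Ω))². Set ξ(x) := x(−ln x)^{−r} and define, for a.e. x ∈ (0, 1/2), g(x) := ∫_{−ξ(x)}^{ξ(x)} div u(x,y) dy and A(x) := ∫_{−ξ(x)}^{ξ(x)} u₁(x,y) dy. Then for a.e. x ∈ (0, 1/2) it holds that A(x) = ∫_0^x g(s) ds. -/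
open MeasureTheory Real Set Filter Topology

noncomputable section

open scoped ENNReal NNReal

/-- The half-width `ξ(x) = x(-ln x)^{-r}` of the logarithmic cusp. -/
def logXi (r x : ℝ) : ℝ := x * (-Real.log x) ^ (-r)

/-- The logarithmic cusp domain `Ω_r`: the bounded domain whose boundary consists of the curves
`y = ±x(-ln x)^{-r}` for `0 < x < 1/2` and the circular arc
`y² + (x - 1/2)² = (1/4)(ln 2)^{-2r}` for `1/2 < x < (1/2)(ln 2)^{-r} + 1/2`. -/
def logCuspDomain (r : ℝ) : Set (ℝ × ℝ) :=
  {q | (0 < q.1 ∧ q.1 ≤ 1 / 2 ∧ |q.2| < logXi r q.1) ∨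
       (1 / 2 < q.1 ∧ q.2 ^ 2 + (q.1 - 1 / 2) ^ 2 < 1 / 4 * (Real.log 2) ^ (-(2 * r)))}

/-- the open cusp region over `(0,1/2)`. -/
def cuspRegion (r : ℝ) : Set (ℝ × ℝ) := {q | q.1 ∈ Ioo (0:ℝ) (1/2) ∧ |q.2| < logXi r q.1}

lemma cuspRegion_subset (r : ℝ) : cuspRegion r ⊆ logCuspDomain r := by
  rintro ⟨x, y⟩ ⟨hx, hy⟩
  exact Or.inl ⟨hx.1, hx.2.le, hy⟩

lemma isOpen_cuspRegion (r : ℝ) : IsOpen (cuspRegion r) := by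
  have hU : IsOpen ((Ioo (0:ℝ) (1/2)) ×ˢ (univ : Set ℝ)) := (isOpen_Ioo).prod isOpen_univ
  have hcont : ContinuousOn (fun q : ℝ × ℝ => logXi r q.1 - |q.2|)
      ((Ioo (0:ℝ) (1/2)) ×ˢ (univ : Set ℝ)) := by
    intro q hq
    have hx : q.1 ∈ Ioo (0:ℝ) (1/2) := hq.1
    have hlog : Real.log q.1 < 0 := Real.log_neg hx.1 (by linarith [hx.2])
    have h1 : ContinuousAt (fun x : ℝ => (-Real.log x) ^ (-r)) q.1 := by
      have h0 : ContinuousAt (fun x : ℝ => -Real.log x) q.1 :=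
        (Real.continuousAt_log (by linarith [hx.1])).neg
      exact h0.rpow_const (Or.inl (by simpa using hlog.ne))
    have h2 : ContinuousAt (fun x : ℝ => logXi r x) q.1 := by
      unfold logXi; exact continuousAt_id.mul h1
    exact ((h2.comp (continuousAt_fst)).sub (continuous_abs.continuousAt.comp
      continuousAt_snd)).continuousWithinAt
  have : cuspRegion r = ((Ioo (0:ℝ) (1/2)) ×ˢ (univ : Set ℝ)) ∩
      (fun q : ℝ × ℝ => logXi r q.1 - |q.2|) ⁻¹' (Ioi 0) := by
    ext ⟨x, y⟩
    simp only [cuspRegion, mem_setOf_eq, mem_inter_iff, mem_prod, mem_univ, and_true,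
      mem_preimage, mem_Ioi]
    constructor
    · rintro ⟨h1, h2⟩; exact ⟨h1, sub_pos.2 h2⟩
    · rintro ⟨h1, h2⟩; exact ⟨h1, sub_pos.1 h2⟩
  rw [this]
  exact hcont.isOpen_inter_preimage hU isOpen_Ioi

lemma measurableSet_cuspRegion (r : ℝ) : MeasurableSet (cuspRegion r) :=
  (isOpen_cuspRegion r).measurableSet

lemma not_mem_domain_of_nonpos {r x : ℝ} (hx : x ≤ 0) (y : ℝ) : (x, y) ∉ logCuspDomain r := by
  rintro (⟨h, -⟩ | ⟨h, -⟩) <;> simp at h <;> linarith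

lemma mem_domain_slice {r x : ℝ} (hx2 : x ≤ 1/2) {y : ℝ} (h : (x, y) ∈ logCuspDomain r) :
    y ∈ Ioo (-logXi r x) (logXi r x) := by
  rcases h with ⟨-, -, h⟩ | ⟨h, -⟩
  · exact abs_lt.1 h
  · exact absurd h (by simpa using hx2)

lemma mem_cuspRegion_iff {r x : ℝ} (hx : x ∈ Ioo (0:ℝ) (1/2)) (y : ℝ) :
    (x, y) ∈ cuspRegion r ↔ y ∈ Ioo (-logXi r x) (logXi r x) := by
  constructor
  · rintro ⟨-, h⟩; exact abs_lt.1 h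
  · intro h; exact ⟨hx, abs_lt.2 h⟩

/-- bound on the region: it sits in a finite box. -/
lemma cuspRegion_subset_box (r : ℝ) (hr : 0 < r) :
    cuspRegion r ⊆ Ioo (0:ℝ) (1/2) ×ˢ
      Ioo (-(1/2 * (Real.log 2) ^ (-r))) (1/2 * (Real.log 2) ^ (-r)) := by
  rintro ⟨x, y⟩ ⟨hx, hy⟩
  refine ⟨hx, ?_⟩
  have hlog2 : (0:ℝ) < Real.log 2 := Real.log_pos (by norm_num)
  have hlx : Real.log 2 ≤ -Real.log x := by
    have : Real.log x ≤ Real.log (1/2) := by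
      apply Real.log_le_log (by linarith [hx.1])
      linarith [hx.2]
    rw [Real.log_div one_ne_zero two_ne_zero, Real.log_one] at this
    linarith
  have hrp : (-Real.log x) ^ (-r) ≤ (Real.log 2) ^ (-r) :=
    Real.rpow_le_rpow_of_nonpos hlog2 hlx (by linarith)
  have hxi : logXi r x ≤ 1/2 * (Real.log 2) ^ (-r) := by
    unfold logXi
    have h0 : (0:ℝ) ≤ (-Real.log x) ^ (-r) := Real.rpow_nonneg (by linarith) _
    calc x * (-Real.log x) ^ (-r) ≤ x * (Real.log 2) ^ (-r) := by
          exact mul_le_mul_of_nonneg_left hrp hx.1.le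
      _ ≤ 1/2 * (Real.log 2) ^ (-r) := by
          have : (0:ℝ) ≤ (Real.log 2) ^ (-r) := Real.rpow_nonneg hlog2.le _
          nlinarith [hx.2]
  have := abs_lt.1 hy
  constructor <;> simp only [mem_Ioo] <;> [linarith [this.1]; linarith [this.2]]

lemma volume_cuspRegion_lt_top (r : ℝ) (hr : 0 < r) : volume (cuspRegion r) < ⊤ := by
  apply lt_of_le_of_lt (measure_mono (cuspRegion_subset_box r hr))
  rw [Measure.volume_eq_prod, Measure.prod_prod]
  exact ENNReal.mul_lt_top (measure_Ioo_lt_top) (measure_Ioo_lt_top)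

section SliceLemmas
variable {r : ℝ}

/-- Collapse a slice integral of a function vanishing outside `Ω` to an integral over `ℝ`. -/
lemma slice_integral_eq {s : ℝ} (hs0 : 0 < s) (hs2 : s ≤ 1/2) {F : ℝ × ℝ → ℝ}
    (hF : ∀ q ∉ logCuspDomain r, F q = 0) :
    ∫ y in Ioo (-logXi r s) (logXi r s), F (s, y) = ∫ y, F (s, y) := by
  apply setIntegral_eq_integral_of_forall_compl_eq_zero
  intro y hy
  apply hF
  intro hmem
  exact hy (mem_domain_slice hs2 hmem)

lemma isClosedEmbedding_mk (s : ℝ) : Topology.IsClosedEmbedding (Prod.mk s : ℝ → ℝ × ℝ) := by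
  have : Isometry (Prod.mk s : ℝ → ℝ × ℝ) := by
    intro y y'
    simp [Prod.edist_eq]
  exact this.isClosedEmbedding

/-- slice of a test function is smooth and compactly supported, and its `y`-derivative
integrates to zero. -/
lemma integral_fderiv_snd (h : ℝ × ℝ → ℝ) (hsm : ContDiff ℝ (⊤ : ℕ∞) h) (hsupp : HasCompactSupport h)
    (s : ℝ) : ∫ y, fderiv ℝ h (s, y) (0, 1) = 0 := by
  set H : ℝ → ℝ := fun y => h (s, y) with hH
  have hder : ∀ y, HasDerivAt H (fderiv ℝ h (s, y) (0, 1)) y := by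
    intro y
    have h1 : HasDerivAt (fun y : ℝ => ((s : ℝ), y)) ((0 : ℝ), (1 : ℝ)) y :=
      (hasDerivAt_const y s).prodMk (hasDerivAt_id y)
    have h2 : HasFDerivAt h (fderiv ℝ h (s, y)) (s, y) :=
      (hsm.differentiable (by simp) (s, y)).hasFDerivAt
    exact h2.comp_hasDerivAt y h1
  have hHc : ContDiff ℝ 1 H := by
    apply ContDiff.comp (hsm.of_le (by simp))
    exact contDiff_const.prodMk contDiff_id
  have hHsupp : HasCompactSupport H :=
    hsupp.comp_isClosedEmbedding (isClosedEmbedding_mk s)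
  have hderiv_eq : ∀ y, deriv H y = fderiv ℝ h (s, y) (0, 1) := fun y => (hder y).deriv
  calc ∫ y, fderiv ℝ h (s, y) (0, 1) = ∫ y, deriv H y := by
        simp_rw [hderiv_eq]
      _ = 0 := by
        have hint : Integrable (deriv H) := by
          apply Continuous.integrable_of_hasCompactSupport
          · exact (hHc.continuous_deriv le_rfl)
          · exact hHsupp.deriv
        rw [← intervalIntegral.integral_Iic_add_Ioi (b := 0) hint.integrableOn hint.integrableOn,
          hHsupp.integral_Iic_deriv_eq hHc 0, hHsupp.integral_Ioi_deriv_eq hHc 0]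
        ring

end SliceLemmas

section Smooth

lemma testFun_eq_zero {r : ℝ} {f : ℝ × ℝ → ℝ} (hf : TestFun (logCuspDomain r) f)
    {q : ℝ × ℝ} (hq : q ∉ logCuspDomain r) : f q = 0 :=
  image_eq_zero_of_notMem_tsupport (fun hmem => hq (hf.2.2 hmem))

lemma fderiv_eq_zero_of_nmem {r : ℝ} {f : ℝ × ℝ → ℝ} (hf : TestFun (logCuspDomain r) f)
    {q : ℝ × ℝ} (hq : q ∉ logCuspDomain r) (v : ℝ × ℝ) : fderiv ℝ f q v = 0 := by
  have : q ∉ Function.support (fderiv ℝ f) := fun hmem =>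
    hq (hf.2.2 (support_fderiv_subset ℝ hmem))
  have h0 : fderiv ℝ f q = 0 := by
    by_contra hne
    exact this hne
  rw [h0]
  rfl

/-- The divergence identity for smooth compactly supported functions. -/
lemma smooth_identity_s10 (r : ℝ) (f h : ℝ × ℝ → ℝ) (hf : TestFun (logCuspDomain r) f)
    (hh : TestFun (logCuspDomain r) h) {x : ℝ} (hx : x ∈ Ioo (0:ℝ) (1/2)) :
    (∫ y in Ioo (-logXi r x) (logXi r x), f (x, y))
      = ∫ s in (0:ℝ)..x, ∫ y in Ioo (-logXi r s) (logXi r s),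
          (fderiv ℝ f (s, y) (1, 0) + fderiv ℝ h (s, y) (0, 1)) := by
  set F₁ : ℝ × ℝ → ℝ := fun q => fderiv ℝ f q (1, 0) with hF₁
  set F₂ : ℝ × ℝ → ℝ := fun q => fderiv ℝ h q (0, 1) with hF₂
  have contF₁ : Continuous F₁ := (hf.1.continuous_fderiv (by simp)).clm_apply continuous_const
  have hcsF₁ : HasCompactSupport F₁ := hf.2.1.fderiv_apply ℝ (1, 0)
  have intF₁ : Integrable F₁ := contF₁.integrable_of_hasCompactSupport hcsF₁
  have contF₂ : Continuous F₂ := (hh.1.continuous_fderiv (by simp)).clm_apply continuous_const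
  have hcsF₂ : HasCompactSupport F₂ := hh.2.1.fderiv_apply ℝ (0, 1)
  -- step 1: rewrite the inner integral for `s ∈ Ioc 0 x`
  have step1 : ∀ s ∈ Ioc (0:ℝ) x,
      (∫ y in Ioo (-logXi r s) (logXi r s), (F₁ (s, y) + F₂ (s, y)))
        = ∫ y, F₁ (s, y) := by
    intro s hs
    have hs2 : s ≤ 1/2 := le_trans hs.2 hx.2.le
    have hvan : ∀ q ∉ logCuspDomain r, F₁ q + F₂ q = 0 := fun q hq => by
      simp only [hF₁, hF₂]
      rw [fderiv_eq_zero_of_nmem hf hq, fderiv_eq_zero_of_nmem hh hq, add_zero]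
    rw [slice_integral_eq hs.1 hs2 hvan]
    have i1 : Integrable (fun y => F₁ (s, y)) :=
      (contF₁.comp (continuous_const.prodMk continuous_id)).integrable_of_hasCompactSupport
        (hcsF₁.comp_isClosedEmbedding (isClosedEmbedding_mk s))
    have i2 : Integrable (fun y => F₂ (s, y)) :=
      (contF₂.comp (continuous_const.prodMk continuous_id)).integrable_of_hasCompactSupport
        (hcsF₂.comp_isClosedEmbedding (isClosedEmbedding_mk s))
    rw [integral_add i1 i2, integral_fderiv_snd h hh.1 hh.2.1 s, add_zero]
  -- step 2: Fubini + FTC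
  have step2 : (∫ s in (0:ℝ)..x, ∫ y, F₁ (s, y)) = ∫ y, f (x, y) := by
    rw [intervalIntegral.integral_of_le hx.1.le]
    have hint : Integrable (Function.uncurry fun s y => F₁ (s, y))
        (((volume : Measure ℝ).restrict (Ioc 0 x)).prod volume) := by
      have h1 : Integrable F₁ (((volume : Measure ℝ).restrict (Ioc 0 x)).prod volume) := by
        conv_lhs => skip
        rw [show ((volume : Measure ℝ).restrict (Ioc 0 x)).prod volume
            = ((volume : Measure ℝ).restrict (Ioc 0 x)).prod
              ((volume : Measure ℝ).restrict univ) by rw [Measure.restrict_univ]]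
        rw [Measure.prod_restrict, ← Measure.volume_eq_prod]
        exact intF₁.restrict
      exact h1.congr (ae_of_all _ fun q => rfl)
    rw [integral_integral_swap hint]
    have inner : ∀ y : ℝ, (∫ s in Ioc (0:ℝ) x, F₁ (s, y)) = f (x, y) := by
      intro y
      rw [← intervalIntegral.integral_of_le hx.1.le]
      have hder : ∀ t ∈ uIcc (0:ℝ) x, HasDerivAt (fun s => f (s, y)) (F₁ (t, y)) t := by
        intro t _
        have h1 : HasDerivAt (fun s : ℝ => (s, y)) ((1 : ℝ), (0 : ℝ)) t :=
          (hasDerivAt_id t).prodMk (hasDerivAt_const t y)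
        exact ((hf.1.differentiable (by simp) (t, y)).hasFDerivAt).comp_hasDerivAt t h1
      have hii : IntervalIntegrable (fun t => F₁ (t, y)) volume 0 x :=
        (contF₁.comp (continuous_id.prodMk continuous_const)).intervalIntegrable 0 x
      rw [intervalIntegral.integral_eq_sub_of_hasDerivAt hder hii]
      have h0 : f (0, y) = 0 := testFun_eq_zero hf (not_mem_domain_of_nonpos le_rfl y)
      rw [h0, sub_zero]
    simp_rw [inner]
  calc (∫ y in Ioo (-logXi r x) (logXi r x), f (x, y))
      = ∫ y, f (x, y) :=
        slice_integral_eq hx.1 hx.2.le (fun q hq => testFun_eq_zero hf hq)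
    _ = ∫ s in (0:ℝ)..x, ∫ y, F₁ (s, y) := step2.symm
    _ = ∫ s in (0:ℝ)..x, ∫ y in Ioo (-logXi r s) (logXi r s), (F₁ (s, y) + F₂ (s, y)) := by
        apply intervalIntegral.integral_congr_ae
        filter_upwards with s hs
        rw [uIoc_of_le hx.1.le] at hs
        exact (step1 s hs).symm

end Smooth

section Limits

/-- `L^p` convergence on `Ω` implies `L^1` convergence on the (finite measure) region. -/
lemma tendsto_l1_region {r p : ℝ} (hr : 0 < r) (hp1 : 1 < p) (F : ℕ → ℝ × ℝ → ℝ)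
    (hFm : ∀ n, AEStronglyMeasurable (F n) (volume.restrict (logCuspDomain r)))
    (hF : Tendsto (fun n => eLpNorm (F n) (ENNReal.ofReal p)
      (volume.restrict (logCuspDomain r))) atTop (𝓝 0)) :
    Tendsto (fun n => ∫⁻ q in cuspRegion r, (‖F n q‖₊ : ℝ≥0∞)) atTop (𝓝 0) := by
  set P := ENNReal.ofReal p with hP
  have hp0 : (0:ℝ) < p := lt_trans zero_lt_one hp1
  have hP1 : (1 : ℝ≥0∞) ≤ P := by
    rw [hP, ← ENNReal.ofReal_one]
    exact ENNReal.ofReal_le_ofReal hp1.le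
  have hPtop : P.toReal = p := ENNReal.toReal_ofReal hp0.le
  have hle : volume.restrict (cuspRegion r) ≤ volume.restrict (logCuspDomain r) :=
    Measure.restrict_mono (cuspRegion_subset r) le_rfl
  set C := (volume.restrict (cuspRegion r)) univ ^ ((1:ℝ)/(1:ℝ≥0∞).toReal - 1/P.toReal) with hC
  have hCtop : C ≠ ⊤ := by
    apply ENNReal.rpow_ne_top_of_nonneg
    · rw [ENNReal.toReal_one, hPtop]
      have : 1/p ≤ 1 := by
        rw [div_le_one hp0]; linarith
      simp only [one_div] at this ⊢
      linarith
    · rw [Measure.restrict_apply_univ]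
      exact (volume_cuspRegion_lt_top r hr).ne
  have hbound : ∀ n, (∫⁻ q in cuspRegion r, (‖F n q‖₊ : ℝ≥0∞))
      ≤ C * eLpNorm (F n) P (volume.restrict (logCuspDomain r)) := by
    intro n
    have h1 : (∫⁻ q in cuspRegion r, (‖F n q‖₊ : ℝ≥0∞))
        = eLpNorm (F n) 1 (volume.restrict (cuspRegion r)) :=
      (eLpNorm_one_eq_lintegral_enorm (f := F n)).symm
    rw [h1]
    calc eLpNorm (F n) 1 (volume.restrict (cuspRegion r))
        ≤ eLpNorm (F n) P (volume.restrict (cuspRegion r)) * C := by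
          exact eLpNorm_le_eLpNorm_mul_rpow_measure_univ hP1 ((hFm n).mono_measure hle)
      _ ≤ eLpNorm (F n) P (volume.restrict (logCuspDomain r)) * C := by
          exact mul_le_mul_left (eLpNorm_mono_measure (F n) hle) C
      _ = C * eLpNorm (F n) P (volume.restrict (logCuspDomain r)) := mul_comm _ _
  have hCmul : Tendsto (fun n => C * eLpNorm (F n) P (volume.restrict (logCuspDomain r)))
      atTop (𝓝 0) := by
    have := ENNReal.Tendsto.const_mul (a := C) (b := (0:ℝ≥0∞)) hF (Or.inr hCtop)
    simpa using this
  exact tendsto_of_tendsto_of_tendsto_of_le_of_le tendsto_const_nhds hCmul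
    (fun n => zero_le) hbound

/-- the key Tonelli estimate. -/
lemma lintegral_indicator_le {r : ℝ} (f : ℝ × ℝ → ℝ) (hf : StronglyMeasurable f) :
    (∫⁻ x in Ioo (0:ℝ) (1/2), ∫⁻ y, (‖(cuspRegion r).indicator f (x, y)‖₊ : ℝ≥0∞))
      ≤ ∫⁻ q in cuspRegion r, (‖f q‖₊ : ℝ≥0∞) := by
  have hR := measurableSet_cuspRegion r
  have hmeas : Measurable fun q : ℝ × ℝ => (‖(cuspRegion r).indicator f q‖₊ : ℝ≥0∞) :=
    (hf.measurable.indicator hR).enorm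
  calc (∫⁻ x in Ioo (0:ℝ) (1/2), ∫⁻ y, (‖(cuspRegion r).indicator f (x, y)‖₊ : ℝ≥0∞))
      ≤ ∫⁻ x, ∫⁻ y, (‖(cuspRegion r).indicator f (x, y)‖₊ : ℝ≥0∞) :=
        lintegral_mono' Measure.restrict_le_self le_rfl
    _ = ∫⁻ q, (‖(cuspRegion r).indicator f q‖₊ : ℝ≥0∞) := by
        rw [Measure.volume_eq_prod, lintegral_prod _ hmeas.aemeasurable]
    _ = ∫⁻ q, (cuspRegion r).indicator (fun q => (‖f q‖₊ : ℝ≥0∞)) q := by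
        apply lintegral_congr
        intro q
        by_cases hq : q ∈ cuspRegion r <;> simp [Set.indicator_apply, hq]
    _ = ∫⁻ q in cuspRegion r, (‖f q‖₊ : ℝ≥0∞) := lintegral_indicator hR _

/-- rewriting a slice integral as a full-line integral of the indicator. -/
lemma slice_eq_indicator_integral {r x : ℝ} (hx : x ∈ Ioo (0:ℝ) (1/2)) (f : ℝ × ℝ → ℝ) :
    (∫ y in Ioo (-logXi r x) (logXi r x), f (x, y))
      = ∫ y, (cuspRegion r).indicator f (x, y) := by
  have heq : (fun y => (cuspRegion r).indicator f (x, y))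
      = (Ioo (-logXi r x) (logXi r x)).indicator (fun y => f (x, y)) := by
    funext y
    by_cases hy : y ∈ Ioo (-logXi r x) (logXi r x)
    · rw [Set.indicator_of_mem hy, Set.indicator_of_mem ((mem_cuspRegion_iff hx y).2 hy)]
    · rw [Set.indicator_of_notMem hy,
        Set.indicator_of_notMem (fun hm => hy ((mem_cuspRegion_iff hx y).1 hm))]
  rw [heq, integral_indicator measurableSet_Ioo]

end Limits

set_option maxHeartbeats 2000000

/-- For `u = (u₁,u₂) ∈ (W^{1,p}_0(Ω_r))²`, with
`g(x) = ∫_{-ξ(x)}^{ξ(x)} div u(x,y) dy` and `A(x) = ∫_{-ξ(x)}^{ξ(x)} u₁(x,y) dy`, one has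
`A(x) = ∫_0^x g(s) ds` for a.e. `x ∈ (0,1/2)`. -/
theorem statement10 (p r : ℝ) (hp1 : 1 < p) (hr : 0 < r)
    (u₁ u₂ : ℝ × ℝ → ℝ) (du₁ du₂ : ℝ × ℝ → (ℝ × ℝ) →L[ℝ] ℝ)
    (hu₁ : MemW1p0 p (logCuspDomain r) u₁ du₁) (hu₂ : MemW1p0 p (logCuspDomain r) u₂ du₂) :
    ∀ᵐ x ∂(volume.restrict (Ioo (0 : ℝ) (1 / 2))),
      (∫ y in Ioo (-logXi r x) (logXi r x), u₁ (x, y))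
        = ∫ s in (0 : ℝ)..x,
            (∫ y in Ioo (-logXi r s) (logXi r s),
              (du₁ (s, y) (1, 0) + du₂ (s, y) (0, 1))) := by
  classical
  have hRmeas := measurableSet_cuspRegion r
  have hRsub := cuspRegion_subset r
  have hRvol := volume_cuspRegion_lt_top r hr
  set R := cuspRegion r
  have hp0 : (0:ℝ) < p := lt_trans zero_lt_one hp1
  have hP1 : (1 : ℝ≥0∞) ≤ ENNReal.ofReal p := by
    rw [← ENNReal.ofReal_one]; exact ENNReal.ofReal_le_ofReal hp1.le
  -- approximating sequences
  obtain ⟨ψ, hψtest, hψ0, hψ1⟩ := hu₁.2.2.2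
  obtain ⟨φ, hφtest, hφ0, hφ1⟩ := hu₂.2.2.2
  -- measurable representatives
  obtain ⟨v₁, hv₁sm, hv₁eq⟩ := hu₁.1.1
  set D : ℝ × ℝ → ℝ := fun q => du₁ q (1, 0) + du₂ q (0, 1) with hD
  have hDmem : MemLp D (ENNReal.ofReal p) (volume.restrict (logCuspDomain r)) :=
    (hu₁.2.1 (1, 0)).add (hu₂.2.1 (0, 1))
  obtain ⟨w, hwsm, hweq⟩ := hDmem.1
  set Fn : ℕ → ℝ × ℝ → ℝ :=
    fun n q => fderiv ℝ (ψ n) q (1, 0) + fderiv ℝ (φ n) q (0, 1) with hFn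
  have contψ : ∀ n, Continuous (ψ n) := fun n => (hψtest n).1.continuous
  have contFn : ∀ n, Continuous (Fn n) := fun n =>
    (((hψtest n).1.continuous_fderiv (by simp)).clm_apply continuous_const).add
      (((hφtest n).1.continuous_fderiv (by simp)).clm_apply continuous_const)
  have hcsFn : ∀ n, HasCompactSupport (Fn n) := fun n =>
    (((hψtest n).2.1.fderiv_apply ℝ (1, 0)).add ((hφtest n).2.1.fderiv_apply ℝ (0, 1)))
  have hle : volume.restrict R ≤ volume.restrict (logCuspDomain r) :=
    Measure.restrict_mono hRsub le_rfl
  have hv₁R : u₁ =ᵐ[volume.restrict R] v₁ := hv₁eq.filter_mono (ae_mono hle)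
  have hwR : D =ᵐ[volume.restrict R] w := hweq.filter_mono (ae_mono hle)
  -- a.e. slice equality
  have hv₁ae : ∀ᵐ x : ℝ ∂volume, ∀ᵐ y : ℝ ∂volume, ((x, y) ∈ R → u₁ (x, y) = v₁ (x, y)) := by
    have h := (ae_restrict_iff' hRmeas).1 hv₁R
    rw [Measure.volume_eq_prod] at h
    exact Measure.ae_ae_of_ae_prod h
  have hwae : ∀ᵐ s : ℝ ∂volume, ∀ᵐ y : ℝ ∂volume, ((s, y) ∈ R → D (s, y) = w (s, y)) := by
    have h := (ae_restrict_iff' hRmeas).1 hwR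
    rw [Measure.volume_eq_prod] at h
    exact Measure.ae_ae_of_ae_prod h
  haveI : IsFiniteMeasure (volume.restrict R) :=
    ⟨by rwa [Measure.restrict_apply_univ]⟩
  -- integrability of indicators
  have hIv : Integrable (R.indicator v₁) volume := by
    have hmem : MemLp v₁ (ENNReal.ofReal p) (volume.restrict R) :=
      MemLp.ae_eq hv₁R (hu₁.1.mono_measure hle)
    have h1 : MemLp v₁ 1 (volume.restrict R) := hmem.mono_exponent hP1
    exact (integrable_indicator_iff hRmeas).2 (memLp_one_iff_integrable.1 h1)
  have hIw : Integrable (R.indicator w) volume := by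
    have hmem : MemLp w (ENNReal.ofReal p) (volume.restrict R) :=
      MemLp.ae_eq hwR (hDmem.mono_measure hle)
    have h1 : MemLp w 1 (volume.restrict R) := hmem.mono_exponent hP1
    exact (integrable_indicator_iff hRmeas).2 (memLp_one_iff_integrable.1 h1)
  have hIψ : ∀ n, Integrable (R.indicator (ψ n)) volume := fun n =>
    ((contψ n).integrable_of_hasCompactSupport (hψtest n).2.1).indicator hRmeas
  have hIFn : ∀ n, Integrable (R.indicator (Fn n)) volume := fun n =>
    ((contFn n).integrable_of_hasCompactSupport (hcsFn n)).indicator hRmeas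
  -- a.e. slice integrability
  have hslice : ∀ f : ℝ × ℝ → ℝ, Integrable (R.indicator f) volume →
      ∀ᵐ x : ℝ ∂volume, Integrable (fun y => R.indicator f (x, y)) volume := by
    intro f hf
    rw [Measure.volume_eq_prod] at hf
    exact hf.prod_right_ae
  have hIv_slice := hslice v₁ hIv
  have hIw_slice := hslice w hIw
  have hIψ_slice : ∀ n, ∀ᵐ x : ℝ ∂volume, Integrable (fun y => R.indicator (ψ n) (x, y)) volume :=
    fun n => hslice (ψ n) (hIψ n)
  have hIFn_slice : ∀ n, ∀ᵐ s : ℝ ∂volume,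
      Integrable (fun y => R.indicator (Fn n) (s, y)) volume := fun n => hslice (Fn n) (hIFn n)
  -- the integrated slice functions
  set gt : ℝ → ℝ := fun s => ∫ y, R.indicator w (s, y) with hgt
  set gψ : ℕ → ℝ → ℝ := fun n s => ∫ y, R.indicator (Fn n) (s, y) with hgψ
  have hgtint : Integrable gt volume := by
    have := hIw; rw [Measure.volume_eq_prod] at this
    exact this.integral_prod_left
  have hgψint : ∀ n, Integrable (gψ n) volume := by
    intro n
    have := hIFn n; rw [Measure.volume_eq_prod] at this
    exact this.integral_prod_left
  -- a.e. representation of the `A` side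
  have hA : ∀ᵐ x : ℝ ∂volume, x ∈ Ioo (0:ℝ) (1/2) →
      (∫ y in Ioo (-logXi r x) (logXi r x), u₁ (x, y)) = ∫ y, R.indicator v₁ (x, y) := by
    filter_upwards [hv₁ae] with x h1 hx
    have step : (∫ y in Ioo (-logXi r x) (logXi r x), u₁ (x, y))
        = ∫ y in Ioo (-logXi r x) (logXi r x), v₁ (x, y) := by
      apply setIntegral_congr_ae measurableSet_Ioo
      filter_upwards [h1] with y hy hymem
      exact hy ((mem_cuspRegion_iff hx y).2 hymem)
    rw [step, slice_eq_indicator_integral hx v₁]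
  -- a.e. representation of the `g` side
  have hg : ∀ᵐ s : ℝ ∂volume, s ∈ Ioo (0:ℝ) (1/2) →
      (∫ y in Ioo (-logXi r s) (logXi r s), (du₁ (s, y) (1, 0) + du₂ (s, y) (0, 1))) = gt s := by
    filter_upwards [hwae] with s h1 hs
    have step : (∫ y in Ioo (-logXi r s) (logXi r s), (du₁ (s, y) (1, 0) + du₂ (s, y) (0, 1)))
        = ∫ y in Ioo (-logXi r s) (logXi r s), w (s, y) := by
      apply setIntegral_congr_ae measurableSet_Ioo
      filter_upwards [h1] with y hy hymem
      exact hy ((mem_cuspRegion_iff hs y).2 hymem)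
    rw [step, slice_eq_indicator_integral hs w]
  -- representation of `G`
  have hGrep : ∀ x ∈ Ioo (0:ℝ) (1/2),
      (∫ s in (0:ℝ)..x, ∫ y in Ioo (-logXi r s) (logXi r s),
        (du₁ (s, y) (1, 0) + du₂ (s, y) (0, 1))) = ∫ s in (0:ℝ)..x, gt s := by
    intro x hx
    apply intervalIntegral.integral_congr_ae
    filter_upwards [hg] with s hs hmem
    rw [uIoc_of_le hx.1.le] at hmem
    exact hs ⟨hmem.1, lt_of_le_of_lt hmem.2 hx.2⟩
  have hGnrep : ∀ n, ∀ x ∈ Ioo (0:ℝ) (1/2),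
      (∫ s in (0:ℝ)..x, ∫ y in Ioo (-logXi r s) (logXi r s),
        (fderiv ℝ (ψ n) (s, y) (1, 0) + fderiv ℝ (φ n) (s, y) (0, 1)))
        = ∫ s in (0:ℝ)..x, gψ n s := by
    intro n x hx
    apply intervalIntegral.integral_congr_ae
    filter_upwards with s hmem
    rw [uIoc_of_le hx.1.le] at hmem
    have hs : s ∈ Ioo (0:ℝ) (1/2) := ⟨hmem.1, lt_of_le_of_lt hmem.2 hx.2⟩
    exact slice_eq_indicator_integral hs (Fn n)
  -- the L¹ quantities
  set aN : ℕ → ℝ≥0∞ := fun n => ∫⁻ q in R, (‖v₁ q - ψ n q‖₊ : ℝ≥0∞) with haN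
  set bN : ℕ → ℝ≥0∞ := fun n => ∫⁻ q in R, (‖Fn n q - w q‖₊ : ℝ≥0∞) with hbN
  have htendA : Tendsto aN atTop (𝓝 0) := by
    have h := tendsto_l1_region hr hp1 (fun n q => u₁ q - ψ n q)
      (fun n => hu₁.1.1.sub (contψ n).aestronglyMeasurable) hψ0
    have heq : ∀ n, (∫⁻ q in R, (‖u₁ q - ψ n q‖₊ : ℝ≥0∞)) = aN n := by
      intro n
      apply lintegral_congr_ae
      filter_upwards [hv₁R] with q hq
      rw [hq]
    exact h.congr heq
  have htendB : Tendsto bN atTop (𝓝 0) := by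
    have hD0 : Tendsto (fun n => eLpNorm (fun q => D q - Fn n q) (ENNReal.ofReal p)
        (volume.restrict (logCuspDomain r))) atTop (𝓝 0) := by
      have hb : ∀ n, eLpNorm (fun q => D q - Fn n q) (ENNReal.ofReal p)
          (volume.restrict (logCuspDomain r))
          ≤ eLpNorm (fun q => du₁ q (1, 0) - fderiv ℝ (ψ n) q (1, 0)) (ENNReal.ofReal p)
              (volume.restrict (logCuspDomain r))
            + eLpNorm (fun q => du₂ q (0, 1) - fderiv ℝ (φ n) q (0, 1)) (ENNReal.ofReal p)
              (volume.restrict (logCuspDomain r)) := by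
        intro n
        have heq : (fun q => D q - Fn n q)
            = fun q => (du₁ q (1, 0) - fderiv ℝ (ψ n) q (1, 0))
              + (du₂ q (0, 1) - fderiv ℝ (φ n) q (0, 1)) := by
          funext q; simp only [hD, hFn]; ring
        rw [heq]
        apply eLpNorm_add_le
        · exact (hu₁.2.1 (1, 0)).1.sub
            (((hψtest n).1.continuous_fderiv (by simp)).clm_apply
              continuous_const).aestronglyMeasurable
        · exact (hu₂.2.1 (0, 1)).1.sub
            (((hφtest n).1.continuous_fderiv (by simp)).clm_apply
              continuous_const).aestronglyMeasurable
        · exact hP1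
      have hsum := Tendsto.add (hψ1 (1, 0)) (hφ1 (0, 1))
      rw [add_zero] at hsum
      exact tendsto_of_tendsto_of_tendsto_of_le_of_le tendsto_const_nhds hsum
        (fun n => zero_le) hb
    have h := tendsto_l1_region hr hp1 (fun n q => D q - Fn n q)
      (fun n => hDmem.1.sub (contFn n).aestronglyMeasurable) hD0
    have heq : ∀ n, (∫⁻ q in R, (‖D q - Fn n q‖₊ : ℝ≥0∞)) = bN n := by
      intro n
      apply lintegral_congr_ae
      filter_upwards [hwR] with q hq
      rw [hq, show w q - Fn n q = -(Fn n q - w q) from by ring, nnnorm_neg]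
    exact h.congr heq
  -- the T2 bound, independent of `x`
  have hT2 : ∀ n, (∫⁻ s in Ioo (0:ℝ) (1/2), (‖gψ n s - gt s‖₊ : ℝ≥0∞)) ≤ bN n := by
    intro n
    have hpt : ∀ᵐ s : ℝ ∂(volume.restrict (Ioo (0:ℝ) (1/2))),
        (‖gψ n s - gt s‖₊ : ℝ≥0∞)
          ≤ ∫⁻ y, (‖R.indicator (fun q => Fn n q - w q) (s, y)‖₊ : ℝ≥0∞) := by
      filter_upwards [ae_restrict_of_ae (hIFn_slice n), ae_restrict_of_ae hIw_slice]
        with s h1 h2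
      have heq : gψ n s - gt s = ∫ y, R.indicator (fun q => Fn n q - w q) (s, y) := by
        rw [hgψ, hgt]
        rw [← integral_sub h1 h2]
        apply integral_congr_ae
        filter_upwards with y
        by_cases hy : (s, y) ∈ R <;> simp [Set.indicator_apply, hy]
      rw [heq]
      exact enorm_integral_le_lintegral_enorm _
    calc (∫⁻ s in Ioo (0:ℝ) (1/2), (‖gψ n s - gt s‖₊ : ℝ≥0∞))
        ≤ ∫⁻ s in Ioo (0:ℝ) (1/2), ∫⁻ y,
            (‖R.indicator (fun q => Fn n q - w q) (s, y)‖₊ : ℝ≥0∞) := lintegral_mono_ae hpt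
      _ ≤ ∫⁻ q in R, (‖Fn n q - w q‖₊ : ℝ≥0∞) :=
          lintegral_indicator_le (r := r) (fun q => Fn n q - w q)
            ((contFn n).stronglyMeasurable.sub hwsm)
  -- the master estimate
  set A : ℝ → ℝ := fun x => ∫ y in Ioo (-logXi r x) (logXi r x), u₁ (x, y) with hAdef
  set G : ℝ → ℝ := fun x => ∫ s in (0:ℝ)..x, ∫ y in Ioo (-logXi r s) (logXi r s),
    (du₁ (s, y) (1, 0) + du₂ (s, y) (0, 1)) with hGdef
  set E : ℝ≥0∞ := ∫⁻ x in Ioo (0:ℝ) (1/2), (‖A x - G x‖₊ : ℝ≥0∞) with hE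
  have hEbound : ∀ n, E ≤ aN n + bN n := by
    intro n
    have hpt : ∀ᵐ x : ℝ ∂(volume.restrict (Ioo (0:ℝ) (1/2))),
        (‖A x - G x‖₊ : ℝ≥0∞)
          ≤ (∫⁻ y, (‖R.indicator (fun q => v₁ q - ψ n q) (x, y)‖₊ : ℝ≥0∞)) + bN n := by
      filter_upwards [ae_restrict_of_ae hA, ae_restrict_of_ae hIv_slice,
        ae_restrict_of_ae (hIψ_slice n), self_mem_ae_restrict measurableSet_Ioo]
        with x hAx hIvx hIψx hx
      -- the An-part
      set An : ℝ := ∫ y in Ioo (-logXi r x) (logXi r x), ψ n (x, y) with hAn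
      have h1 : A x - An = ∫ y, R.indicator (fun q => v₁ q - ψ n q) (x, y) := by
        rw [hAdef, hAn]
        simp only []
        rw [hAx hx, slice_eq_indicator_integral hx (ψ n), ← integral_sub hIvx hIψx]
        apply integral_congr_ae
        filter_upwards with y
        by_cases hy : (x, y) ∈ R <;> simp [Set.indicator_apply, hy]
      have h2 : (‖A x - An‖₊ : ℝ≥0∞)
          ≤ ∫⁻ y, (‖R.indicator (fun q => v₁ q - ψ n q) (x, y)‖₊ : ℝ≥0∞) := by
        rw [h1]
        exact enorm_integral_le_lintegral_enorm _
      -- the Gn-part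
      set Gn : ℝ := ∫ s in (0:ℝ)..x, ∫ y in Ioo (-logXi r s) (logXi r s),
        (fderiv ℝ (ψ n) (s, y) (1, 0) + fderiv ℝ (φ n) (s, y) (0, 1)) with hGn
      have h3 : (‖Gn - G x‖₊ : ℝ≥0∞) ≤ bN n := by
        have hGx : G x = ∫ s in (0:ℝ)..x, gt s := hGrep x hx
        have hGnx : Gn = ∫ s in (0:ℝ)..x, gψ n s := hGnrep n x hx
        have hsub : Gn - G x = ∫ s in Ioc (0:ℝ) x, (gψ n s - gt s) := by
          rw [hGx, hGnx, ← intervalIntegral.integral_sub ((hgψint n).intervalIntegrable)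
            (hgtint.intervalIntegrable), intervalIntegral.integral_of_le hx.1.le]
        rw [hsub]
        calc (‖∫ s in Ioc (0:ℝ) x, (gψ n s - gt s)‖₊ : ℝ≥0∞)
            ≤ ∫⁻ s in Ioc (0:ℝ) x, (‖gψ n s - gt s‖₊ : ℝ≥0∞) :=
              enorm_integral_le_lintegral_enorm _
          _ ≤ ∫⁻ s in Ioo (0:ℝ) (1/2), (‖gψ n s - gt s‖₊ : ℝ≥0∞) := by
              apply lintegral_mono'
              · apply Measure.restrict_mono _ le_rfl
                intro s hs
                exact ⟨hs.1, lt_of_le_of_lt hs.2 hx.2⟩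
              · exact le_rfl
          _ ≤ bN n := hT2 n
      have hAnGn : An = Gn :=
        smooth_identity_s10 r (ψ n) (φ n) (hψtest n) (hφtest n) hx
      have hsplit : A x - G x = (A x - An) + (Gn - G x) := by
        rw [hAnGn]; ring
      calc (‖A x - G x‖₊ : ℝ≥0∞) = ‖(A x - An) + (Gn - G x)‖₊ := by rw [hsplit]
        _ ≤ (‖A x - An‖₊ : ℝ≥0∞) + ‖Gn - G x‖₊ := by exact_mod_cast nnnorm_add_le _ _
        _ ≤ (∫⁻ y, (‖R.indicator (fun q => v₁ q - ψ n q) (x, y)‖₊ : ℝ≥0∞)) + bN n :=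
            add_le_add h2 h3
    calc E ≤ ∫⁻ x in Ioo (0:ℝ) (1/2),
          ((∫⁻ y, (‖R.indicator (fun q => v₁ q - ψ n q) (x, y)‖₊ : ℝ≥0∞)) + bN n) :=
          lintegral_mono_ae hpt
      _ = (∫⁻ x in Ioo (0:ℝ) (1/2),
            ∫⁻ y, (‖R.indicator (fun q => v₁ q - ψ n q) (x, y)‖₊ : ℝ≥0∞))
          + bN n * volume (Ioo (0:ℝ) (1/2)) := by
          rw [lintegral_add_right' _ aemeasurable_const, setLIntegral_const]
      _ ≤ aN n + bN n := by
          apply add_le_add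
          · exact lintegral_indicator_le (r := r) (fun q => v₁ q - ψ n q)
              (hv₁sm.sub (contψ n).stronglyMeasurable)
          · have hvol1 : volume (Ioo (0:ℝ) (1/2)) ≤ 1 := by
              rw [Real.volume_Ioo]
              exact ENNReal.ofReal_le_one.2 (by norm_num)
            calc bN n * volume (Ioo (0:ℝ) (1/2)) ≤ bN n * 1 := mul_le_mul_right hvol1 _
              _ = bN n := mul_one _
  -- conclude `E = 0`
  have htend : Tendsto (fun n => aN n + bN n) atTop (𝓝 0) := by
    have := htendA.add htendB
    rwa [add_zero] at this
  have hE0 : E = 0 := le_antisymm (ge_of_tendsto' htend hEbound) zero_le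
  -- measurability of `A - G`
  have hAae : A =ᵐ[volume.restrict (Ioo (0:ℝ) (1/2))]
      (fun x => ∫ y, R.indicator v₁ (x, y)) := by
    filter_upwards [ae_restrict_of_ae hA, self_mem_ae_restrict measurableSet_Ioo] with x h hx
    exact h hx
  have hGae : G =ᵐ[volume.restrict (Ioo (0:ℝ) (1/2))]
      (fun x => ∫ s in (0:ℝ)..x, gt s) := by
    filter_upwards [self_mem_ae_restrict measurableSet_Ioo] with x hx
    exact hGrep x hx
  have hAsm : StronglyMeasurable (fun x : ℝ => ∫ y, R.indicator v₁ (x, y)) :=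
    (hv₁sm.indicator hRmeas).integral_prod_right'
  have hGcont : Continuous (fun x : ℝ => ∫ s in (0:ℝ)..x, gt s) :=
    intervalIntegral.continuous_primitive (fun a b => hgtint.intervalIntegrable) 0
  have hAG : AEStronglyMeasurable (fun x => A x - G x)
      (volume.restrict (Ioo (0:ℝ) (1/2))) := by
    apply AEStronglyMeasurable.sub
    · exact ⟨_, hAsm, hAae⟩
    · exact ⟨_, hGcont.stronglyMeasurable, hGae⟩
  have hfinal := (lintegral_eq_zero_iff' hAG.enorm).1 hE0
  filter_upwards [hfinal] with x hx
  have : (‖A x - G x‖₊ : ℝ≥0∞) = 0 := by simpa using hx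
  have : ‖A x - G x‖₊ = 0 := by exact_mod_cast this
  have h0 : A x - G x = 0 := by
    rwa [nnnorm_eq_zero] at this
  have : A x = G x := by linarith [h0]
  exact this
end
end
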